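/- arXiv:1209.2884 — 7 statements merged into one kernel-verified Lean document; each statement's English description precedes it below -/
import Mathlib

section
/- If μ is a probability measure on the unit circle T and (n_k) is a strictly increasing sequence of positive integers such that μ is IP-Dirichlet with respect to (n_k), then μ gives full measure to the set G_2((n_k)) = {λ ∈ T : Σ_k |λ^{n_k} - 1|² < ∞}. -/
open MeasureTheory Finset Filter
open Topology

noncomputable instance : MeasurableSpace Circle := borel Circle
instance : BorelSpace Circle := ⟨rfl⟩

/-- The `n`-th Fourier coefficient of a measure on the unit circle. -/
noncomputable def fourierCoef (μ : Measure Circle) (n : ℕ) : ℂ := ∫ z, (z : ℂ) ^ n ∂μ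

/-- `μ` is IP-Dirichlet with respect to the sequence `n`. -/
def IPDirichlet (μ : Measure Circle) (n : ℕ → ℕ) : Prop :=
  ∀ ε : ℝ, 0 < ε → ∃ k₀ : ℕ, ∀ F : Finset ℕ, F.Nonempty → (∀ k ∈ F, k₀ ≤ k) →
    ‖fourierCoef μ (∑ k ∈ F, n k) - 1‖ ≤ ε

private lemma nsq (u : ℂ) : ‖u‖ ^ 2 = u.re ^ 2 + u.im ^ 2 := by
  rw [Complex.sq_norm, Complex.normSq_apply]; ring

private lemma key_factor {w : ℂ} (hw : ‖w‖ = 1) :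
    ‖(1 + w) / 2‖ ≤ 1 - ‖w - 1‖ ^ 2 / 8 := by
  have ht0 : (0:ℝ) ≤ ‖w - 1‖ ^ 2 := sq_nonneg _
  have ht4 : ‖w - 1‖ ^ 2 ≤ 4 := by
    have h2 : ‖w - 1‖ ≤ 2 := by
      calc ‖w - 1‖ ≤ ‖w‖ + ‖(1:ℂ)‖ := norm_sub_le _ _
        _ = 2 := by rw [hw]; norm_num
    nlinarith [norm_nonneg (w - 1)]
  have h1 : w.re ^ 2 + w.im ^ 2 = 1 := by
    have := nsq w; rw [hw] at this; nlinarith [this]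
  have hsq : ‖(1 + w) / 2‖ ^ 2 = 1 - ‖w - 1‖ ^ 2 / 4 := by
    have h2 : ‖(1 + w) / 2‖ = ‖1 + w‖ / 2 := by
      rw [norm_div]; norm_num
    rw [h2, div_pow, nsq (1 + w), nsq (w - 1)]
    simp only [Complex.add_re, Complex.add_im, Complex.sub_re, Complex.sub_im,
      Complex.one_re, Complex.one_im]
    nlinarith [h1]
  have hnn : (0:ℝ) ≤ 1 - ‖w - 1‖ ^ 2 / 8 := by linarith
  have heq : ‖(1 + w) / 2‖ = Real.sqrt (1 - ‖w - 1‖ ^ 2 / 4) := by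
    rw [← hsq, Real.sqrt_sq (norm_nonneg _)]
  rw [heq]
  calc Real.sqrt (1 - ‖w - 1‖ ^ 2 / 4) ≤ Real.sqrt ((1 - ‖w - 1‖ ^ 2 / 8) ^ 2) :=
        Real.sqrt_le_sqrt (by nlinarith)
    _ = 1 - ‖w - 1‖ ^ 2 / 8 := Real.sqrt_sq hnn

private lemma claim (μ : Measure Circle) [IsProbabilityMeasure μ] (n : ℕ → ℕ)
    (h : IPDirichlet μ n) {ε : ℝ} (hε : 0 < ε) :
    ENNReal.ofReal (1 - ε) ≤ μ {z : Circle | Summable fun k => ‖(z : ℂ) ^ n k - 1‖ ^ 2} := by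
  obtain ⟨k₀, hk₀⟩ := h ε hε
  set g : ℕ → Circle → ℝ := fun k z => ‖(1 + (z:ℂ) ^ n k) / 2‖ with hg
  set hm : ℕ → Circle → ℝ := fun m z => ∏ k ∈ Ico k₀ (k₀ + m), g k z with hhm
  have hcoe : Continuous (fun z : Circle => (z:ℂ)) := continuous_subtype_val
  have hgc : ∀ k, Continuous (g k) := fun k =>
    ((continuous_const.add (hcoe.pow _)).div_const _).norm
  have hmc : ∀ m, Continuous (hm m) := fun m => continuous_finset_prod _ (fun k _ => hgc k)
  have hgnn : ∀ k z, 0 ≤ g k z := fun k z => norm_nonneg _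
  have hwnorm : ∀ (z : Circle) (k : ℕ), ‖((z:ℂ)) ^ n k‖ = 1 := by
    intro z k
    rw [norm_pow, Circle.norm_coe]
    norm_num
  have hkey : ∀ k z, g k z ≤ 1 - ‖(z:ℂ) ^ n k - 1‖ ^ 2 / 8 := fun k z => key_factor (hwnorm z k)
  have hg1 : ∀ k z, g k z ≤ 1 := fun k z =>
    le_trans (hkey k z) (by nlinarith [sq_nonneg ‖(z:ℂ) ^ n k - 1‖])
  have hm_nonneg : ∀ m z, 0 ≤ hm m z := fun m z => Finset.prod_nonneg (fun k _ => hgnn k z)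
  have hm_anti : ∀ z, Antitone (fun m => hm m z) := by
    intro z
    apply antitone_nat_of_succ_le
    intro m
    have hsplit : hm (m + 1) z = hm m z * ∏ k ∈ Ico (k₀ + m) (k₀ + (m + 1)), g k z := by
      rw [hhm]
      exact (Finset.prod_Ico_consecutive _ (by omega) (by omega)).symm
    rw [hsplit]
    exact mul_le_of_le_one_right (hm_nonneg m z)
      (Finset.prod_le_one (fun k _ => hgnn k z) (fun k _ => hg1 k z))
  -- Step 1 : integral lower bound
  have step1 : ∀ m, 1 - ε ≤ ∫ z, hm m z ∂μ := by
    intro m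
    set F := Ico k₀ (k₀ + m) with hF
    set P : Circle → ℂ := fun z => ∏ k ∈ F, (1 + (z:ℂ) ^ n k) / 2 with hP
    have hPc : Continuous P :=
      continuous_finset_prod _ (fun k _ => (continuous_const.add (hcoe.pow _)).div_const _)
    have hPint : Integrable P μ :=
      hPc.integrable_of_hasCompactSupport (HasCompactSupport.of_compactSpace _)
    have hterm : ∀ (j : ℕ), Integrable (fun z : Circle => (z:ℂ) ^ j) μ := fun j =>
      (hcoe.pow j).integrable_of_hasCompactSupport (HasCompactSupport.of_compactSpace _)
    have hexpand : ∀ z : Circle,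
        P z = (∑ S ∈ F.powerset, (z:ℂ) ^ (∑ k ∈ S, n k)) / 2 ^ F.card := by
      intro z
      calc P z = (∏ k ∈ F, ((z:ℂ) ^ n k + 1)) / 2 ^ F.card := by
            rw [hP]
            dsimp only
            rw [← Finset.prod_const ((2:ℂ)), ← Finset.prod_div_distrib]
            exact Finset.prod_congr rfl fun k _ => by rw [add_comm]
        _ = (∑ S ∈ F.powerset, (z:ℂ) ^ (∑ k ∈ S, n k)) / 2 ^ F.card := by
            rw [Finset.prod_add]
            congr 1
            refine Finset.sum_congr rfl fun S hS => ?_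
            rw [Finset.prod_const_one, mul_one, Finset.prod_pow_eq_pow_sum]
    have hPval : ∫ z, P z ∂μ
        = (∑ S ∈ F.powerset, fourierCoef μ (∑ k ∈ S, n k)) / 2 ^ F.card := by
      simp_rw [hexpand]
      rw [integral_div, integral_finset_sum _ (fun S _ => hterm _)]
      rfl
    have h2pos : (0:ℝ) < 2 ^ F.card := by positivity
    have hsub : ∫ z, P z ∂μ - 1
        = (∑ S ∈ F.powerset, (fourierCoef μ (∑ k ∈ S, n k) - 1)) / 2 ^ F.card := by
      rw [hPval, Finset.sum_sub_distrib, sub_div]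
      congr 1
      rw [Finset.sum_const, Finset.card_powerset, nsmul_eq_mul, mul_one, Nat.cast_pow,
        Nat.cast_ofNat, div_self (pow_ne_zero _ (two_ne_zero))]
    have hbound : ‖∫ z, P z ∂μ - 1‖ ≤ ε := by
      rw [hsub, norm_div]
      have h2 : ‖(2:ℂ) ^ F.card‖ = 2 ^ F.card := by
        rw [norm_pow]; norm_num
      rw [h2]
      have hnum : ‖∑ S ∈ F.powerset, (fourierCoef μ (∑ k ∈ S, n k) - 1)‖
          ≤ ∑ S ∈ F.powerset, ε := by
        refine le_trans (norm_sum_le _ _) (Finset.sum_le_sum ?_)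
        intro S hS
        rcases S.eq_empty_or_nonempty with rfl | hSne
        · have : fourierCoef μ (∑ k ∈ (∅ : Finset ℕ), n k) = 1 := by
            simp [fourierCoef]
          rw [this]
          simpa using hε.le
        · exact hk₀ S hSne (fun k hk =>
            (Finset.mem_Ico.mp (Finset.mem_powerset.mp hS hk)).1)
      calc ‖∑ S ∈ F.powerset, (fourierCoef μ (∑ k ∈ S, n k) - 1)‖ / 2 ^ F.card
          ≤ (∑ S ∈ F.powerset, ε) / 2 ^ F.card := by gcongr
        _ = ε := by
            rw [Finset.sum_const, Finset.card_powerset, nsmul_eq_mul, Nat.cast_pow,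
              Nat.cast_ofNat]
            field_simp
    have hre : 1 - ε ≤ (∫ z, P z ∂μ).re := by
      have h1 : |(∫ z, P z ∂μ - 1).re| ≤ ε := by
        refine le_trans ?_ hbound
        exact Complex.abs_re_le_norm _
      have h2 : (∫ z, P z ∂μ - 1).re = (∫ z, P z ∂μ).re - 1 := by simp
      rw [h2] at h1
      have := (abs_le.mp h1).1
      linarith
    have hre2 : (∫ z, P z ∂μ).re = ∫ z, (P z).re ∂μ := (integral_re hPint).symm
    have hrec : Continuous fun z => (P z).re := Complex.continuous_re.comp hPc
    have hfin : ∫ z, (P z).re ∂μ ≤ ∫ z, hm m z ∂μ := by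
      refine integral_mono
        (hrec.integrable_of_hasCompactSupport (HasCompactSupport.of_compactSpace _))
        ((hmc m).integrable_of_hasCompactSupport (HasCompactSupport.of_compactSpace _)) ?_
      intro z
      calc (P z).re ≤ |(P z).re| := le_abs_self _
        _ ≤ ‖P z‖ := by exact Complex.abs_re_le_norm _
        _ = hm m z := by rw [hP, hhm]; exact norm_prod _ _
    rw [hre2] at hre
    linarith
  -- Step 2-3 : lintegral and its infimum
  set H : ℕ → Circle → ENNReal := fun m z => ENNReal.ofReal (hm m z) with hH
  have hHmeas : ∀ m, Measurable (H m) := fun m => ((hmc m).measurable).ennreal_ofReal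
  have hHanti : Antitone H := fun m m' hmm' z => ENNReal.ofReal_le_ofReal (hm_anti z hmm')
  have hH0one : ∀ z, H 0 z = 1 := by
    intro z
    rw [hH, hhm]
    simp
  have hH0 : ∫⁻ z, H 0 z ∂μ ≠ ⊤ := by
    simp_rw [hH0one]
    simp [measure_univ]
  have hlint : ∀ m, ENNReal.ofReal (1 - ε) ≤ ∫⁻ z, H m z ∂μ := by
    intro m
    have hint : Integrable (hm m) μ :=
      (hmc m).integrable_of_hasCompactSupport (HasCompactSupport.of_compactSpace _)
    rw [hH]
    dsimp only
    rw [← ofReal_integral_eq_lintegral_ofReal hint (ae_of_all _ fun z => hm_nonneg m z)]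
    exact ENNReal.ofReal_le_ofReal (step1 m)
  have hiInf : ENNReal.ofReal (1 - ε) ≤ ∫⁻ z, ⨅ m, H m z ∂μ := by
    rw [lintegral_iInf hHmeas hHanti hH0]
    exact le_iInf hlint
  -- Step 4 : bound lintegral by measure of the summability set
  refine le_trans hiInf (lintegral_le_meas ?_ ?_)
  · intro z
    refine le_trans (iInf_le _ 0) ?_
    rw [hH0one]
  · intro z hz
    simp only [Set.mem_compl_iff, Set.mem_setOf_eq] at hz
    set t : ℕ → ℝ := fun k => ‖(z:ℂ) ^ n k - 1‖ ^ 2 with ht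
    have htnn : ∀ k, 0 ≤ t k := fun k => sq_nonneg _
    have htail : ¬ Summable (fun i => t (i + k₀)) := fun hs =>
      hz ((summable_nat_add_iff k₀).mp hs)
    have hdiv : Tendsto (fun m => ∑ i ∈ range m, t (i + k₀)) atTop atTop :=
      (not_summable_iff_tendsto_nat_atTop_of_nonneg (fun i => htnn _)).mp htail
    have hub : ∀ m, hm m z ≤ Real.exp (-(∑ i ∈ range m, t (i + k₀)) / 8) := by
      intro m
      have e1 : ∑ i ∈ range m, t (i + k₀) = ∑ k ∈ Ico k₀ (k₀ + m), t k := by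
        rw [Finset.sum_Ico_eq_sum_range]
        simp [add_comm]
      rw [e1]
      have e2 : Real.exp (-(∑ k ∈ Ico k₀ (k₀ + m), t k) / 8)
          = ∏ k ∈ Ico k₀ (k₀ + m), Real.exp (-(t k) / 8) := by
        rw [← Real.exp_sum]
        congr 1
        rw [← Finset.sum_div, ← Finset.sum_neg_distrib]
      rw [e2]
      refine Finset.prod_le_prod (fun k _ => hgnn k z) (fun k _ => ?_)
      calc g k z ≤ 1 - t k / 8 := hkey k z
        _ ≤ Real.exp (-(t k) / 8) := by
            have := Real.add_one_le_exp (-(t k) / 8)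
            linarith
    have hzero : Tendsto (fun m => hm m z) atTop (𝓝 0) := by
      refine squeeze_zero (fun m => hm_nonneg m z) hub ?_
      have h1 : Tendsto (fun m => -(∑ i ∈ range m, t (i + k₀)) / 8) atTop atBot := by
        simp_rw [neg_div]
        exact tendsto_neg_atTop_atBot.comp (hdiv.atTop_div_const (by norm_num))
      exact Real.tendsto_exp_atBot.comp h1
    have hHz : Tendsto (fun m => H m z) atTop (𝓝 0) := by
      have := ENNReal.tendsto_ofReal hzero
      simpa using this
    have hA : Antitone fun m => H m z := fun a b hab => hHanti hab z
    exact tendsto_nhds_unique (tendsto_atTop_iInf hA) hHz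

theorem stmt0 (μ : Measure Circle) [IsProbabilityMeasure μ] (n : ℕ → ℕ)
    (hmono : StrictMono n) (hpos : ∀ k, 1 ≤ n k) (h : IPDirichlet μ n) :
    μ {z : Circle | Summable fun k => ‖(z : ℂ) ^ n k - 1‖ ^ 2} = 1 := by
  refine le_antisymm prob_le_one ?_
  refine ENNReal.le_of_forall_pos_le_add fun δ hδ _ => ?_
  have hδ' : (0:ℝ) < (δ:ℝ) := hδ
  have hclaim := claim μ n h hδ'
  calc (1:ENNReal) = ENNReal.ofReal ((1 - (δ:ℝ)) + (δ:ℝ)) := by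
        rw [sub_add_cancel]; simp
    _ ≤ ENNReal.ofReal (1 - (δ:ℝ)) + ENNReal.ofReal (δ:ℝ) := ENNReal.ofReal_add_le
    _ ≤ μ {z : Circle | Summable fun k => ‖(z : ℂ) ^ n k - 1‖ ^ 2} + (δ:ENNReal) := by
        exact add_le_add hclaim (le_of_eq ENNReal.ofReal_coe_nnreal)
end

section
/- For integers m ≥ 1 and 1 ≤ p ≤ m, the Fourier coefficient P̂(p) of P(e^{2πit}) = (2/(m+2))|Σ_{j=1}^{m+1} sin(jπ/(m+2)) e^{2πijt}|² equals (1/(m+2)) [ (m+2−p) cos(pπ/(m+2)) + sin(pπ/(m+2)) · cos(π/(m+2))/sin(π/(m+2)) ]. -/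
noncomputable def P (m : ℕ) (t : ℝ) : ℝ :=
  (2 / ((m : ℝ) + 2)) * ‖∑ j ∈ Finset.Icc 1 (m + 1),
    (Real.sin (j * Real.pi / (m + 2)) : ℂ) * Complex.exp (2 * Real.pi * Complex.I * j * t)‖ ^ 2

noncomputable def Pcoef (m : ℕ) (p : ℤ) : ℂ :=
  ∫ t in (0:ℝ)..1, (P m t : ℂ) * Complex.exp (-(2 * Real.pi * Complex.I * p * t))

lemma int_exp (n : ℤ) :
    (∫ t in (0:ℝ)..1, Complex.exp (2 * (Real.pi:ℂ) * Complex.I * (n:ℂ) * (t:ℂ))) =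
      if n = 0 then 1 else 0 := by
  rcases eq_or_ne n 0 with h | h
  · simp [h]
  · rw [if_neg h]
    have hc : (2 * (Real.pi:ℂ) * Complex.I * (n:ℂ)) ≠ 0 := by
      have hπ : (Real.pi:ℂ) ≠ 0 := Complex.ofReal_ne_zero.2 Real.pi_ne_zero
      have hn : ((n:ℂ)) ≠ 0 := Int.cast_ne_zero.2 h
      simp [hπ, Complex.I_ne_zero, hn]
    rw [integral_exp_mul_complex hc]
    have h1 : Complex.exp (2 * (Real.pi:ℂ) * Complex.I * (n:ℂ) * ((1:ℝ):ℂ)) = 1 := by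
      rw [show (2 * (Real.pi:ℂ) * Complex.I * (n:ℂ) * ((1:ℝ):ℂ)) = (n:ℂ) * (2 * Real.pi * Complex.I) by push_cast; ring]
      exact Complex.exp_int_mul_two_pi_mul_I n
    rw [h1]
    simp

lemma sum_sin_sin (θ : ℝ) (p : ℕ) : ∀ N : ℕ,
    4 * Real.sin θ * ∑ j ∈ Finset.range N,
      Real.sin (((j:ℝ) + 1 + p) * θ) * Real.sin (((j:ℝ) + 1) * θ)
    = 2 * Real.sin θ * ((N:ℝ) * Real.cos (p * θ))
      - Real.sin ((2 * (N:ℝ) + p + 1) * θ) + Real.sin (((p:ℝ) + 1) * θ)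
  | 0 => by simp
  | (N+1) => by
      rw [Finset.sum_range_succ, mul_add, sum_sin_sin θ p N]
      have h1 : Real.sin ((2 * ((N:ℝ)+1) + p + 1) * θ) - Real.sin ((2 * (N:ℝ) + p + 1) * θ)
          = 2 * Real.sin θ * Real.cos ((2 * (N:ℝ) + p + 2) * θ) := by
        rw [Real.sin_sub_sin]
        rw [show ((2 * ((N:ℝ)+1) + p + 1) * θ - (2 * (N:ℝ) + p + 1) * θ) / 2 = θ by ring,
            show ((2 * ((N:ℝ)+1) + p + 1) * θ + (2 * (N:ℝ) + p + 1) * θ) / 2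
              = (2 * (N:ℝ) + p + 2) * θ by ring]
      have h2 : Real.cos ((p:ℝ) * θ) - Real.cos ((2 * (N:ℝ) + p + 2) * θ)
          = 2 * Real.sin (((N:ℝ) + 1 + p) * θ) * Real.sin (((N:ℝ) + 1) * θ) := by
        rw [Real.cos_sub_cos]
        rw [show (((p:ℝ)) * θ + (2 * (N:ℝ) + p + 2) * θ) / 2 = ((N:ℝ) + 1 + p) * θ by ring,
            show (((p:ℝ)) * θ - (2 * (N:ℝ) + p + 2) * θ) / 2 = -(((N:ℝ) + 1) * θ) by ring,
            Real.sin_neg]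
        ring
      push_cast
      linear_combination h1 - 2 * Real.sin θ * h2

lemma key_expand (m p : ℕ) (t : ℝ) :
    (P m t : ℂ) * Complex.exp (-(2 * Real.pi * Complex.I * p * t)) =
    ∑ j ∈ Finset.Icc 1 (m+1), ∑ k ∈ Finset.Icc 1 (m+1),
      ((2 / ((m:ℝ)+2) * (Real.sin (j * Real.pi / (m+2)) * Real.sin (k * Real.pi / (m+2))) : ℝ) : ℂ)
        * Complex.exp (2 * (Real.pi:ℂ) * Complex.I * ((((j:ℤ) - k - p : ℤ)):ℂ) * (t:ℂ)) := by
  unfold P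
  set S : ℂ := ∑ j ∈ Finset.Icc 1 (m + 1),
    (Real.sin (j * Real.pi / (m + 2)) : ℂ) * Complex.exp (2 * Real.pi * Complex.I * j * t) with hSdef
  have hnorm : ((‖S‖ ^ 2 : ℝ) : ℂ) = S * (starRingEnd ℂ) S := by
    rw [Complex.sq_norm]
    exact (Complex.mul_conj S).symm
  have hconj : (starRingEnd ℂ) S = ∑ k ∈ Finset.Icc 1 (m + 1),
      (Real.sin (k * Real.pi / (m + 2)) : ℂ) * Complex.exp (-(2 * Real.pi * Complex.I * k * t)) := by
    rw [hSdef, map_sum]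
    refine Finset.sum_congr rfl fun k _ => ?_
    rw [map_mul, Complex.conj_ofReal, ← Complex.exp_conj]
    congr 1
    simp [map_mul, map_ofNat, Complex.conj_ofReal, Complex.conj_I]
  simp only [Complex.ofReal_mul, Complex.ofReal_div, Complex.ofReal_ofNat,
    Complex.ofReal_add, Complex.ofReal_natCast]
  rw [hnorm, hconj, hSdef, Finset.sum_mul_sum]
  rw [Finset.mul_sum, Finset.sum_mul]
  refine Finset.sum_congr rfl fun j _ => ?_
  rw [Finset.mul_sum, Finset.sum_mul]
  refine Finset.sum_congr rfl fun k _ => ?_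
  have hexp : Complex.exp (2 * Real.pi * Complex.I * j * t) *
      Complex.exp (-(2 * Real.pi * Complex.I * k * t)) *
      Complex.exp (-(2 * Real.pi * Complex.I * p * t)) =
      Complex.exp (2 * (Real.pi:ℂ) * Complex.I * ((((j:ℤ) - k - p : ℤ)):ℂ) * (t:ℂ)) := by
    rw [← Complex.exp_add, ← Complex.exp_add]
    congr 1
    push_cast
    ring
  rw [← hexp]
  push_cast
  ring

theorem stmt5 (m p : ℕ) (hm : 1 ≤ m) (hp1 : 1 ≤ p) (hpm : p ≤ m) :
    Pcoef m p = ((1 / ((m : ℝ) + 2)) * (((m : ℝ) + 2 - p) * Real.cos (p * Real.pi / (m + 2)) +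
      Real.sin (p * Real.pi / (m + 2)) * Real.cos (Real.pi / (m + 2)) /
        Real.sin (Real.pi / (m + 2))) : ℝ) := by
  have step2 : Pcoef m p = ∑ j ∈ Finset.Icc 1 (m+1), ∑ k ∈ Finset.Icc 1 (m+1),
      ((2 / ((m:ℝ)+2) * (Real.sin (j * Real.pi / (m+2)) * Real.sin (k * Real.pi / (m+2))) : ℝ) : ℂ)
        * (if ((j:ℤ) - k - p) = 0 then 1 else 0) := by
    unfold Pcoef
    simp only [Int.cast_natCast]
    simp only [key_expand]
    rw [intervalIntegral.integral_finset_sum]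
    · refine Finset.sum_congr rfl fun j _ => ?_
      rw [intervalIntegral.integral_finset_sum]
      · refine Finset.sum_congr rfl fun k _ => ?_
        rw [intervalIntegral.integral_const_mul, int_exp]
      · intro k _
        apply Continuous.intervalIntegrable
        fun_prop
    · intro j _
      apply Continuous.intervalIntegrable
      fun_prop
  rw [step2]
  have hiff : ∀ j k : ℕ, ((j:ℤ) - k - p = 0) = (j = k + p) := by
    intro j k; apply propext; omega
  simp only [hiff, mul_ite, mul_one, mul_zero]
  rw [Finset.sum_comm]
  simp only [Finset.sum_ite_eq' (Finset.Icc 1 (m+1))]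
  rw [← Finset.sum_filter]
  have hfil : (Finset.Icc 1 (m+1)).filter (fun k => k + p ∈ Finset.Icc 1 (m+1))
      = Finset.Icc 1 (m+1-p) := by
    ext x
    simp only [Finset.mem_filter, Finset.mem_Icc]
    omega
  rw [hfil]
  norm_cast
  push_cast [Int.subNatNat_eq_coe]
  simp only [show ∀ x:ℝ, x * Real.pi / ((m:ℝ)+2) = x * (Real.pi/((m:ℝ)+2)) from fun x => by ring]
  set θ : ℝ := Real.pi / ((m:ℝ)+2) with hθ
  have hm2 : ((m:ℝ)+2) ≠ 0 := by positivity
  have hθpos : 0 < θ := by rw [hθ]; positivity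
  have hθlt : θ < Real.pi := by
    rw [hθ, div_lt_iff₀ (by positivity)]
    nlinarith [Real.pi_pos]
  have hsθ : Real.sin θ ≠ 0 := ne_of_gt (Real.sin_pos_of_pos_of_lt_pi hθpos hθlt)
  have hN : ((m+1-p : ℕ):ℝ) = (m:ℝ) + 1 - p := by
    rw [Nat.cast_sub (by omega)]; push_cast; ring
  have hL : ∑ x ∈ Finset.Icc 1 (m+1-p),
        2/((m:ℝ)+2) * (Real.sin (((x:ℝ)+(p:ℝ)) * θ) * Real.sin ((x:ℝ) * θ))
      = 2/((m:ℝ)+2) * ∑ j ∈ Finset.range (m+1-p),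
        Real.sin (((j:ℝ)+1+p)*θ) * Real.sin (((j:ℝ)+1)*θ) := by
    rw [Finset.mul_sum, ← Finset.Ico_add_one_right_eq_Icc, Finset.sum_Ico_eq_sum_range]
    refine Finset.sum_congr (by congr 1) fun j _ => ?_
    push_cast
    ring_nf
  have hsum := sum_sin_sin θ p (m+1-p)
  have hsin2 : Real.sin ((2*((m+1-p:ℕ):ℝ)+p+1)*θ) = -Real.sin (((p:ℝ)+1)*θ) := by
    have harg2 : (2*((m+1-p:ℕ):ℝ)+p+1)*θ = 2*Real.pi - ((p:ℝ)+1)*θ := by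
      rw [hN, hθ]; field_simp; ring
    rw [harg2, Real.sin_sub, Real.sin_two_pi, Real.cos_two_pi]
    ring
  have hadd : Real.sin (((p:ℝ)+1)*θ)
      = Real.sin ((p:ℝ)*θ) * Real.cos θ + Real.cos ((p:ℝ)*θ) * Real.sin θ := by
    rw [show ((p:ℝ)+1)*θ = (p:ℝ)*θ + θ by ring, Real.sin_add]
  rw [hsin2, hN, hadd] at hsum
  rw [hL]
  field_simp
  linear_combination (1/2:ℝ) * hsum
end

section
/- Let m ≥ 1 and let p₀ be a positive integer with p₀π ≤ m+2. Then for every p with 1 ≤ p ≤ p₀, the Fourier coefficient P̂(p) of P(e^{2πit}) = (2/(m+2))|Σ_{j=1}^{m+1} sin(jπ/(m+2)) e^{2πijt}|² satisfies P̂(p) ≥ 1 − 3π² (p₀/(m+2))². -/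
set_option maxHeartbeats 2000000

open Real Finset Complex

lemma prodsum (a b : ℝ) : Real.sin a * Real.sin b = (Real.cos (a-b) - Real.cos (a+b))/2 := by
  rw [Real.cos_sub_cos]
  rw [show (a-b+(a+b))/2 = a by ring, show (a-b-(a+b))/2 = -b by ring, Real.sin_neg]
  ring

lemma sin_succ_ge (θ : ℝ) (hθ0 : 0 ≤ θ) (hθ2 : θ ≤ π/2) :
    ∀ q : ℕ, (q:ℝ)*θ ≤ π → ((q:ℝ)+1) * Real.sin θ * Real.cos (q*θ) ≤ Real.sin (((q:ℝ)+1)*θ) := by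
  intro q
  induction q with
  | zero => intro _; simp
  | succ q ih =>
    intro h
    have hπ := Real.pi_pos
    have hq : (q:ℝ)*θ ≤ π := by push_cast at h ⊢; nlinarith
    have IH := ih hq
    have hsθ : 0 ≤ Real.sin θ := Real.sin_nonneg_of_nonneg_of_le_pi hθ0 (by linarith)
    have hcθ : 0 ≤ Real.cos θ := Real.cos_nonneg_of_mem_Icc ⟨by linarith, hθ2⟩
    have hsq : 0 ≤ Real.sin ((q:ℝ)*θ) :=
      Real.sin_nonneg_of_nonneg_of_le_pi (by positivity) hq
    have e1 : Real.sin (((q:ℝ)+1+1)*θ) =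
        Real.sin (((q:ℝ)+1)*θ) * Real.cos θ + Real.cos (((q:ℝ)+1)*θ) * Real.sin θ := by
      rw [← Real.sin_add]; ring_nf
    have e2 : Real.cos (((q:ℝ)+1)*θ) =
        Real.cos ((q:ℝ)*θ) * Real.cos θ - Real.sin ((q:ℝ)*θ) * Real.sin θ := by
      rw [← Real.cos_add]; ring_nf
    have h1 : ((q:ℝ)+1)*Real.sin θ*Real.cos ((q:ℝ)*θ)*Real.cos θ ≤ Real.sin (((q:ℝ)+1)*θ)*Real.cos θ :=
      mul_le_mul_of_nonneg_right IH hcθ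
    have h2 : (0:ℝ) ≤ ((q:ℝ)+1)*Real.sin θ*(Real.sin ((q:ℝ)*θ)*Real.sin θ) := by positivity
    have h3 : ((q:ℝ)+1)*Real.sin θ*Real.cos (((q:ℝ)+1)*θ) ≤ ((q:ℝ)+1)*Real.sin θ*(Real.cos ((q:ℝ)*θ)*Real.cos θ) := by
      rw [e2]; nlinarith [h2]
    push_cast
    nlinarith [h1, h3]

lemma tele (θ : ℝ) (p M : ℕ) :
    (∑ i ∈ Finset.range M, Real.cos ((2*((i:ℝ)+1)+(p:ℝ))*θ)) * (2*Real.sin θ)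
      = Real.sin ((2*(M:ℝ)+(p:ℝ)+1)*θ) - Real.sin (((p:ℝ)+1)*θ) := by
  have key := Finset.sum_range_sub (f := fun i => Real.sin ((2*(i:ℝ)+(p:ℝ)+1)*θ)) M
  rw [Finset.sum_mul]
  have : ∀ i ∈ Finset.range M, Real.cos ((2*((i:ℝ)+1)+(p:ℝ))*θ) * (2*Real.sin θ)
      = Real.sin ((2*((i:ℝ)+1)+(p:ℝ)+1)*θ) - Real.sin ((2*(i:ℝ)+(p:ℝ)+1)*θ) := by
    intro i _
    have hx : ((2*((i:ℝ)+1)+(p:ℝ)+1)*θ - (2*(i:ℝ)+(p:ℝ)+1)*θ)/2 = θ := by ring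
    have hy : ((2*((i:ℝ)+1)+(p:ℝ)+1)*θ + (2*(i:ℝ)+(p:ℝ)+1)*θ)/2 = (2*((i:ℝ)+1)+(p:ℝ))*θ := by ring
    rw [Real.sin_sub_sin, hx, hy]; ring
  push_cast at key
  rw [Finset.sum_congr rfl this, key]
  norm_num

lemma analytic (m p₀ p : ℕ) (hm : 1 ≤ m) (hp₀ : 1 ≤ p₀) (hπ : (p₀ : ℝ) * Real.pi ≤ m + 2)
    (hp1 : 1 ≤ p) (hpp₀ : p ≤ p₀) :
    1 - 3 * Real.pi ^ 2 * ((p₀ : ℝ) / (m + 2)) ^ 2 ≤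
      2/((m:ℝ)+2) * ∑ k ∈ Finset.Icc 1 (m+1-p),
        Real.sin ((↑(k+p))*Real.pi/((m:ℝ)+2)) * Real.sin ((k:ℝ)*Real.pi/((m:ℝ)+2)) := by
  have hπ3 : (3:ℝ) < π := Real.pi_gt_three
  have hπpos : (0:ℝ) < π := by linarith
  set N : ℝ := (m:ℝ)+2 with hNdef
  have hN3 : (3:ℝ) ≤ N := by
    have : (1:ℝ) ≤ (m:ℝ) := by exact_mod_cast hm
    rw [hNdef]; linarith
  have hNpos : (0:ℝ) < N := by linarith
  set θ : ℝ := π/N with hθdef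
  have hθpos : 0 < θ := by positivity
  have hθ2 : θ ≤ π/2 := by
    rw [hθdef, div_le_div_iff₀ hNpos two_pos]; nlinarith
  have hθπ : θ < π := by
    rw [hθdef, div_lt_iff₀ hNpos]; nlinarith
  have hpm : p ≤ m := by
    have h1 : (p:ℝ)*3 < (m:ℝ)+2 := by
      calc (p:ℝ)*3 ≤ (p₀:ℝ)*3 := by
            have : (p:ℝ) ≤ p₀ := by exact_mod_cast hpp₀
            nlinarith
        _ < (p₀:ℝ)*π := by
            have : (1:ℝ) ≤ p₀ := by exact_mod_cast hp₀
            nlinarith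
        _ ≤ (m:ℝ)+2 := hπ
    have h2 : p*3 < m+2 := by exact_mod_cast h1
    omega
  set M : ℕ := m+1-p with hMdef
  have hM : (M:ℝ) = (m:ℝ)+1-(p:ℝ) := by
    rw [hMdef, Nat.cast_sub (show p ≤ m+1 by omega)]
    push_cast; ring
  have hpθ : (p:ℝ)*θ ≤ 1 := by
    rw [hθdef, mul_div_assoc', div_le_one hNpos]
    calc (p:ℝ)*π ≤ (p₀:ℝ)*π := by
          have : (p:ℝ) ≤ p₀ := by exact_mod_cast hpp₀
          nlinarith
      _ ≤ N := hπ
  have hsθ : 0 < Real.sin θ := Real.sin_pos_of_pos_of_lt_pi hθpos hθπ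
  rw [← Finset.Ico_add_one_right_eq_Icc, Finset.sum_Ico_eq_sum_range]
  have hrange : m+1-p+1-1 = M := by omega
  rw [hrange]
  have per : ∀ i ∈ Finset.range M,
      Real.sin ((↑(1+i+p))*π/N) * Real.sin ((↑(1+i):ℝ)*π/N)
        = (Real.cos ((p:ℝ)*θ) - Real.cos ((2*((i:ℝ)+1)+(p:ℝ))*θ))/2 := by
    intro i _
    rw [prodsum]
    rw [show (↑(1+i+p):ℝ)*π/N - (↑(1+i):ℝ)*π/N = (p:ℝ)*θ by rw [hθdef]; push_cast; ring,
        show (↑(1+i+p):ℝ)*π/N + (↑(1+i):ℝ)*π/N = (2*((i:ℝ)+1)+(p:ℝ))*θ by rw [hθdef]; push_cast; ring]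
  rw [Finset.sum_congr rfl per]
  rw [← Finset.sum_div, Finset.sum_sub_distrib, Finset.sum_const, Finset.card_range,
      nsmul_eq_mul]
  set C : ℝ := ∑ i ∈ Finset.range M, Real.cos ((2*((i:ℝ)+1)+(p:ℝ))*θ) with hCdef
  have htele := tele θ p M
  have h2M : (2*(M:ℝ)+(p:ℝ)+1)*θ = 2*π - ((p:ℝ)+1)*θ := by
    rw [hM, hθdef]; field_simp; ring
  rw [h2M, show Real.sin (2*π - ((p:ℝ)+1)*θ) = - Real.sin (((p:ℝ)+1)*θ) by
    simp [Real.sin_sub]] at htele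
  have hkey := sin_succ_ge θ hθpos.le hθ2 p (by nlinarith)
  have hC : C ≤ -(((p:ℝ)+1) * Real.cos ((p:ℝ)*θ)) := by
    have h1 : C * (2*Real.sin θ) ≤ (-(((p:ℝ)+1) * Real.cos ((p:ℝ)*θ))) * (2*Real.sin θ) := by
      rw [htele]; nlinarith [hkey]
    exact le_of_mul_le_mul_right h1 (by positivity)
  have hMN : (M:ℝ) = N - (p:ℝ) - 1 := by rw [hM, hNdef]; ring
  have h7 : (M:ℝ)*Real.cos ((p:ℝ)*θ)
      = N*Real.cos ((p:ℝ)*θ) - ((p:ℝ)+1)*Real.cos ((p:ℝ)*θ) := by rw [hMN]; ring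
  have h8 : Real.cos ((p:ℝ)*θ) ≤ ((M:ℝ)*Real.cos ((p:ℝ)*θ) - C)/N := by
    rw [le_div_iff₀ hNpos]
    nlinarith [hC, h7]
  have hple : (p:ℝ)*θ ≤ (p₀:ℝ)*θ :=
    mul_le_mul_of_nonneg_right (by exact_mod_cast hpp₀) hθpos.le
  have hpθ0 : (0:ℝ) ≤ (p:ℝ)*θ := by positivity
  have hsq : ((p:ℝ)*θ)^2 ≤ π^2*((p₀:ℝ)/N)^2 := by
    calc ((p:ℝ)*θ)^2 ≤ ((p₀:ℝ)*θ)^2 := by exact pow_le_pow_left₀ hpθ0 hple 2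
      _ = π^2*((p₀:ℝ)/N)^2 := by rw [hθdef]; ring
  have h9 : 1 - 3*π^2*((p₀:ℝ)/N)^2 ≤ Real.cos ((p:ℝ)*θ) := by
    have hb := Real.one_sub_sq_div_two_le_cos (x := (p:ℝ)*θ)
    have hx : (0:ℝ) ≤ π^2*((p₀:ℝ)/N)^2 := by positivity
    linarith [hb, hsq, hx]
  have hfin : 2/N * (((M:ℝ)*Real.cos ((p:ℝ)*θ) - C)/2) = ((M:ℝ)*Real.cos ((p:ℝ)*θ) - C)/N := by
    ring
  linarith [h8, h9, hfin]


lemma orth (n : ℤ) : (∫ t in (0:ℝ)..1, Complex.exp (2*Real.pi*Complex.I*(n:ℂ)*t))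
    = if n = 0 then 1 else 0 := by
  rcases eq_or_ne n 0 with h | h
  · simp [h]
  · simp only [h, if_false]
    have hc : (2*(Real.pi:ℂ)*Complex.I*n) ≠ 0 := by
      simp [Complex.ext_iff, Real.pi_ne_zero, h]
    have key := integral_exp_mul_complex (a:=(0:ℝ)) (b:=1) hc
    have e1 : Complex.exp (2*(Real.pi:ℂ)*Complex.I*n*1) = 1 := by
      rw [mul_one]
      have := Complex.exp_int_mul_two_pi_mul_I n
      rw [← this]; ring_nf
    calc (∫ t in (0:ℝ)..1, Complex.exp (2*Real.pi*Complex.I*(n:ℂ)*t))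
        = (∫ t in (0:ℝ)..1, Complex.exp (2*(Real.pi:ℂ)*Complex.I*n*t)) := by norm_cast
      _ = 0 := by rw [key]; push_cast; rw [e1]; simp

lemma hpt (m p : ℕ) (t : ℝ) :
    ((P m t : ℝ) : ℂ) * Complex.exp (-(2 * Real.pi * Complex.I * p * t)) =
      ∑ j ∈ Finset.Icc 1 (m+1), ∑ k ∈ Finset.Icc 1 (m+1),
        ((2/((m:ℝ)+2) * (Real.sin ((j:ℝ)*Real.pi/((m:ℝ)+2)) * Real.sin ((k:ℝ)*Real.pi/((m:ℝ)+2))) : ℝ) : ℂ)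
          * Complex.exp (2*Real.pi*Complex.I*((((j:ℤ) - k - p : ℤ)):ℂ)*t) := by
  unfold P
  set S : ℂ := ∑ j ∈ Finset.Icc 1 (m+1),
    (Real.sin ((j:ℝ) * Real.pi / ((m:ℝ) + 2)) : ℂ) * Complex.exp (2 * Real.pi * Complex.I * j * t) with hS
  have habs : ((‖S‖^2 : ℝ) : ℂ) = S * (starRingEnd ℂ) S := by
    rw [Complex.mul_conj, Complex.sq_norm]
  have hconj : (starRingEnd ℂ) S = ∑ k ∈ Finset.Icc 1 (m+1),
      (Real.sin ((k:ℝ) * Real.pi / ((m:ℝ) + 2)) : ℂ) * Complex.exp (-(2 * Real.pi * Complex.I * k * t)) := by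
    rw [map_sum]
    apply Finset.sum_congr rfl
    intro k _
    rw [map_mul, Complex.conj_ofReal, ← Complex.exp_conj]
    congr 1
    simp only [map_mul, map_neg, Complex.conj_I, Complex.conj_ofReal, map_ofNat,
      Complex.conj_natCast]
    ring
  rw [Complex.ofReal_mul, habs, hconj, hS, Finset.sum_mul_sum]
  simp only [Finset.mul_sum, Finset.sum_mul]
  apply Finset.sum_congr rfl
  intro j _
  apply Finset.sum_congr rfl
  intro k _
  rw [show (2*(Real.pi:ℂ)*Complex.I*((((j:ℤ) - k - p : ℤ)):ℂ)*(t:ℂ))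
      = 2 * Real.pi * Complex.I * j * t + (-(2 * Real.pi * Complex.I * k * t))
        + (-(2 * Real.pi * Complex.I * p * t)) by push_cast; ring,
    Complex.exp_add, Complex.exp_add]
  push_cast
  ring

lemma Pcoef_eq (m p : ℕ) :
    Pcoef m p = ∑ j ∈ Finset.Icc 1 (m+1), ∑ k ∈ Finset.Icc 1 (m+1),
        ((2/((m:ℝ)+2) * (Real.sin ((j:ℝ)*Real.pi/((m:ℝ)+2)) * Real.sin ((k:ℝ)*Real.pi/((m:ℝ)+2))) : ℝ) : ℂ)
          * (if ((j:ℤ) - k - p = 0) then 1 else 0) := by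
  have hint : ∀ (c : ℝ) (n : ℤ), IntervalIntegrable
      (fun t : ℝ => (c:ℂ) * Complex.exp (2*Real.pi*Complex.I*(n:ℂ)*t)) MeasureTheory.volume 0 1 := by
    intro c n
    have hc : Continuous (fun t : ℝ => (c:ℂ) * Complex.exp (2*Real.pi*Complex.I*(n:ℂ)*t)) :=
      continuous_const.mul (Complex.continuous_exp.comp
        (continuous_const.mul Complex.continuous_ofReal))
    exact hc.intervalIntegrable 0 1
  calc Pcoef m p
      = (∫ t in (0:ℝ)..1, ∑ j ∈ Finset.Icc 1 (m+1), ∑ k ∈ Finset.Icc 1 (m+1),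
          ((2/((m:ℝ)+2) * (Real.sin ((j:ℝ)*Real.pi/((m:ℝ)+2)) * Real.sin ((k:ℝ)*Real.pi/((m:ℝ)+2))) : ℝ) : ℂ)
            * Complex.exp (2*Real.pi*Complex.I*((((j:ℤ) - k - p : ℤ)):ℂ)*t)) := by
        unfold Pcoef
        apply intervalIntegral.integral_congr
        intro t _
        exact hpt m p t
    _ = ∑ j ∈ Finset.Icc 1 (m+1), ∫ t in (0:ℝ)..1, ∑ k ∈ Finset.Icc 1 (m+1),
          ((2/((m:ℝ)+2) * (Real.sin ((j:ℝ)*Real.pi/((m:ℝ)+2)) * Real.sin ((k:ℝ)*Real.pi/((m:ℝ)+2))) : ℝ) : ℂ)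
            * Complex.exp (2*Real.pi*Complex.I*((((j:ℤ) - k - p : ℤ)):ℂ)*t) := by
        apply intervalIntegral.integral_finset_sum
          (f := fun (j : ℕ) (t : ℝ) => ∑ k ∈ Finset.Icc 1 (m+1),
            ((2/((m:ℝ)+2) * (Real.sin ((j:ℝ)*Real.pi/((m:ℝ)+2)) * Real.sin ((k:ℝ)*Real.pi/((m:ℝ)+2))) : ℝ) : ℂ)
              * Complex.exp (2*Real.pi*Complex.I*((((j:ℤ) - k - p : ℤ)):ℂ)*t))
        intro j _
        apply Continuous.intervalIntegrable
        apply continuous_finset_sum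
        intro k _
        exact continuous_const.mul (Complex.continuous_exp.comp
          (continuous_const.mul Complex.continuous_ofReal))
    _ = ∑ j ∈ Finset.Icc 1 (m+1), ∑ k ∈ Finset.Icc 1 (m+1), ∫ t in (0:ℝ)..1,
          ((2/((m:ℝ)+2) * (Real.sin ((j:ℝ)*Real.pi/((m:ℝ)+2)) * Real.sin ((k:ℝ)*Real.pi/((m:ℝ)+2))) : ℝ) : ℂ)
            * Complex.exp (2*Real.pi*Complex.I*((((j:ℤ) - k - p : ℤ)):ℂ)*t) := by
        apply Finset.sum_congr rfl
        intro j _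
        apply intervalIntegral.integral_finset_sum
        intro k _
        exact hint _ _
    _ = ∑ j ∈ Finset.Icc 1 (m+1), ∑ k ∈ Finset.Icc 1 (m+1),
          ((2/((m:ℝ)+2) * (Real.sin ((j:ℝ)*Real.pi/((m:ℝ)+2)) * Real.sin ((k:ℝ)*Real.pi/((m:ℝ)+2))) : ℝ) : ℂ)
            * (if ((j:ℤ) - k - p = 0) then 1 else 0) := by
        apply Finset.sum_congr rfl
        intro j _
        apply Finset.sum_congr rfl
        intro k _
        rw [intervalIntegral.integral_const_mul, orth]

lemma Pcoef_real (m p : ℕ) (hpm : p ≤ m) :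
    Pcoef m p = ((2/((m:ℝ)+2) * ∑ k ∈ Finset.Icc 1 (m+1-p),
      Real.sin ((↑(k+p))*Real.pi/((m:ℝ)+2)) * Real.sin ((k:ℝ)*Real.pi/((m:ℝ)+2)) : ℝ) : ℂ) := by
  rw [Pcoef_eq, Finset.sum_comm]
  have hcond : ∀ j k : ℕ, ((j:ℤ) - k - p = 0) = (j = k+p) := by
    intro j k; simp only [eq_iff_iff]; omega
  simp only [hcond, mul_ite, mul_one, mul_zero, Finset.sum_ite_eq']
  have hsub : Finset.Icc 1 (m+1-p) ⊆ Finset.Icc 1 (m+1) :=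
    Finset.Icc_subset_Icc_right (by omega)
  rw [← Finset.sum_subset hsub (by
    intro k hk hnk
    simp only [Finset.mem_Icc] at hk hnk
    rw [if_neg]
    simp only [Finset.mem_Icc]
    omega)]
  rw [Finset.sum_congr rfl (g := fun k =>
      ((2/((m:ℝ)+2) * (Real.sin ((↑(k+p):ℝ)*Real.pi/((m:ℝ)+2)) * Real.sin ((k:ℝ)*Real.pi/((m:ℝ)+2))) : ℝ) : ℂ))
    (by
      intro k hk
      simp only [Finset.mem_Icc] at hk
      rw [if_pos]
      simp only [Finset.mem_Icc]
      omega)]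
  push_cast
  rw [Finset.mul_sum]


theorem stmt7 (m p₀ p : ℕ) (hm : 1 ≤ m) (hp₀ : 1 ≤ p₀) (hπ : (p₀ : ℝ) * Real.pi ≤ m + 2)
    (hp1 : 1 ≤ p) (hpp₀ : p ≤ p₀) :
    1 - 3 * Real.pi ^ 2 * ((p₀ : ℝ) / (m + 2)) ^ 2 ≤ (Pcoef m p).re := by
  have hπ3 : (3:ℝ) < Real.pi := Real.pi_gt_three
  have hpm : p ≤ m := by
    have h1 : (p:ℝ)*3 < (m:ℝ)+2 := by
      calc (p:ℝ)*3 ≤ (p₀:ℝ)*3 := by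
            have h : (p:ℝ) ≤ p₀ := by exact_mod_cast hpp₀
            nlinarith
        _ < (p₀:ℝ)*Real.pi := by
            have h : (1:ℝ) ≤ p₀ := by exact_mod_cast hp₀
            nlinarith
        _ ≤ (m:ℝ)+2 := hπ
    have h2 : p*3 < m+2 := by exact_mod_cast h1
    omega
  rw [Pcoef_real m p hpm, Complex.ofReal_re]
  exact analytic m p₀ p hm hp₀ hπ hp1 hpp₀
end

section
/- Let (n_k) be a strictly increasing sequence of positive integers and suppose (m_k) is a sequence of positive integers such that n_{k+1} − 2 Σ_{j=1}^k m_j n_j ≥ 1 for each k and n_{k+1} − 2 Σ_{j=1}^k m_j n_j → ∞. Then there exists a continuous probability measure σ on T such that σ̂(Σ_{k∈F} n_k) = Π_{k∈F} cos(π/(m_k+2)) for every nonempty finite set F of indices. -/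
open MeasureTheory Finset Filter

namespace RP

noncomputable def e (M : ℤ) (t : ℝ) : ℂ := Complex.exp (2 * Real.pi * Complex.I * M * t)

noncomputable def θ (m : ℕ → ℕ) (k : ℕ) : ℝ := Real.pi / (m k + 2)

noncomputable def s (m : ℕ → ℕ) (k j : ℕ) : ℝ := Real.sin (j * θ m k)

def J (m : ℕ → ℕ) (k : ℕ) : Finset ℕ := Finset.Icc 1 (m k + 1)

noncomputable def S (m : ℕ → ℕ) (k : ℕ) : ℝ := ∑ j ∈ J m k, (s m k j) ^ 2

noncomputable def g (n m : ℕ → ℕ) (k : ℕ) (t : ℝ) : ℝ :=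
  Complex.normSq (∑ j ∈ J m k, (s m k j : ℂ) * e (j * n k) t) / S m k

noncomputable def ρ (n m : ℕ → ℕ) (N : ℕ) (t : ℝ) : ℝ := ∏ k ∈ Finset.Icc 1 N, g n m k t

noncomputable def chat (n m : ℕ → ℕ) : ℕ → ℤ → ℝ
  | 0 => fun M => if M = 0 then 1 else 0
  | (N+1) => fun M => (S m (N+1))⁻¹ * ∑ j ∈ J m (N+1), ∑ l ∈ J m (N+1),
      s m (N+1) j * s m (N+1) l * chat n m N (M + ((j : ℤ) - l) * n (N+1))

def Sn (n m : ℕ → ℕ) (N : ℕ) : ℤ := ∑ j ∈ Finset.Icc 1 N, (m j : ℤ) * n j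

noncomputable def A (n m : ℕ → ℕ) (N : ℕ) (M : ℤ) : ℂ :=
  ∫ t in Set.Ioc (0:ℝ) 1, e M t * ρ n m N t

noncomputable def Fc (n m : ℕ → ℕ) (N : ℕ) (t : ℝ) : ℝ :=
  ∫ x in Set.Ioc (0:ℝ) (min t 1), ρ n m N x

section trig

variable (m : ℕ → ℕ) (k : ℕ)

lemma theta_pos : 0 < θ m k := div_pos Real.pi_pos (by positivity)

lemma theta_lt_pi : θ m k < Real.pi := by
  have h : (1:ℝ) < (m k : ℝ) + 2 := by
    have : (0:ℝ) ≤ (m k : ℝ) := Nat.cast_nonneg _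
    linarith
  exact div_lt_self Real.pi_pos h

lemma s_one_pos : 0 < s m k 1 := by
  have := theta_pos m k; have := theta_lt_pi m k
  simpa [s] using Real.sin_pos_of_pos_of_lt_pi (by linarith) (by linarith)

lemma S_pos : 0 < S m k := by
  refine Finset.sum_pos' (fun j _ => sq_nonneg _) ⟨1, ?_, ?_⟩
  · simp [J]
  · exact pow_pos (s_one_pos m k) 2

lemma s_zero : s m k 0 = 0 := by simp [s]

lemma s_top : s m k (m k + 2) = 0 := by
  have h : ((m k : ℝ) + 2) ≠ 0 := by positivity
  have : ((m k + 2 : ℕ) : ℝ) * θ m k = Real.pi := by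
    push_cast [θ]; field_simp
  have h2 : s m k (m k + 2) = Real.sin (((m k + 2 : ℕ) : ℝ) * θ m k) := by
    rfl
  rw [h2, this, Real.sin_pi]

lemma s_rec (j : ℕ) (hj : 1 ≤ j) :
    s m k (j+1) + s m k (j-1) = 2 * Real.cos (θ m k) * s m k j := by
  obtain ⟨i, rfl⟩ := Nat.exists_eq_add_of_le hj
  have h1 : ((1 + i + 1 : ℕ) : ℝ) * θ m k = ((1+i:ℕ):ℝ) * θ m k + θ m k := by push_cast; ring
  have h2 : ((1 + i - 1 : ℕ) : ℝ) * θ m k = ((1+i:ℕ):ℝ) * θ m k - θ m k := by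
    have : (1 + i - 1 : ℕ) = i := by omega
    rw [this]; push_cast; ring
  simp only [s, h1, h2, Real.sin_add, Real.sin_sub]
  ring

lemma fejer : ∑ j ∈ Finset.Icc 1 (m k), s m k j * s m k (j+1)
    = Real.cos (θ m k) * S m k := by
  have key : ∑ j ∈ J m k, s m k j * (s m k (j+1) + s m k (j-1))
      = 2 * Real.cos (θ m k) * S m k := by
    have h2 : (2:ℝ) * Real.cos (θ m k) * S m k
        = ∑ j ∈ J m k, s m k j * (2 * Real.cos (θ m k) * s m k j) := by
      rw [S, Finset.mul_sum]; exact Finset.sum_congr rfl (fun j _ => by ring)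
    rw [h2]
    refine Finset.sum_congr rfl (fun j hj => ?_)
    rw [s_rec m k j (by simp [J] at hj; omega)]
  have split : ∑ j ∈ J m k, s m k j * (s m k (j+1) + s m k (j-1))
      = (∑ j ∈ J m k, s m k j * s m k (j+1)) + ∑ j ∈ J m k, s m k j * s m k (j-1) := by
    rw [← Finset.sum_add_distrib]; exact Finset.sum_congr rfl (fun j _ => by ring)
  have hA : ∑ j ∈ J m k, s m k j * s m k (j+1)
      = ∑ j ∈ Finset.Icc 1 (m k), s m k j * s m k (j+1) := by
    rw [J, Finset.sum_Icc_succ_top (by omega : 1 ≤ m k + 1)]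
    have : s m k (m k + 1 + 1) = 0 := by rw [show m k + 1 + 1 = m k + 2 by ring]; exact s_top m k
    simp [this]
  have hB : ∑ j ∈ J m k, s m k j * s m k (j-1)
      = ∑ j ∈ Finset.Icc 1 (m k), s m k j * s m k (j+1) := by
    rw [J, show Finset.Icc 1 (m k + 1) = Finset.Icc (0+1) (m k + 1) by norm_num,
      ← Finset.map_add_right_Icc 0 (m k) 1, Finset.sum_map]
    simp only [addRightEmbedding_apply, Nat.add_sub_cancel]
    rcases Nat.eq_zero_or_pos (m k) with h0 | h0
    · simp [h0, s_zero]
    rw [show Finset.Icc 0 (m k) = insert 0 (Finset.Icc 1 (m k)) by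
        ext a; simp [Finset.mem_Icc, Finset.mem_insert]; omega]
    rw [Finset.sum_insert (by simp)]
    simp only [s_zero, zero_add, mul_zero, zero_mul]
    exact Finset.sum_congr rfl (fun j _ => by ring)
  rw [split, hA, hB] at key
  linarith

end trig

section chatprop

variable {n m : ℕ → ℕ} (hpos : ∀ k, 1 ≤ n k) (hm : ∀ k, 1 ≤ m k)
  (h1 : ∀ k, 1 ≤ k → 1 ≤ (n (k+1) : ℤ) - 2 * ∑ j ∈ Finset.Icc 1 k, (m j : ℤ) * n j)

lemma Sn_nonneg (N : ℕ) : 0 ≤ Sn n m N :=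
  Finset.sum_nonneg (fun j _ => by positivity)

lemma Sn_mono {N N' : ℕ} (h : N ≤ N') : Sn n m N ≤ Sn n m N' :=
  Finset.sum_le_sum_of_subset_of_nonneg (Finset.Icc_subset_Icc_right h)
    (fun j _ _ => by positivity)

lemma Sn_succ (N : ℕ) : Sn n m (N+1) = Sn n m N + (m (N+1) : ℤ) * n (N+1) :=
  Finset.sum_Icc_succ_top (by omega) _

include hpos h1 in
lemma Sn_lt (N : ℕ) : 2 * Sn n m N < (n (N+1) : ℤ) := by
  rcases Nat.eq_zero_or_pos N with rfl | hN
  · have : Sn n m 0 = 0 := by simp [Sn]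
    rw [this]
    have h := hpos 1
    simp only [Nat.zero_add]
    omega
  · have := h1 N hN
    rw [Sn]; omega

include hm in
lemma sumF_le_Sn {N : ℕ} {F : Finset ℕ} (hF : F ⊆ Finset.Icc 1 N) :
    ∑ k ∈ F, (n k : ℤ) ≤ Sn n m N := by
  calc ∑ k ∈ F, (n k : ℤ) ≤ ∑ k ∈ F, (m k : ℤ) * n k := by
        refine Finset.sum_le_sum (fun k _ => ?_)
        have h1 := hm k
        have h2 : (1:ℤ) ≤ m k := by exact_mod_cast h1
        nlinarith [Int.ofNat_nonneg (n k)]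
    _ ≤ Sn n m N := Finset.sum_le_sum_of_subset_of_nonneg hF (fun j _ _ => by positivity)

include hm in
lemma term_le_Sn {N k : ℕ} (hk : k ∈ Finset.Icc 1 N) : (n k : ℤ) ≤ Sn n m N := by
  have := sumF_le_Sn (n := n) hm (N := N) (F := {k}) (by simpa using hk)
  simpa using this

lemma haux {b Snn nn a : ℤ} (ha : a ≠ 0) (hb : 0 ≤ b) (hSnn : 0 ≤ Snn)
    (h : b + Snn < nn) : Snn < |b + a * nn| := by
  rcases lt_or_gt_of_ne ha with haneg | hapos
  · have h1 : a ≤ -1 := by omega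
    have h2 : a * nn ≤ -1 * nn := by
      apply mul_le_mul_of_nonneg_right h1; omega
    rw [abs_of_nonpos (by omega)]
    omega
  · have h1 : 1 ≤ a := hapos
    have h2 : 1 * nn ≤ a * nn := by
      apply mul_le_mul_of_nonneg_right h1; omega
    rw [abs_of_nonneg (by omega)]
    omega

lemma chat_eq_zero : ∀ N : ℕ, ∀ M : ℤ, Sn n m N < |M| → chat n m N M = 0 := by
  intro N
  induction N with
  | zero =>
    intro M h
    have h0 : Sn n m 0 = 0 := by simp [Sn]
    rw [h0] at h
    have : M ≠ 0 := by intro hM; rw [hM] at h; simp at h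
    simp [chat, this]
  | succ N ih =>
    intro M h
    rw [Sn_succ] at h
    simp only [chat]
    rw [Finset.sum_eq_zero, mul_zero]
    intro j hj
    rw [Finset.sum_eq_zero]
    intro l hl
    simp only [J, Finset.mem_Icc] at hj hl
    have hz : chat n m N (M + ((j:ℤ) - l) * n (N+1)) = 0 := by
      apply ih
      have hx : |((j:ℤ) - l) * n (N+1)| ≤ (m (N+1) : ℤ) * n (N+1) := by
        rw [abs_mul, abs_of_nonneg (by positivity : (0:ℤ) ≤ (n (N+1) : ℤ))]
        apply mul_le_mul_of_nonneg_right _ (by positivity)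
        rw [abs_le]; omega
      have habs : |M| ≤ |M + ((j:ℤ) - l) * n (N+1)| + |((j:ℤ) - l) * n (N+1)| := by
        have h3 := abs_add_le (M + ((j:ℤ) - l) * n (N+1)) (-(((j:ℤ) - l) * n (N+1)))
        rw [abs_neg] at h3
        have h4 : M + ((j:ℤ) - l) * n (N+1) + -(((j:ℤ) - l) * n (N+1)) = M := by ring
        rw [h4] at h3
        exact h3
      omega
    rw [hz, mul_zero]

include hpos hm h1 in
lemma chat_sum (N : ℕ) (F : Finset ℕ) (hF : F ⊆ Finset.Icc 1 N) :
    chat n m N (∑ k ∈ F, (n k : ℤ)) = ∏ k ∈ F, Real.cos (θ m k) := by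
  induction N generalizing F with
  | zero =>
    have : F = ∅ := by
      rw [← Finset.subset_empty]; simpa using hF
    subst this; simp [chat, Sn]
  | succ N ih =>
    have hSnlt := Sn_lt (n := n) (m := m) hpos h1 N
    have hS0 := S_pos m (N+1)
    by_cases hNF : N+1 ∈ F
    · have hF' : F.erase (N+1) ⊆ Finset.Icc 1 N := by
        intro x hx
        have h1x := Finset.mem_of_mem_erase hx
        have h2x := Finset.ne_of_mem_erase hx
        have := hF h1x
        simp only [Finset.mem_Icc] at this ⊢
        omega
      have hb'0 : (0:ℤ) ≤ ∑ k ∈ F.erase (N+1), (n k : ℤ) :=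
        Finset.sum_nonneg (fun k _ => by positivity)
      have hb'le := sumF_le_Sn (n := n) hm hF'
      have hsum : ∑ k ∈ F, (n k : ℤ) = (n (N+1) : ℤ) + ∑ k ∈ F.erase (N+1), (n k : ℤ) :=
        (Finset.add_sum_erase F _ hNF).symm
      have hC' := ih _ hF'
      simp only [chat, hsum]
      have per : ∀ j ∈ J m (N+1), ∀ l ∈ J m (N+1),
          s m (N+1) j * s m (N+1) l *
            chat n m N ((n (N+1) : ℤ) + ∑ k ∈ F.erase (N+1), (n k : ℤ) + ((j:ℤ) - l) * n (N+1))
          = if l = j + 1 then s m (N+1) j * s m (N+1) l * ∏ k ∈ F.erase (N+1), Real.cos (θ m k) else 0 := by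
        intro j hj l hl
        by_cases hjl : l = j + 1
        · subst hjl
          rw [if_pos rfl]
          have harg : (n (N+1) : ℤ) + ∑ k ∈ F.erase (N+1), (n k : ℤ) + ((j:ℤ) - (j+1:ℕ)) * n (N+1)
              = ∑ k ∈ F.erase (N+1), (n k : ℤ) := by push_cast; ring
          rw [harg, hC']
        · rw [if_neg hjl]
          have hz : chat n m N ((n (N+1) : ℤ) + ∑ k ∈ F.erase (N+1), (n k : ℤ) + ((j:ℤ) - l) * n (N+1)) = 0 := by
            apply chat_eq_zero
            have harg : (n (N+1) : ℤ) + ∑ k ∈ F.erase (N+1), (n k : ℤ) + ((j:ℤ) - l) * n (N+1)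
                = ∑ k ∈ F.erase (N+1), (n k : ℤ) + (1 + (j:ℤ) - l) * n (N+1) := by ring
            rw [harg]
            exact haux (by omega) hb'0 (Sn_nonneg N) (by omega)
          rw [hz, mul_zero]
      rw [Finset.sum_congr rfl (fun j hj => Finset.sum_congr rfl (fun l hl => per j hj l hl))]
      have hinner : ∀ j ∈ J m (N+1),
          (∑ l ∈ J m (N+1), if l = j + 1 then s m (N+1) j * s m (N+1) l * ∏ k ∈ F.erase (N+1), Real.cos (θ m k) else 0)
          = if j + 1 ∈ J m (N+1) then s m (N+1) j * s m (N+1) (j+1) * ∏ k ∈ F.erase (N+1), Real.cos (θ m k) else 0 := by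
        intro j hj
        exact Finset.sum_ite_eq' (J m (N+1)) (j+1) _
      rw [Finset.sum_congr rfl hinner]
      have hsubset : ∀ j ∈ J m (N+1),
          (if j + 1 ∈ J m (N+1) then s m (N+1) j * s m (N+1) (j+1) * ∏ k ∈ F.erase (N+1), Real.cos (θ m k) else 0)
          = if j ∈ Finset.Icc 1 (m (N+1)) then s m (N+1) j * s m (N+1) (j+1) * ∏ k ∈ F.erase (N+1), Real.cos (θ m k) else 0 := by
        intro j hj
        refine if_congr ?_ rfl rfl
        simp only [J, Finset.mem_Icc] at hj ⊢
        omega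
      rw [Finset.sum_congr rfl hsubset, Finset.sum_ite_mem]
      have hinter : J m (N+1) ∩ Finset.Icc 1 (m (N+1)) = Finset.Icc 1 (m (N+1)) := by
        ext a; simp only [J, Finset.mem_inter, Finset.mem_Icc]; omega
      rw [hinter, ← Finset.sum_mul, fejer]
      rw [← Finset.mul_prod_erase F _ hNF]
      field_simp
    · have hF' : F ⊆ Finset.Icc 1 N := by
        intro x hx
        have hx1 := hF hx
        have hx2 : x ≠ N+1 := fun hh => hNF (hh ▸ hx)
        simp only [Finset.mem_Icc] at hx1 ⊢
        omega
      have hb0 : (0:ℤ) ≤ ∑ k ∈ F, (n k : ℤ) := Finset.sum_nonneg (fun k _ => by positivity)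
      have hble := sumF_le_Sn (n := n) hm hF'
      have hC := ih _ hF'
      simp only [chat]
      have per : ∀ j ∈ J m (N+1), ∀ l ∈ J m (N+1),
          s m (N+1) j * s m (N+1) l *
            chat n m N (∑ k ∈ F, (n k : ℤ) + ((j:ℤ) - l) * n (N+1))
          = if l = j then s m (N+1) j * s m (N+1) l * ∏ k ∈ F, Real.cos (θ m k) else 0 := by
        intro j hj l hl
        by_cases hjl : l = j
        · subst hjl
          rw [if_pos rfl]
          have harg : ∑ k ∈ F, (n k : ℤ) + ((l:ℤ) - l) * n (N+1) = ∑ k ∈ F, (n k : ℤ) := by ring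
          rw [harg, hC]
        · rw [if_neg hjl]
          have hz : chat n m N (∑ k ∈ F, (n k : ℤ) + ((j:ℤ) - l) * n (N+1)) = 0 := by
            apply chat_eq_zero
            exact haux (by omega) hb0 (Sn_nonneg N) (by omega)
          rw [hz, mul_zero]
      rw [Finset.sum_congr rfl (fun j hj => Finset.sum_congr rfl (fun l hl => per j hj l hl))]
      have hinner : ∀ j ∈ J m (N+1),
          (∑ l ∈ J m (N+1), if l = j then s m (N+1) j * s m (N+1) l * ∏ k ∈ F, Real.cos (θ m k) else 0)
          = s m (N+1) j * s m (N+1) j * ∏ k ∈ F, Real.cos (θ m k) := by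
        intro j hj
        rw [Finset.sum_ite_eq' (J m (N+1)) j _, if_pos hj]
      rw [Finset.sum_congr rfl hinner]
      have hdiag : ∑ j ∈ J m (N+1), s m (N+1) j * s m (N+1) j * ∏ k ∈ F, Real.cos (θ m k)
          = S m (N+1) * ∏ k ∈ F, Real.cos (θ m k) := by
        rw [S, Finset.sum_mul]
        exact Finset.sum_congr rfl (fun j _ => by ring)
      rw [hdiag]
      field_simp
    
include hpos hm h1 in
lemma chat_gap (K : ℕ) (hK : 1 ≤ K) (b : ℤ) (hb1 : Sn n m K < b)
    (hb2 : b < n (K+1) - Sn n m K) : ∀ N, chat n m N b = 0 := by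
  intro N
  induction N with
  | zero =>
    have hSK := Sn_nonneg (n := n) (m := m) K
    have : b ≠ 0 := by omega
    simp [chat, this]
  | succ N ih =>
    by_cases hNK : N+1 ≤ K
    · apply chat_eq_zero
      have h3 := Sn_mono (n := n) (m := m) hNK
      have := Sn_nonneg (n := n) (m := m) (N+1)
      rw [abs_of_nonneg (by omega)]
      omega
    · have hKN : K ≤ N := by omega
      have hSnlt := Sn_lt (n := n) (m := m) hpos h1 N
      have hSKN := Sn_mono (n := n) (m := m) hKN
      have hSK0 := Sn_nonneg (n := n) (m := m) K
      have hbSn : b + Sn n m N < (n (N+1) : ℤ) := by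
        rcases Nat.eq_or_lt_of_le hKN with rfl | hlt
        · omega
        · have hterm := term_le_Sn (n := n) (m := m) hm
            (N := N) (k := K+1) (by simp only [Finset.mem_Icc]; omega)
          omega
      simp only [chat]
      rw [Finset.sum_eq_zero, mul_zero]
      intro j hj
      rw [Finset.sum_eq_zero]
      intro l hl
      by_cases hjl : l = j
      · subst hjl
        have harg : b + ((l:ℤ) - l) * n (N+1) = b := by ring
        rw [harg, ih, mul_zero]
      · have hz : chat n m N (b + ((j:ℤ) - l) * n (N+1)) = 0 := by
          apply chat_eq_zero
          exact haux (by omega) (by omega) (Sn_nonneg N) hbSn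
        rw [hz, mul_zero]

include hpos hm h1 in
lemma chat_zero (N : ℕ) : chat n m N 0 = 1 := by
  have := chat_sum hpos hm h1 N ∅ (by simp)
  simpa using this

end chatprop

section integrals

variable {n m : ℕ → ℕ} (hpos : ∀ k, 1 ≤ n k) (hm : ∀ k, 1 ≤ m k)
  (h1 : ∀ k, 1 ≤ k → 1 ≤ (n (k+1) : ℤ) - 2 * ∑ j ∈ Finset.Icc 1 k, (m j : ℤ) * n j)

lemma e_eq (M : ℤ) (t : ℝ) : e M t = Complex.exp ((2 * Real.pi * Complex.I * M) * t) := by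
  rw [e]

lemma e_cont (M : ℤ) : Continuous (e M) := by
  have h : e M = fun t : ℝ => Complex.exp ((2 * Real.pi * Complex.I * M) * t) :=
    funext (e_eq M)
  rw [h]
  exact Complex.continuous_exp.comp (continuous_const.mul Complex.continuous_ofReal)

lemma e_norm (M : ℤ) (t : ℝ) : ‖e M t‖ = 1 := by
  rw [e, Complex.norm_exp]
  have : (2 * Real.pi * Complex.I * M * t).re = 0 := by
    simp [Complex.mul_re, Complex.mul_im]
  rw [this, Real.exp_zero]

lemma e_zero (t : ℝ) : e 0 t = 1 := by simp [e]

lemma e_add (M M' : ℤ) (t : ℝ) : e M t * e M' t = e (M + M') t := by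
  rw [e, e, e, ← Complex.exp_add]
  congr 1
  push_cast
  ring

lemma e_conj (M : ℤ) (t : ℝ) : (starRingEnd ℂ) (e M t) = e (-M) t := by
  rw [e, e, ← Complex.exp_conj]
  congr 1
  simp only [map_mul, Complex.conj_I, Complex.conj_ofReal, map_ofNat, map_intCast]
  push_cast
  ring

lemma e_deriv (M : ℤ) (u : ℝ) :
    HasDerivAt (fun t => e M t) ((2 * Real.pi * Complex.I * M) * e M u) u := by
  simp only [e_eq]
  have h1 : HasDerivAt (fun t : ℝ => (t:ℂ)) 1 u := (hasDerivAt_id u).ofReal_comp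
  have h2 := (h1.const_mul (2 * Real.pi * Complex.I * (M:ℂ))).cexp
  simpa [mul_comm, mul_assoc, mul_left_comm] using h2

lemma g_cont (k : ℕ) : Continuous (g n m k) := by
  apply Continuous.div_const
  apply Complex.continuous_normSq.comp
  exact continuous_finset_sum _ (fun j _ => continuous_const.mul (e_cont _))

lemma g_nonneg (k : ℕ) (t : ℝ) : 0 ≤ g n m k t :=
  div_nonneg (Complex.normSq_nonneg _) (S_pos m k).le

lemma rho_cont (N : ℕ) : Continuous (ρ n m N) :=
  continuous_finset_prod _ (fun k _ => g_cont k)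

lemma rho_nonneg (N : ℕ) (t : ℝ) : 0 ≤ ρ n m N t :=
  Finset.prod_nonneg (fun k _ => g_nonneg k t)

lemma rho_intOn (N : ℕ) {a b : ℝ} (ha : 0 ≤ a) (hb : b ≤ 1) :
    IntegrableOn (fun t => ρ n m N t) (Set.Ioc a b) := by
  refine ((rho_cont N).integrableOn_Icc (a := 0) (b := 1)).mono_set ?_
  intro x hx
  exact ⟨le_trans ha hx.1.le, le_trans hx.2 hb⟩

lemma orth (M : ℤ) : ∫ t in Set.Ioc (0:ℝ) 1, e M t = if M = 0 then 1 else 0 := by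
  rw [← intervalIntegral.integral_of_le (zero_le_one)]
  by_cases hM : M = 0
  · subst hM; simp [e_zero]
  · rw [if_neg hM]
    have hc : (2 * Real.pi * Complex.I * M : ℂ) ≠ 0 := by
      simp [Real.pi_ne_zero, Complex.I_ne_zero, hM]
    have key := integral_exp_mul_complex (a := (0:ℝ)) (b := 1) hc
    simp only [e_eq]
    rw [key]
    have h1 : Complex.exp ((2 * Real.pi * Complex.I * M) * (1:ℝ)) = 1 := by
      rw [show ((2:ℂ) * Real.pi * Complex.I * M) * (1:ℝ) = (M:ℂ) * (2 * Real.pi * Complex.I) by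
        push_cast; ring]
      exact Complex.exp_int_mul_two_pi_mul_I M
    have h2 : Complex.exp ((2 * Real.pi * Complex.I * M) * (0:ℝ)) = 1 := by
      norm_num
    rw [h1, h2]
    simp

lemma normSq_expand (k : ℕ) (t : ℝ) :
    ((Complex.normSq (∑ j ∈ J m k, (s m k j : ℂ) * e (j * n k) t) : ℝ) : ℂ)
    = ∑ j ∈ J m k, ∑ l ∈ J m k, (s m k j : ℂ) * s m k l * e (((j:ℤ) - l) * n k) t := by
  rw [← Complex.mul_conj]
  rw [map_sum]
  rw [Finset.sum_mul_sum]
  refine Finset.sum_congr rfl (fun j _ => Finset.sum_congr rfl (fun l _ => ?_))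
  rw [map_mul, Complex.conj_ofReal, e_conj]
  calc (s m k j : ℂ) * e (j * n k) t * ((s m k l : ℂ) * e (-(l * n k : ℕ)) t)
      = (s m k j : ℂ) * s m k l * (e (j * n k) t * e (-(l * n k : ℕ)) t) := by ring
    _ = (s m k j : ℂ) * s m k l * e (((j:ℤ) - l) * n k) t := by
        rw [e_add]
        congr 2
        push_cast
        ring

lemma A_eq (N : ℕ) : ∀ M : ℤ, A n m N M = (chat n m N M : ℂ) := by
  induction N with
  | zero =>
    intro M
    have h0 : ∀ t : ℝ, e M t * (ρ n m 0 t : ℂ) = e M t := by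
      intro t; simp [ρ]
    rw [A, setIntegral_congr_fun measurableSet_Ioc (fun t _ => h0 t), orth]
    simp only [chat]
    split_ifs <;> norm_num
  | succ N ih =>
    intro M
    have hS := S_pos m (N+1)
    have hexp : ∀ t ∈ Set.Ioc (0:ℝ) 1, e M t * (ρ n m (N+1) t : ℂ)
        = ∑ j ∈ J m (N+1), ∑ l ∈ J m (N+1),
            (((S m (N+1))⁻¹ * s m (N+1) j * s m (N+1) l : ℝ) : ℂ) *
              (e (M + ((j:ℤ) - l) * n (N+1)) t * (ρ n m N t : ℂ)) := by
      intro t _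
      have hρ : ρ n m (N+1) t = ρ n m N t * g n m (N+1) t := by
        rw [ρ, ρ, Finset.prod_Icc_succ_top (by omega : 1 ≤ N + 1)]
      rw [hρ]
      push_cast
      rw [g, Complex.ofReal_div, normSq_expand]
      simp only [div_eq_mul_inv, Finset.sum_mul, Finset.mul_sum]
      refine Finset.sum_congr rfl (fun j _ => ?_)
      refine Finset.sum_congr rfl (fun l _ => ?_)
      rw [← e_add M (((j:ℤ) - l) * n (N+1)) t]
      ring
    have hint : ∀ j ∈ J m (N+1), ∀ l ∈ J m (N+1), IntegrableOn
        (fun t => (((S m (N+1))⁻¹ * s m (N+1) j * s m (N+1) l : ℝ) : ℂ) *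
          (e (M + ((j:ℤ) - l) * n (N+1)) t * (ρ n m N t : ℂ))) (Set.Ioc (0:ℝ) 1) := by
      intro j _ l _
      have hc : Continuous (fun t => (((S m (N+1))⁻¹ * s m (N+1) j * s m (N+1) l : ℝ) : ℂ) *
          (e (M + ((j:ℤ) - l) * n (N+1)) t * (ρ n m N t : ℂ))) :=
        continuous_const.mul ((e_cont _).mul (Complex.continuous_ofReal.comp (rho_cont N)))
      exact (hc.integrableOn_Icc (a := (0:ℝ)) (b := 1)).mono_set Set.Ioc_subset_Icc_self
    rw [A, setIntegral_congr_fun measurableSet_Ioc hexp]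
    rw [integral_finset_sum _ (fun j hj => (integrable_finset_sum _ (fun l hl => hint j hj l hl)))]
    have hswap : ∀ j ∈ J m (N+1),
        (∫ t in Set.Ioc (0:ℝ) 1, ∑ l ∈ J m (N+1),
          (((S m (N+1))⁻¹ * s m (N+1) j * s m (N+1) l : ℝ) : ℂ) *
            (e (M + ((j:ℤ) - l) * n (N+1)) t * (ρ n m N t : ℂ)))
        = ∑ l ∈ J m (N+1), (((S m (N+1))⁻¹ * s m (N+1) j * s m (N+1) l : ℝ) : ℂ) *
            (chat n m N (M + ((j:ℤ) - l) * n (N+1)) : ℂ) := by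
      intro j hj
      rw [integral_finset_sum _ (fun l hl => hint j hj l hl)]
      refine Finset.sum_congr rfl (fun l hl => ?_)
      rw [integral_const_mul, ← A, ih]
    rw [Finset.sum_congr rfl hswap]
    rw [show chat n m (N+1) M = (S m (N+1))⁻¹ * ∑ j ∈ J m (N+1), ∑ l ∈ J m (N+1),
        s m (N+1) j * s m (N+1) l * chat n m N (M + ((j:ℤ) - l) * n (N+1)) from rfl]
    push_cast
    rw [Finset.mul_sum]
    refine Finset.sum_congr rfl (fun j _ => ?_)
    rw [Finset.mul_sum]
    refine Finset.sum_congr rfl (fun l _ => ?_)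
    ring

include hpos hm h1 in
lemma rho_int (N : ℕ) : ∫ t in Set.Ioc (0:ℝ) 1, ρ n m N t = 1 := by
  have h := A_eq (n := n) (m := m) N 0
  rw [chat_zero hpos hm h1 N] at h
  have h2 : A n m N 0 = ((∫ t in Set.Ioc (0:ℝ) 1, ρ n m N t : ℝ) : ℂ) := by
    rw [A, setIntegral_congr_fun measurableSet_Ioc
      (fun t _ => by rw [e_zero, one_mul] : ∀ t ∈ Set.Ioc (0:ℝ) 1, e 0 t * (ρ n m N t : ℂ) = (ρ n m N t : ℂ))]
    exact integral_ofReal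
  rw [h2] at h
  exact_mod_cast h

lemma Fc_mono (N : ℕ) : Monotone (Fc n m N) := by
  intro t t' h
  rw [Fc, Fc]
  refine setIntegral_mono_set (rho_intOn N (le_refl 0) (min_le_right _ _)) ?_ ?_
  · exact Filter.Eventually.of_forall (fun x => rho_nonneg N x)
  · exact HasSubset.Subset.eventuallyLE
      (Set.Ioc_subset_Ioc_right (min_le_min_right 1 h))

include hpos hm h1 in
lemma Fc_mem (N : ℕ) (t : ℝ) : Fc n m N t ∈ Set.Icc (0:ℝ) 1 := by
  constructor
  · exact setIntegral_nonneg measurableSet_Ioc (fun x _ => rho_nonneg N x)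
  · have hle : Fc n m N t ≤ ∫ x in Set.Ioc (0:ℝ) 1, ρ n m N x := by
      refine setIntegral_mono_set (rho_intOn N (le_refl 0) (le_refl 1)) ?_ ?_
      · exact Filter.Eventually.of_forall (fun x => rho_nonneg N x)
      · exact HasSubset.Subset.eventuallyLE (Set.Ioc_subset_Ioc_right (min_le_right t 1))
    rw [rho_int hpos hm h1 N] at hle
    exact hle

lemma Fc_nonpos (N : ℕ) (t : ℝ) (ht : t ≤ 0) : Fc n m N t = 0 := by
  rw [Fc, Set.Ioc_eq_empty (by rw [not_lt]; exact le_trans (min_le_left t 1) ht)]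
  simp

include hpos hm h1 in
lemma Fc_one (N : ℕ) (t : ℝ) (ht : 1 ≤ t) : Fc n m N t = 1 := by
  rw [Fc, min_eq_right ht]
  exact rho_int hpos hm h1 N

include hpos hm h1 in
lemma ibpN (N : ℕ) (M : ℤ) :
    A n m N M = e M 1 - ∫ t in Set.Ioc (0:ℝ) 1, (2*Real.pi*Complex.I*M) * e M t * Fc n m N t := by
  set Fl : ℝ → ℝ := fun u => ∫ x in (0:ℝ)..u, ρ n m N x with hFl_def
  have hFl : ∀ u : ℝ, HasDerivAt Fl (ρ n m N u) u := by
    intro u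
    exact intervalIntegral.integral_hasDerivAt_right
      ((rho_cont N).intervalIntegrable _ _)
      ((rho_cont N).stronglyMeasurable.stronglyMeasurableAtFilter) (rho_cont N).continuousAt
  have hprod : ∀ u : ℝ, HasDerivAt (fun u => e M u * ((Fl u : ℝ) : ℂ))
      ((2*Real.pi*Complex.I*M) * e M u * Fl u + e M u * ρ n m N u) u := by
    intro u
    exact (e_deriv M u).mul ((hFl u).ofReal_comp)
  have hFlcont : Continuous Fl := continuous_iff_continuousAt.2 (fun u => (hFl u).continuousAt)
  have hderiv_int : IntervalIntegrable
      (fun u => (2*Real.pi*Complex.I*M) * e M u * Fl u + e M u * ρ n m N u) volume 0 1 :=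
    (((continuous_const.mul (e_cont M)).mul (Complex.continuous_ofReal.comp hFlcont)).add
      ((e_cont M).mul (Complex.continuous_ofReal.comp (rho_cont N)))).intervalIntegrable _ _
  have key := intervalIntegral.integral_eq_sub_of_hasDerivAt (a := (0:ℝ)) (b := 1)
    (fun u _ => hprod u) hderiv_int
  have hFl0 : Fl 0 = 0 := intervalIntegral.integral_same
  have hFl1 : Fl 1 = 1 := by
    rw [hFl_def]
    simp only []
    rw [intervalIntegral.integral_of_le zero_le_one]
    exact rho_int hpos hm h1 N
  have hsplit : (∫ u in (0:ℝ)..1, ((2*Real.pi*Complex.I*M) * e M u * Fl u + e M u * ρ n m N u))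
      = (∫ u in (0:ℝ)..1, (2*Real.pi*Complex.I*M) * e M u * Fl u)
        + ∫ u in (0:ℝ)..1, e M u * ρ n m N u := by
    apply intervalIntegral.integral_add
    · exact ((continuous_const.mul (e_cont M)).mul
        (Complex.continuous_ofReal.comp hFlcont)).intervalIntegrable _ _
    · exact ((e_cont M).mul (Complex.continuous_ofReal.comp (rho_cont N))).intervalIntegrable _ _
  rw [hsplit, hFl0, hFl1] at key
  simp only [Complex.ofReal_one, mul_one, Complex.ofReal_zero, mul_zero, sub_zero] at key
  have hA : A n m N M = ∫ u in (0:ℝ)..1, e M u * ρ n m N u := by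
    rw [A, intervalIntegral.integral_of_le zero_le_one]
  have hFleq : (∫ u in (0:ℝ)..1, (2*Real.pi*Complex.I*M) * e M u * Fl u)
      = ∫ t in Set.Ioc (0:ℝ) 1, (2*Real.pi*Complex.I*M) * e M t * Fc n m N t := by
    rw [intervalIntegral.integral_of_le zero_le_one]
    refine setIntegral_congr_fun measurableSet_Ioc (fun t ht => ?_)
    have h1t : Fl t = Fc n m N t := by
      rw [hFl_def, Fc, min_eq_left ht.2]
      simp only []
      rw [intervalIntegral.integral_of_le ht.1.le]
    rw [h1t]
  rw [hA, ← hFleq]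
  linear_combination key

end integrals


section helly

open Topology

/-- Helly selection: a sequence of CDF-like functions has a subsequence converging to a
Stieltjes function at all its continuity points. -/
lemma helly (G : ℕ → ℝ → ℝ) (hmono : ∀ N, Monotone (G N))
    (hmem : ∀ N t, G N t ∈ Set.Icc (0:ℝ) 1)
    (hzero : ∀ N, ∀ t ≤ 0, G N t = 0) (hone : ∀ N, ∀ t, 1 ≤ t → G N t = 1) :
    ∃ φ : ℕ → ℕ, StrictMono φ ∧ ∃ F : StieltjesFunction ℝ,
      (∀ t, F t ∈ Set.Icc (0:ℝ) 1) ∧ (∀ t < 0, F t = 0) ∧ (∀ t, 1 ≤ t → F t = 1) ∧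
      (∀ t, ContinuousAt F t → Tendsto (fun N => G (φ N) t) atTop (𝓝 (F t))) := by
  -- enumerate the rationals
  obtain ⟨q, hq⟩ : ∃ q : ℕ → ℚ, Function.Surjective q :=
    ⟨fun i => (Denumerable.eqv ℚ).symm i, fun r => ⟨(Denumerable.eqv ℚ) r, by simp⟩⟩
  -- subsequence converging at all rationals
  have hc : IsCompact (Set.pi Set.univ (fun _ : ℕ => Set.Icc (0:ℝ) 1)) :=
    isCompact_univ_pi (fun _ => isCompact_Icc)
  obtain ⟨L, hL, φ, hφ, hLt⟩ := hc.isSeqCompact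
    (x := fun N (i : ℕ) => G N (q i)) (fun N i _ => hmem N (q i))
  have hLmem : ∀ i, L i ∈ Set.Icc (0:ℝ) 1 := fun i => hL i (Set.mem_univ i)
  have hLt' : ∀ i, Tendsto (fun N => G (φ N) (q i)) atTop (𝓝 (L i)) := by
    intro i
    have := (continuous_apply i).continuousAt.tendsto.comp hLt
    exact this
  have hLmono : ∀ i i', (q i : ℝ) ≤ q i' → L i ≤ L i' := by
    intro i i' h
    exact le_of_tendsto_of_tendsto' (hLt' i) (hLt' i') (fun N => hmono (φ N) (by exact_mod_cast h))
  -- the candidate limit function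
  set Fl : ℝ → ℝ := fun t => sInf (L '' {i | t < q i}) with hFl_def
  have hne : ∀ t : ℝ, (L '' {i | t < (q i : ℝ)}).Nonempty := by
    intro t
    obtain ⟨r, hr⟩ := exists_rat_gt t
    obtain ⟨i, rfl⟩ := hq r
    exact ⟨L i, Set.mem_image_of_mem L hr⟩
  have hbdd : ∀ t : ℝ, BddBelow (L '' {i | t < (q i : ℝ)}) := by
    intro t
    exact ⟨0, fun x ⟨i, _, hxi⟩ => hxi ▸ (hLmem i).1⟩
  have hFl_le : ∀ t i, t < (q i : ℝ) → Fl t ≤ L i := by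
    intro t i h
    exact csInf_le (hbdd t) (Set.mem_image_of_mem L h)
  have hle_Fl : ∀ t i, (q i : ℝ) ≤ t → L i ≤ Fl t := by
    intro t i h
    refine le_csInf (hne t) ?_
    rintro x ⟨i', hi', rfl⟩
    exact hLmono i i' (by exact_mod_cast le_trans h (le_of_lt hi'))
  have hFlmono : Monotone Fl := by
    intro t t' h
    exact le_csInf (hne t') (fun x ⟨i, hi, hxi⟩ =>
      hxi ▸ csInf_le (hbdd t) (Set.mem_image_of_mem L (lt_of_le_of_lt h hi)))
  have hFlmem : ∀ t, Fl t ∈ Set.Icc (0:ℝ) 1 := by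
    intro t
    constructor
    · exact le_csInf (hne t) (fun x ⟨i, _, hxi⟩ => hxi ▸ (hLmem i).1)
    · obtain ⟨r, hr⟩ := exists_rat_gt t
      obtain ⟨i, rfl⟩ := hq r
      exact le_trans (hFl_le t i hr) (hLmem i).2
  have hFlzero : ∀ t < 0, Fl t = 0 := by
    intro t ht
    obtain ⟨r, hr1, hr2⟩ := exists_rat_btwn ht
    obtain ⟨i, rfl⟩ := hq r
    have hLi : L i = 0 := by
      have h0 : ∀ N, G (φ N) (q i) = 0 := fun N => hzero (φ N) _ (by exact_mod_cast hr2.le)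
      have := hLt' i
      rw [show (fun N => G (φ N) (q i)) = fun _ => (0:ℝ) from funext h0] at this
      exact tendsto_nhds_unique this tendsto_const_nhds
    exact le_antisymm (hLi ▸ hFl_le t i hr1) (hFlmem t).1
  have hFlone : ∀ t, 1 ≤ t → Fl t = 1 := by
    intro t ht
    obtain ⟨r, hr⟩ := exists_rat_gt t
    obtain ⟨i, rfl⟩ := hq r
    have h1i : ∀ i', t < (q i' : ℝ) → L i' = 1 := by
      intro i' hi'
      have h0 : ∀ N, G (φ N) (q i') = 1 :=
        fun N => hone (φ N) _ (by exact_mod_cast le_trans ht hi'.le)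
      have := hLt' i'
      rw [show (fun N => G (φ N) (q i')) = fun _ => (1:ℝ) from funext h0] at this
      exact tendsto_nhds_unique this tendsto_const_nhds
    refine le_antisymm (hFlmem t).2 ?_
    refine le_csInf (hne t) ?_
    rintro x ⟨i', hi', rfl⟩
    rw [h1i i' hi']
  -- right continuity
  have hFlright : ∀ t, ContinuousWithinAt Fl (Set.Ici t) t := by
    intro t
    rw [ContinuousWithinAt]
    refine tendsto_order.2 ⟨fun a ha => ?_, fun a ha => ?_⟩
    · filter_upwards [self_mem_nhdsWithin] with t' ht'
      exact lt_of_lt_of_le ha (hFlmono ht')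
    · obtain ⟨x, ⟨i, hi, rfl⟩, hxa⟩ := exists_lt_of_csInf_lt (hne t) ha
      have hmem' : Set.Iio (q i : ℝ) ∈ 𝓝[Set.Ici t] t :=
        nhdsWithin_le_nhds (Iio_mem_nhds hi)
      filter_upwards [hmem'] with t' ht'
      exact lt_of_le_of_lt (hFl_le t' i ht') hxa
  refine ⟨φ, hφ, ⟨Fl, hFlmono, hFlright⟩, hFlmem, hFlzero, hFlone, ?_⟩
  -- convergence at continuity points
  intro t hcont
  rw [Metric.tendsto_atTop]
  intro ε hε
  -- rational above
  have h1 : ∃ i, t < (q i : ℝ) ∧ L i < Fl t + ε / 2 := by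
    obtain ⟨x, ⟨i, hi, rfl⟩, hxa⟩ := exists_lt_of_csInf_lt (hne t)
      (by linarith : sInf (L '' {i | t < (q i : ℝ)}) < Fl t + ε / 2)
    exact ⟨i, hi, hxa⟩
  obtain ⟨i, hi, hLi⟩ := h1
  -- rational below
  have h2 : ∃ i', (q i' : ℝ) < t ∧ Fl t - ε / 2 < L i' := by
    have htend : Tendsto Fl (𝓝[<] t) (𝓝 (Fl t)) :=
      hcont.tendsto.mono_left nhdsWithin_le_nhds
    have ev : ∀ᶠ s in 𝓝[<] t, Fl t - ε / 2 < Fl s :=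
      htend.eventually (eventually_gt_nhds (by linarith))
    obtain ⟨sx, hs1, hs2⟩ := (ev.and self_mem_nhdsWithin).exists
    obtain ⟨r, hr1, hr2⟩ := exists_rat_btwn (hs2 : sx < t)
    obtain ⟨i', rfl⟩ := hq r
    exact ⟨i', hr2, lt_of_lt_of_le hs1 (hFl_le sx i' hr1)⟩
  obtain ⟨i', hi', hLi'⟩ := h2
  have hconv1 := Metric.tendsto_atTop.1 (hLt' i) (ε/2) (by linarith)
  have hconv2 := Metric.tendsto_atTop.1 (hLt' i') (ε/2) (by linarith)
  obtain ⟨N1, hN1⟩ := hconv1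
  obtain ⟨N2, hN2⟩ := hconv2
  refine ⟨max N1 N2, fun N hN => ?_⟩
  have e1 := hN1 N (le_trans (le_max_left _ _) hN)
  have e2 := hN2 N (le_trans (le_max_right _ _) hN)
  rw [Real.dist_eq, abs_lt] at e1 e2 ⊢
  have hup : G (φ N) t ≤ G (φ N) (q i) := hmono (φ N) hi.le
  have hdown : G (φ N) (q i') ≤ G (φ N) t := hmono (φ N) hi'.le
  have hLit : L i' ≤ Fl t := hle_Fl t i' hi'.le
  constructor
  · linarith
  · linarith

end helly

section transfer

open Topology

variable (F : StieltjesFunction ℝ) (hFmem : ∀ t, F t ∈ Set.Icc (0:ℝ) 1)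
  (hF0 : ∀ t < 0, F t = 0) (hF1 : ∀ t, 1 ≤ t → F t = 1)

include hF0 in
lemma F_tendsto_atBot : Tendsto F atBot (𝓝 0) := by
  refine Tendsto.congr' ?_ (tendsto_const_nhds (α := ℝ) (f := atBot))
  filter_upwards [eventually_lt_atBot (0:ℝ)] with t ht
  exact (hF0 t ht).symm

include hF1 in
lemma F_tendsto_atTop : Tendsto F atTop (𝓝 1) := by
  refine Tendsto.congr' ?_ (tendsto_const_nhds (α := ℝ) (f := atTop))
  filter_upwards [eventually_ge_atTop (1:ℝ)] with t ht
  exact (hF1 t ht).symm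

include hF0 hF1 in
lemma F_isProb : IsProbabilityMeasure F.measure :=
  F.isProbabilityMeasure (F_tendsto_atBot F hF0) (F_tendsto_atTop F hF1)

include hF0 in
lemma F_Iic (t : ℝ) : F.measure (Set.Iic t) = ENNReal.ofReal (F t) := by
  simpa using F.measure_Iic (F_tendsto_atBot F hF0) t

include hF0 in
lemma F_null_neg : F.measure (Set.Iio 0) = 0 := by
  have hcover : Set.Iio (0:ℝ) ⊆ ⋃ (j : ℕ), Set.Iic (-(1:ℝ)/(j+1)) := by
    intro x hx
    simp only [Set.mem_Iio] at hx
    obtain ⟨j, hj⟩ := exists_nat_gt (1/(-x))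
    refine Set.mem_iUnion.2 ⟨j, ?_⟩
    simp only [Set.mem_Iic]
    have hj' : 1/(-x) < (j:ℝ)+1 := by linarith
    rw [div_lt_iff₀ (by linarith)] at hj'
    have h5 : (1:ℝ)/(j+1) ≤ -x := by
      rw [div_le_iff₀ (by positivity)]
      nlinarith
    have h6 : -1/((j:ℝ)+1) = -(1/((j:ℝ)+1)) := by ring
    linarith [h6 ▸ le_refl (-1/((j:ℝ)+1))]
  refine measure_mono_null hcover (measure_iUnion_null (fun j => ?_))
  rw [F_Iic F hF0, hF0 _ (div_neg_of_neg_of_pos (by norm_num) (by positivity))]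
  simp

include hF0 hF1 in
lemma F_null_pos : F.measure (Set.Ioi 1) = 0 := by
  have hcover : Set.Ioi (1:ℝ) ⊆ ⋃ (j : ℕ), Set.Ioc 1 (1+j) := by
    intro x hx
    simp only [Set.mem_Ioi] at hx
    obtain ⟨j, hj⟩ := exists_nat_gt x
    exact Set.mem_iUnion.2 ⟨j, by simp only [Set.mem_Ioc]; constructor <;> linarith⟩
  refine measure_mono_null hcover (measure_iUnion_null (fun j => ?_))
  rw [F.measure_Ioc, hF1 _ (by linarith : (1:ℝ) ≤ 1 + j), hF1 _ le_rfl]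
  simp

include hF0 hF1 in
lemma F_ae_Icc : ∀ᵐ x ∂F.measure, x ∈ Set.Icc (0:ℝ) 1 := by
  rw [ae_iff]
  have hset : {x : ℝ | ¬ x ∈ Set.Icc (0:ℝ) 1} = Set.Iio 0 ∪ Set.Ioi 1 := by
    ext x
    simp only [Set.mem_setOf_eq, Set.mem_Icc, not_and_or, not_le, Set.mem_union,
      Set.mem_Iio, Set.mem_Ioi]
  rw [hset]
  exact measure_union_null (F_null_neg F hF0) (F_null_pos F hF0 hF1)

lemma dM_int (M : ℤ) {a b : ℝ} (hab : a ≤ b) :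
    ∫ t in a..b, (2*Real.pi*Complex.I*M) * e M t = e M b - e M a := by
  have h := intervalIntegral.integral_eq_sub_of_hasDerivAt (a := a) (b := b)
    (f := fun u => e M u) (fun u _ => e_deriv M u)
    ((continuous_const.mul (e_cont M)).intervalIntegrable _ _)
  exact h

lemma FTCx (M : ℤ) {x : ℝ} (hx : x ∈ Set.Icc (0:ℝ) 1) :
    ∫ t in Set.Ioc (0:ℝ) 1 ∩ Set.Ici x, (2*Real.pi*Complex.I*M) * e M t = e M 1 - e M x := by
  rcases eq_or_lt_of_le hx.1 with rfl | hx0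
  · have hss : Set.Ioc (0:ℝ) 1 ∩ Set.Ici 0 = Set.Ioc 0 1 :=
      Set.inter_eq_left.2 (fun t (ht : t ∈ Set.Ioc (0:ℝ) 1) => le_of_lt ht.1)
    rw [hss, ← intervalIntegral.integral_of_le zero_le_one]
    exact dM_int M zero_le_one
  · have hset : Set.Ioc (0:ℝ) 1 ∩ Set.Ici x = Set.Icc x 1 := by
      ext t
      simp only [Set.mem_inter_iff, Set.mem_Ioc, Set.mem_Ici, Set.mem_Icc]
      constructor
      · rintro ⟨⟨_, h2⟩, h3⟩; exact ⟨h3, h2⟩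
      · rintro ⟨h3, h2⟩; exact ⟨⟨lt_of_lt_of_le hx0 h3, h2⟩, h3⟩
    rw [hset, MeasureTheory.integral_Icc_eq_integral_Ioc,
      ← intervalIntegral.integral_of_le hx.2]
    exact dM_int M hx.2

include hFmem hF0 hF1 in
lemma transfer (M : ℤ) :
    ∫ x, e M x ∂F.measure
      = e M 1 - ∫ t in Set.Ioc (0:ℝ) 1, (2*Real.pi*Complex.I*M) * e M t * F t := by
  haveI : IsProbabilityMeasure F.measure := F_isProb F hF0 hF1
  set ν : Measure ℝ := volume.restrict (Set.Ioc (0:ℝ) 1) with hν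
  haveI : IsFiniteMeasure ν := by
    constructor
    rw [hν, Measure.restrict_apply_univ, Real.volume_Ioc]
    simp
  set H : ℝ → ℝ → ℂ := fun x t => if x ≤ t then (2*Real.pi*Complex.I*M) * e M t else 0 with hH
  have hHmeas : AEStronglyMeasurable (Function.uncurry H) (F.measure.prod ν) := by
    have h1 : Function.uncurry H = Set.indicator {p : ℝ × ℝ | p.1 ≤ p.2}
        (fun p => (2*Real.pi*Complex.I*M) * e M p.2) := by
      funext p
      rw [Set.indicator_apply]
      rfl
    rw [h1]
    exact (Measurable.indicator
      ((continuous_const.mul (e_cont M)).measurable.comp measurable_snd)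
      (measurableSet_le measurable_fst measurable_snd)).aestronglyMeasurable
  have hHbdd : ∀ x t, ‖H x t‖ ≤ 2 * Real.pi * |(M:ℝ)| := by
    intro x t
    rw [hH]
    simp only []
    split_ifs
    · rw [norm_mul, e_norm, mul_one]
      have : ‖(2*Real.pi*Complex.I*(M:ℂ) : ℂ)‖ = 2 * Real.pi * |(M:ℝ)| := by
        rw [norm_mul, norm_mul, norm_mul]
        simp [Complex.norm_real, Real.pi_nonneg, abs_of_nonneg, Complex.norm_intCast]
      rw [this]
    · simp
      positivity
  have hHint : Integrable (Function.uncurry H) (F.measure.prod ν) := by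
    refine (integrable_const (2 * Real.pi * |(M:ℝ)|)).mono' hHmeas ?_
    exact Filter.Eventually.of_forall (fun p => hHbdd p.1 p.2)
  -- step 1 : pointwise FTC
  have step1 : ∫ x, e M x ∂F.measure
      = ∫ x, (e M 1 - ∫ t, H x t ∂ν) ∂F.measure := by
    refine integral_congr_ae ?_
    filter_upwards [F_ae_Icc F hF0 hF1] with x hx
    have hinner : ∫ t, H x t ∂ν = e M 1 - e M x := by
      have h2 : ∫ t, H x t ∂ν = ∫ t in Set.Ioc (0:ℝ) 1 ∩ Set.Ici x,
          (2*Real.pi*Complex.I*M) * e M t := by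
        rw [hν]
        have h3 : ∀ t : ℝ, H x t = Set.indicator (Set.Ici x)
            (fun t => (2*Real.pi*Complex.I*M) * e M t) t := by
          intro t
          rw [Set.indicator_apply, hH]
          rfl
        rw [show (fun t => H x t) = fun t => Set.indicator (Set.Ici x)
            (fun t => (2*Real.pi*Complex.I*M) * e M t) t from funext h3]
        rw [integral_indicator measurableSet_Ici, Measure.restrict_restrict measurableSet_Ici,
          Set.inter_comm]
      rw [h2, FTCx M hx]
    rw [hinner]
    ring
  -- step 2 : split and swap
  rw [step1]
  have hint2 : Integrable (fun x => ∫ t, H x t ∂ν) F.measure := by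
    have h := hHint.integral_prod_left
    simpa using h
  rw [integral_sub (integrable_const _) hint2]
  rw [integral_const, probReal_univ, one_smul]
  congr 1
  rw [integral_integral_swap hHint]
  refine integral_congr_ae (Filter.Eventually.of_forall (fun t => ?_))
  have hin : ∫ x, H x t ∂F.measure = ((F.measure (Set.Iic t)).toReal : ℂ) *
      ((2*Real.pi*Complex.I*M) * e M t) := by
    have h4 : ∀ x : ℝ, H x t = Set.indicator (Set.Iic t)
        (fun _ => (2*Real.pi*Complex.I*M) * e M t) x := by
      intro x
      rw [Set.indicator_apply, hH]
      rfl
    rw [show (fun x => H x t) = fun x => Set.indicator (Set.Iic t)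
        (fun _ => (2*Real.pi*Complex.I*M) * e M t) x from funext h4]
    rw [integral_indicator_const _ measurableSet_Iic]
    simp [smul_eq_mul, measureReal_def]
  show ∫ x, H x t ∂F.measure = 2 * Real.pi * Complex.I * M * e M t * ((F t : ℝ) : ℂ)
  rw [hin, F_Iic F hF0, ENNReal.toReal_ofReal (hFmem t).1]
  ring

end transfer

end RP

theorem stmt9 (n m : ℕ → ℕ) (hmono : StrictMono n) (hpos : ∀ k, 1 ≤ n k)
    (hm : ∀ k, 1 ≤ m k)
    (h1 : ∀ k, 1 ≤ k → 1 ≤ (n (k+1) : ℤ) - 2 * ∑ j ∈ Finset.Icc 1 k, (m j : ℤ) * n j)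
    (h2 : Filter.Tendsto (fun k => (n (k+1) : ℤ) - 2 * ∑ j ∈ Finset.Icc 1 k, (m j : ℤ) * n j)
      Filter.atTop Filter.atTop) :
    ∃ σ : Measure Circle, IsProbabilityMeasure σ ∧ (∀ z : Circle, σ {z} = 0) ∧
      ∀ F : Finset ℕ, F.Nonempty → (∀ k ∈ F, 1 ≤ k) →
        fourierCoef σ (∑ k ∈ F, n k) = ∏ k ∈ F, (Real.cos (Real.pi / (m k + 2)) : ℂ) := by
  classical
  obtain ⟨φ, hφ, F, hFmem, hF0, hF1, hFconv⟩ := RP.helly (RP.Fc n m)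
    (fun N => RP.Fc_mono N) (fun N t => RP.Fc_mem hpos hm h1 N t)
    (fun N t ht => RP.Fc_nonpos N t ht) (fun N t ht => RP.Fc_one hpos hm h1 N t ht)
  haveI hPμ : IsProbabilityMeasure F.measure := RP.F_isProb F hF0 hF1
  set cmap : ℝ → Circle := fun t => Circle.exp (2 * Real.pi * t) with hcmap_def
  have hcmap : Continuous cmap := Circle.exp.continuous.comp (continuous_const.mul continuous_id)
  set σ : Measure Circle := F.measure.map cmap with hσ_def
  haveI hPσ : IsProbabilityMeasure σ := Measure.isProbabilityMeasure_map hcmap.aemeasurable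
  have hcoe : Continuous (fun z : Circle => (z : ℂ)) := continuous_subtype_val
  have hpow : ∀ (p : ℕ) (t : ℝ), ((cmap t : ℂ)) ^ p = RP.e p t := by
    intro p t
    rw [hcmap_def]
    simp only [Circle.coe_exp]
    rw [← Complex.exp_nat_mul, RP.e]
    congr 1
    push_cast
    ring
  have hfour : ∀ p : ℕ, fourierCoef σ p = ∫ x, RP.e p x ∂F.measure := by
    intro p
    rw [fourierCoef, hσ_def]
    refine (integral_map hcmap.aemeasurable ?_).trans ?_
    · exact (hcoe.pow p).aestronglyMeasurable
    exact integral_congr_ae (Filter.Eventually.of_forall fun t => hpow p t)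
  have hDCT : ∀ p : ℕ, Tendsto (fun N => ∫ t in Set.Ioc (0:ℝ) 1,
      (2*Real.pi*Complex.I*(p:ℤ)) * RP.e p t * RP.Fc n m (φ N) t) atTop
      (nhds (∫ t in Set.Ioc (0:ℝ) 1, (2*Real.pi*Complex.I*(p:ℤ)) * RP.e p t * F t)) := by
    intro p
    refine tendsto_integral_of_dominated_convergence
      (fun _ => ‖(2*Real.pi*Complex.I*((p:ℤ):ℂ) : ℂ)‖) ?_ ?_ ?_ ?_
    · intro N
      refine ((continuous_const.mul (RP.e_cont p)).aestronglyMeasurable).mul ?_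
      exact (Complex.measurable_ofReal.comp
        (RP.Fc_mono (n := n) (m := m) (φ N)).measurable).aestronglyMeasurable
    · exact integrable_const _
    · intro N
      refine Filter.Eventually.of_forall (fun t => ?_)
      rw [norm_mul, norm_mul, RP.e_norm, mul_one]
      have hb := RP.Fc_mem hpos hm h1 (φ N) t
      rw [Complex.norm_real, Real.norm_eq_abs, abs_of_nonneg hb.1]
      nlinarith [norm_nonneg (2*Real.pi*Complex.I*((p:ℤ):ℂ) : ℂ), hb.2]
    · have hD : ∀ᵐ t ∂(volume.restrict (Set.Ioc (0:ℝ) 1)), ContinuousAt F t := by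
        rw [ae_iff]
        exact le_antisymm (le_trans (Measure.restrict_le_self _)
          (by rw [(F.mono'.countable_not_continuousAt).measure_zero])) zero_le
      filter_upwards [hD] with t hct
      exact Tendsto.const_mul _ ((Complex.continuous_ofReal.tendsto _).comp (hFconv t hct))
  have hmaster : ∀ p : ℕ, Tendsto (fun N => ((RP.chat n m (φ N) (p:ℤ) : ℝ) : ℂ)) atTop
      (nhds (fourierCoef σ p)) := by
    intro p
    have heq : ∀ N, ((RP.chat n m (φ N) (p:ℤ) : ℝ) : ℂ)
        = RP.e p 1 - ∫ t in Set.Ioc (0:ℝ) 1,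
            (2*Real.pi*Complex.I*(p:ℤ)) * RP.e p t * RP.Fc n m (φ N) t := by
      intro N
      rw [← RP.A_eq, RP.ibpN hpos hm h1]
    have hval : fourierCoef σ p = RP.e p 1 - ∫ t in Set.Ioc (0:ℝ) 1,
        (2*Real.pi*Complex.I*(p:ℤ)) * RP.e p t * F t := by
      rw [hfour p, RP.transfer F hFmem hF0 hF1 p]
    rw [hval]
    simp only [heq]
    exact tendsto_const_nhds.sub (hDCT p)
  refine ⟨σ, hPσ, ?_, ?_⟩
  · -- no atoms, via Wiener-type argument
    intro z
    set LK : ℕ → ℕ := fun K =>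
      ((n (K+1) : ℤ) - 2 * RP.Sn n m K - 1).toNat with hLK_def
    set aK : ℕ → ℕ := fun K => (RP.Sn n m K).toNat + 1 with haK_def
    have hSn_def : ∀ K : ℕ, RP.Sn n m K = ∑ j ∈ Finset.Icc 1 K, (m j : ℤ) * n j :=
      fun _ => rfl
    have hgap : ∀ K, 1 ≤ K → ∀ i, i < LK K → fourierCoef σ (aK K + i) = 0 := by
      intro K hK i hi
      have hSnn := RP.Sn_nonneg (n := n) (m := m) K
      have h1K := h1 K hK
      rw [← hSn_def K] at h1K
      have hiz : (i : ℤ) < (n (K+1) : ℤ) - 2 * RP.Sn n m K - 1 := by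
        rw [hLK_def] at hi
        exact Int.lt_toNat.1 (by exact_mod_cast hi)
      have hpz : ((aK K + i : ℕ) : ℤ) = RP.Sn n m K + 1 + i := by
        rw [haK_def]
        push_cast
        rw [Int.toNat_of_nonneg hSnn]
      have hzero : ∀ N, RP.chat n m N ((aK K + i : ℕ) : ℤ) = 0 := by
        refine RP.chat_gap hpos hm h1 K hK _ ?_ ?_
        · rw [hpz]; omega
        · rw [hpz]; omega
      have hlim := hmaster (aK K + i)
      simp only [hzero, Complex.ofReal_zero] at hlim
      exact tendsto_nhds_unique hlim tendsto_const_nhds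
    have hLtend : Tendsto (fun K => LK K) atTop atTop := by
      refine tendsto_atTop.2 (fun b => ?_)
      filter_upwards [h2.eventually_ge_atTop ((b:ℤ)+1)] with K hb
      rw [hLK_def]
      simp only []
      rw [← hSn_def K] at hb
      have hnn : (0:ℤ) ≤ (n (K+1) : ℤ) - 2 * RP.Sn n m K - 1 := by omega
      exact (Int.le_toNat hnn).2 (by omega)
    set gK : ℕ → Circle → ℂ := fun K w =>
      ((LK K : ℂ))⁻¹ * ∑ i ∈ Finset.range (LK K), ((w * z⁻¹ : Circle) : ℂ)^(aK K + i)
      with hgK_def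
    have hgcont : ∀ K, Continuous (gK K) := by
      intro K
      refine continuous_const.mul (continuous_finset_sum _ (fun i _ => ?_))
      exact (hcoe.comp ((continuous_id.mul continuous_const))).pow _
    have hgnorm : ∀ K w, ‖gK K w‖ ≤ 1 := by
      intro K w
      rw [hgK_def]
      simp only []
      rw [norm_mul]
      have h5 : ‖∑ i ∈ Finset.range (LK K), ((w * z⁻¹ : Circle) : ℂ)^(aK K + i)‖
          ≤ (LK K : ℝ) := by
        refine le_trans (norm_sum_le _ _) ?_
        rw [show (LK K : ℝ) = ∑ _i ∈ Finset.range (LK K), (1:ℝ) by simp]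
        refine Finset.sum_le_sum (fun i _ => ?_)
        rw [norm_pow]
        simp [Circle.norm_coe]
      rcases Nat.eq_zero_or_pos (LK K) with h0 | h0
      · rw [h0]; simp
      · have : ‖((LK K : ℂ))⁻¹‖ = ((LK K : ℝ))⁻¹ := by
          rw [norm_inv]
          simp
        rw [this]
        calc ((LK K : ℝ))⁻¹ * ‖∑ i ∈ Finset.range (LK K), ((w * z⁻¹ : Circle) : ℂ)^(aK K + i)‖
            ≤ ((LK K : ℝ))⁻¹ * (LK K : ℝ) := by
              refine mul_le_mul_of_nonneg_left h5 (by positivity)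
          _ = 1 := by
              rw [inv_mul_cancel₀]
              have hpos0 : (0:ℝ) < (LK K : ℝ) := by exact_mod_cast h0
              exact hpos0.ne'
    have hgint : ∀ K, 1 ≤ K → ∫ w, gK K w ∂σ = 0 := by
      intro K hK
      rw [hgK_def]
      simp only []
      rw [integral_const_mul]
      rw [integral_finset_sum]
      · rw [Finset.sum_eq_zero, mul_zero]
        intro i hi
        have hsplit : ∀ w : Circle, ((w * z⁻¹ : Circle) : ℂ)^(aK K + i)
            = (w : ℂ)^(aK K + i) * (((z⁻¹ : Circle) : ℂ))^(aK K + i) := by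
          intro w
          rw [show ((w * z⁻¹ : Circle) : ℂ) = (w : ℂ) * ((z⁻¹ : Circle) : ℂ) by push_cast; ring]
          rw [mul_pow]
        rw [integral_congr_ae (Filter.Eventually.of_forall hsplit), integral_mul_const]
        rw [show (∫ w : Circle, (w : ℂ)^(aK K + i) ∂σ) = fourierCoef σ (aK K + i) from rfl]
        rw [hgap K hK i (Finset.mem_range.1 hi), zero_mul]
      · intro i _
        refine (integrable_const (1:ℝ)).mono'
          (((hcoe.comp ((continuous_id.mul continuous_const))).pow _).aestronglyMeasurable) ?_
        refine Filter.Eventually.of_forall (fun w => ?_)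
        rw [norm_pow]
        simp [Circle.norm_coe]
    have hDCT2 : Tendsto (fun K => ∫ w, gK K w ∂σ) atTop
        (nhds (∫ w, Set.indicator {z} (fun _ => (1:ℂ)) w ∂σ)) := by
      refine tendsto_integral_of_dominated_convergence (fun _ => 1) ?_ ?_ ?_ ?_
      · exact fun K => (hgcont K).aestronglyMeasurable
      · exact integrable_const _
      · exact fun K => Filter.Eventually.of_forall (fun w => hgnorm K w)
      · refine Filter.Eventually.of_forall (fun w => ?_)
        by_cases hw : w = z
        · subst hw
          have hone : ∀ K, 1 ≤ LK K → gK K w = 1 := by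
            intro K hLKpos
            rw [hgK_def]
            simp only []
            have hcoe1 : ((w * w⁻¹ : Circle) : ℂ) = 1 := by
              rw [mul_inv_cancel]
              push_cast
              rfl
            rw [show (fun i => ((w * w⁻¹ : Circle) : ℂ)^(aK K + i)) = fun _ => (1:ℂ) from
              funext (fun i => by rw [hcoe1, one_pow])]
            rw [Finset.sum_const, Finset.card_range, nsmul_eq_mul, mul_one, inv_mul_cancel₀]
            exact Nat.cast_ne_zero.2 (by omega)
          have hval1 : Set.indicator {w} (fun _ => (1:ℂ)) w = 1 := by simp
          rw [hval1]
          refine Tendsto.congr' ?_ tendsto_const_nhds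
          filter_upwards [hLtend.eventually_ge_atTop 1] with K hLKpos
          exact (hone K hLKpos).symm
        · have hζ : ((w * z⁻¹ : Circle) : ℂ) ≠ 1 := by
            intro hcoeeq
            apply hw
            have h7 : (w * z⁻¹ : Circle) = 1 := Subtype.ext (by rw [hcoeeq]; simp)
            rw [mul_inv_eq_one] at h7
            exact h7
          have hζn : ‖((w * z⁻¹ : Circle) : ℂ)‖ = 1 := by simp [Circle.norm_coe]
          have hind : Set.indicator {z} (fun _ => (1:ℂ)) w = 0 := by simp [hw]
          rw [hind]
          have hbound : ∀ K, ‖gK K w‖ ≤ (LK K : ℝ)⁻¹ * (2 / ‖((w * z⁻¹ : Circle) : ℂ) - 1‖) := by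
            intro K
            rw [hgK_def]
            simp only []
            rw [norm_mul]
            have hsum2 : ∑ i ∈ Finset.range (LK K), ((w * z⁻¹ : Circle) : ℂ)^(aK K + i)
                = ((w * z⁻¹ : Circle) : ℂ)^(aK K) *
                  ((((w * z⁻¹ : Circle) : ℂ)^(LK K) - 1)/(((w * z⁻¹ : Circle) : ℂ) - 1)) := by
              rw [← geom_sum_eq hζ (LK K), Finset.mul_sum]
              exact Finset.sum_congr rfl (fun i _ => by rw [pow_add])
            rw [hsum2, norm_mul, norm_pow, hζn, one_pow, one_mul, norm_div]
            have hnum : ‖((w * z⁻¹ : Circle) : ℂ)^(LK K) - 1‖ ≤ 2 := by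
              refine le_trans (norm_sub_le _ _) ?_
              rw [norm_pow, hζn, one_pow, norm_one]
              norm_num
            have hninv : ‖((LK K : ℂ))⁻¹‖ = ((LK K : ℝ))⁻¹ := by
              rw [norm_inv]
              simp
            rw [hninv]
            gcongr
          have hsq := (tendsto_inv_atTop_nhds_zero_nat.comp hLtend).mul_const
            (2 / ‖((w * z⁻¹ : Circle) : ℂ) - 1‖)
          rw [zero_mul] at hsq
          exact squeeze_zero_norm hbound hsq
    have hindint : ∫ w, Set.indicator {z} (fun _ => (1:ℂ)) w ∂σ = ((σ {z}).toReal : ℂ) := by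
      rw [integral_indicator_const _ (measurableSet_singleton z)]
      simp [smul_eq_mul, measureReal_def]
    rw [hindint] at hDCT2
    have hzero2 : ((σ {z}).toReal : ℂ) = 0 :=
      tendsto_nhds_unique hDCT2 (tendsto_const_nhds.congr'
        ((eventually_ge_atTop 1).mono (fun K hK => (hgint K hK).symm)))
    have hzero3 : (σ {z}).toReal = 0 := by exact_mod_cast hzero2
    rcases (ENNReal.toReal_eq_zero_iff _).1 hzero3 with h | h
    · exact h
    · exact absurd h (measure_ne_top σ _)
  · -- the Fourier coefficients
    intro Fs hFs hFs1
    have hev : ∀ᶠ N in atTop, ((RP.chat n m (φ N) ((∑ k ∈ Fs, n k : ℕ) : ℤ) : ℝ) : ℂ)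
        = ∏ k ∈ Fs, (Real.cos (Real.pi / (m k + 2)) : ℂ) := by
      filter_upwards [eventually_ge_atTop (Fs.sup id)] with N hN
      have hsub : Fs ⊆ Finset.Icc 1 (φ N) := by
        intro k hk
        simp only [Finset.mem_Icc]
        exact ⟨hFs1 k hk, le_trans (Finset.le_sup (f := id) hk) (le_trans hN hφ.le_apply)⟩
      rw [show ((∑ k ∈ Fs, n k : ℕ) : ℤ) = ∑ k ∈ Fs, ((n k : ℕ) : ℤ) by push_cast; rfl]
      rw [RP.chat_sum hpos hm h1 (φ N) Fs hsub]
      push_cast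
      simp [RP.θ]
    exact tendsto_nhds_unique (hmaster _) (tendsto_const_nhds.congr' (hev.mono fun N h => h.symm))
end

section
/- Suppose Σ_{k≥1}(n_k/n_{k+1})² < 1/36 with (n_k) strictly increasing, n_k ≥ 1. Then there exists a sequence (ε_k) with ε_1 = 0, 0 < ε_k < 1/2 for k ≥ 2, ε_k → 0, and Σ_{k≥1} ((1/ε_{k+1})(n_k/n_{k+1}))² < 1/9; moreover for m_k = ⌊(ε_{k+1} n_{k+1} − ε_k n_k)/(2n_k)⌋ each m_k is a positive integer and n_{k+1} − 2 Σ_{j=1}^k m_j n_j ≥ (1 − ε_{k+1}) n_{k+1}. -/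
set_option maxHeartbeats 2000000 in
theorem stmt11 (n : ℕ → ℕ) (hmono : StrictMono n) (hpos : ∀ k, 1 ≤ n k)
    (hsum : Summable fun k => ((n k : ℝ) / n (k+1)) ^ 2)
    (hlt : (∑' k, ((n k : ℝ) / n (k+1)) ^ 2) < 1/36) :
    ∃ ε : ℕ → ℝ, ε 0 = 0 ∧ (∀ k, 1 ≤ k → 0 < ε k ∧ ε k < 1/2) ∧
      Filter.Tendsto ε Filter.atTop (nhds 0) ∧
      (Summable fun k => ((1 / ε (k+1)) * ((n k : ℝ) / n (k+1))) ^ 2) ∧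
      (∑' k, ((1 / ε (k+1)) * ((n k : ℝ) / n (k+1))) ^ 2) < 1/9 ∧
      (∀ k, 1 ≤ ⌊(ε (k+1) * n (k+1) - ε k * n k) / (2 * n k)⌋) ∧
      (∀ k, (1 - ε (k+1)) * n (k+1) ≤
        (n (k+1) : ℝ) - 2 * ∑ j ∈ Finset.range (k+1),
          (⌊(ε (j+1) * n (j+1) - ε j * n j) / (2 * n j)⌋ : ℝ) * n j) := by
  classical
  obtain ⟨a, ha_def⟩ : ∃ a : ℕ → ℝ, a = fun k => ((n k : ℝ) / n (k+1)) ^ 2 := ⟨_, rfl⟩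
  have hsuma : Summable a := by rw [ha_def]; exact hsum
  have hn : ∀ k, (0:ℝ) < n k := fun k => by exact_mod_cast Nat.lt_of_lt_of_le Nat.zero_lt_one (hpos k)
  have hapos : ∀ k, 0 < a k := fun k => by
    rw [ha_def]
    exact pow_pos (div_pos (hn k) (hn (k+1))) 2
  obtain ⟨c, hc_def⟩ : ∃ c : ℝ, c = ∑' k, a k := ⟨_, rfl⟩
  have hc0 : 0 < c := by
    rw [hc_def]
    exact Summable.tsum_pos hsuma (fun i => (hapos i).le) 0 (hapos 0)
  have hc36 : c < 1/36 := by rw [hc_def, ha_def]; exact hlt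
  obtain ⟨S, hS_def⟩ : ∃ S : ℕ → ℝ, S = fun k => ∑' i, a (i + k) := ⟨_, rfl⟩
  have hSsum : ∀ k, Summable (fun i => a (i + k)) := fun k => (summable_nat_add_iff k).2 hsuma
  have hSrec : ∀ k, S k = a k + S (k+1) := by
    intro k
    have h1 : ∑' i, a (i + k) = a (0 + k) + ∑' i, a (i + 1 + k) := Summable.tsum_eq_zero_add (hSsum k)
    simp only [zero_add] at h1
    rw [hS_def]
    simp only
    rw [h1]
    congr 1
    apply tsum_congr
    intro i
    congr 1
    ring
  have hSnn : ∀ k, 0 ≤ S k := fun k => by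
    rw [hS_def]; exact tsum_nonneg (fun i => (hapos _).le)
  have hSpos : ∀ k, 0 < S k := by
    intro k
    have h1 := hSrec k
    have h2 := hapos k
    have h3 := hSnn (k+1)
    linarith
  have hSle : ∀ k, S k ≤ c := by
    intro k
    have h := (Summable.sum_add_tsum_nat_add k hsuma : ∑ i ∈ Finset.range k, a i + ∑' i, a (i + k) = ∑' i, a i)
    have hnn : 0 ≤ ∑ i ∈ Finset.range k, a i := Finset.sum_nonneg (fun i _ => (hapos i).le)
    have h2 : S k = ∑' i, a (i + k) := by rw [hS_def]
    rw [h2, hc_def]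
    linarith
  have haS : ∀ k, a k ≤ S k := by
    intro k
    have := hSrec k
    have := hSnn (k+1)
    linarith
  have hSc : ∀ k, S k < 1/36 := fun k => lt_of_le_of_lt (hSle k) hc36
  have hStend : Filter.Tendsto S Filter.atTop (nhds 0) := by
    have hps : Filter.Tendsto (fun k => ∑ i ∈ Finset.range k, a i) Filter.atTop (nhds c) := by
      rw [hc_def]
      exact hsuma.hasSum.tendsto_sum_nat
    have heq : ∀ k, S k = c - ∑ i ∈ Finset.range k, a i := by
      intro k
      have h := (Summable.sum_add_tsum_nat_add k hsuma : ∑ i ∈ Finset.range k, a i + ∑' i, a (i + k) = ∑' i, a i)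
      have h2 : S k = ∑' i, a (i + k) := by rw [hS_def]
      rw [h2, hc_def]
      linarith
    have h3 : Filter.Tendsto (fun k => c - ∑ i ∈ Finset.range k, a i) Filter.atTop (nhds (c - c)) :=
      Filter.Tendsto.sub tendsto_const_nhds hps
    rw [sub_self] at h3
    exact h3.congr (fun k => (heq k).symm)
  obtain ⟨β, hβ_def⟩ : ∃ β : ℝ, β = (1 + 36*c)/2 := ⟨_, rfl⟩
  have hβ0 : 0 < β := by rw [hβ_def]; linarith
  have hβ1 : β < 1 := by rw [hβ_def]; linarith
  have h36c : 36*c < β := by rw [hβ_def]; linarith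
  obtain ⟨e, he_def⟩ : ∃ e : ℝ, e = (1 - β)/2 := ⟨_, rfl⟩
  have he0 : 0 < e := by rw [he_def]; linarith
  have hcb_pos : 0 < c ^ β := Real.rpow_pos_of_pos hc0 β
  have hcb1_pos : 0 < c ^ (β-1) := Real.rpow_pos_of_pos hc0 (β-1)
  have hcb_eq : c ^ β = c ^ (β-1) * c := by
    rw [← Real.rpow_add_one hc0.ne' (β-1)]
    congr 1
    ring
  have hgap : 9 * c ^ β / β < c ^ (β-1) / 4 := by
    rw [hcb_eq, div_lt_div_iff₀ hβ0 (by norm_num : (0:ℝ) < 4)]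
    nlinarith [mul_lt_mul_of_pos_left h36c hcb1_pos]
  obtain ⟨μ, hμ_def⟩ : ∃ μ : ℝ, μ = Real.sqrt ((9 * c ^ β / β + c ^ (β-1) / 4) / 2) := ⟨_, rfl⟩
  have hμsq_pos : 0 < (9 * c ^ β / β + c ^ (β-1) / 4) / 2 := by
    have h1 : 0 < 9 * c ^ β / β := by positivity
    have h2 : 0 < c ^ (β-1) / 4 := by positivity
    linarith
  have hμ0 : 0 < μ := by rw [hμ_def]; exact Real.sqrt_pos.mpr hμsq_pos
  have hμ2 : μ ^ 2 = (9 * c ^ β / β + c ^ (β-1) / 4) / 2 := by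
    rw [hμ_def]
    exact Real.sq_sqrt hμsq_pos.le
  have hμlow : 9 * c ^ β / β < μ ^ 2 := by rw [hμ2]; linarith
  have hμhigh : μ ^ 2 < c ^ (β-1) / 4 := by rw [hμ2]; linarith
  obtain ⟨ε, hε_def⟩ : ∃ ε : ℕ → ℝ,
      ε = fun k => Nat.casesOn k (0:ℝ) (fun j => max (3 * Real.sqrt (a j)) (μ * S j ^ e)) :=
    ⟨_, rfl⟩
  have hε0 : ε 0 = 0 := by rw [hε_def]; rfl
  have hεs : ∀ k, ε (k+1) = max (3 * Real.sqrt (a k)) (μ * S k ^ e) := fun k => by rw [hε_def]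
  have hεpos : ∀ k, 0 < ε (k+1) := by
    intro k
    rw [hεs k]
    have h1 : 0 < 3 * Real.sqrt (a k) := by
      have := Real.sqrt_pos.mpr (hapos k)
      linarith
    exact lt_max_of_lt_left h1
  have hsqrt16 : Real.sqrt (1/36 : ℝ) = 1/6 := by
    rw [show (1/36:ℝ) = (1/6)^2 by norm_num, Real.sqrt_sq (by norm_num : (0:ℝ) ≤ 1/6)]
  have hce2 : (c ^ e) ^ 2 = c ^ (1 - β) := by
    rw [sq, ← Real.rpow_add hc0]
    congr 1
    rw [he_def]; ring
  have hcc1 : c ^ (β - 1) * c ^ (1 - β) = 1 := by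
    rw [← Real.rpow_add hc0]
    norm_num
  have hεlt : ∀ k, ε (k+1) < 1/2 := by
    intro k
    rw [hεs k]
    apply max_lt
    · have h1 : a k < 1/36 := lt_of_le_of_lt (haS k) (hSc k)
      have h2 : Real.sqrt (a k) < 1/6 := by
        calc Real.sqrt (a k) < Real.sqrt (1/36) := Real.sqrt_lt_sqrt (hapos k).le h1
          _ = 1/6 := hsqrt16
      linarith
    · have hSe : S k ^ e ≤ c ^ e := Real.rpow_le_rpow (hSnn k) (hSle k) he0.le
      have hsq : (μ * c ^ e) ^ 2 < (1/2:ℝ)^2 := by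
        have h1 : (μ * c ^ e)^2 = μ^2 * c ^ (1-β) := by rw [mul_pow, hce2]
        rw [h1]
        have h4 : μ^2 * c^(1-β) < c^(β-1)/4 * c^(1-β) :=
          mul_lt_mul_of_pos_right hμhigh (Real.rpow_pos_of_pos hc0 _)
        have h5 : c^(β-1)/4 * c^(1-β) = 1/4 := by
          rw [div_mul_eq_mul_div, hcc1]
        rw [h5] at h4
        nlinarith
      have hlt2 : μ * c ^ e < 1/2 := by
        have hnn : 0 ≤ μ * c ^ e := by positivity
        nlinarith
      calc μ * S k ^ e ≤ μ * c ^ e := mul_le_mul_of_nonneg_left hSe hμ0.le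
        _ < 1/2 := hlt2
  have hεle1 : ∀ k, ε k ≤ 1 := by
    intro k
    cases k with
    | zero => rw [hε0]; norm_num
    | succ j => linarith [hεlt j]
  -- key concavity inequality
  have hkey : ∀ k, a k * S k ^ (β-1) ≤ (S k ^ β - S (k+1) ^ β) / β := by
    intro k
    have hx : 0 < S k := hSpos k
    have hy : 0 < S (k+1) := hSpos (k+1)
    have haxy : a k = S k - S (k+1) := by have := hSrec k; linarith
    have hyoung : (S (k+1) / S k) ^ β * (1:ℝ) ^ (1-β) ≤ β * (S (k+1) / S k) + (1-β) * 1 :=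
      Real.geom_mean_le_arith_mean2_weighted hβ0.le (by linarith) (div_nonneg hy.le hx.le)
        zero_le_one (by ring)
    rw [Real.one_rpow, mul_one, mul_one] at hyoung
    have hxb_ne : (S k) ^ β ≠ 0 := (Real.rpow_pos_of_pos hx β).ne'
    have h4 : S (k+1) ^ β ≤ (β * (S (k+1) / S k) + (1-β)) * S k ^ β := by
      have h := mul_le_mul_of_nonneg_right hyoung (Real.rpow_nonneg hx.le β)
      rwa [Real.div_rpow hy.le hx.le, div_mul_cancel₀ _ hxb_ne] at h
    have hxb1 : S k ^ β = S k ^ (β-1) * S k := by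
      rw [← Real.rpow_add_one hx.ne' (β-1)]
      congr 1
      ring
    have h5 : (β * (S (k+1) / S k) + (1-β)) * S k ^ β
        = β * S (k+1) * S k ^ (β-1) + (1-β) * S k ^ β := by
      rw [hxb1]
      field_simp
    rw [h5] at h4
    have h6 : (S k - S (k+1)) * S k ^ (β-1) * β
        = β * S k ^ β - β * S (k+1) * S k ^ (β-1) := by
      rw [hxb1]; ring
    rw [haxy, le_div_iff₀ hβ0]
    linarith [h4, h6]
  -- per-term bound
  obtain ⟨b, hb_def⟩ : ∃ b : ℕ → ℝ, b = fun k => (S k ^ β - S (k+1) ^ β) / (β * μ^2) :=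
    ⟨_, rfl⟩
  have hterm : ∀ k, ((1 / ε (k+1)) * ((n k:ℝ) / n (k+1)))^2 ≤ b k := by
    intro k
    have hme : 0 < μ * S k ^ e := mul_pos hμ0 (Real.rpow_pos_of_pos (hSpos k) e)
    have hle : μ * S k ^ e ≤ ε (k+1) := by rw [hεs k]; exact le_max_right _ _
    have heq1 : ((1 / ε (k+1)) * ((n k:ℝ) / n (k+1)))^2 = a k / (ε (k+1))^2 := by
      simp only [ha_def]
      rw [mul_pow, div_pow, one_pow, one_div, inv_mul_eq_div]
    rw [heq1]
    have h1 : a k / (ε (k+1))^2 ≤ a k / (μ * S k ^ e)^2 := by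
      apply div_le_div_of_nonneg_left (hapos k).le (by positivity)
      exact pow_le_pow_left₀ hme.le hle 2
    have h2 : (μ * S k ^ e)^2 = μ^2 * S k ^ (1-β) := by
      rw [mul_pow, sq (S k ^ e), ← Real.rpow_add (hSpos k)]
      congr 2
      rw [he_def]; ring
    have h3 : a k / (μ * S k ^ e)^2 = a k * S k ^ (β-1) / μ^2 := by
      rw [h2, show (β - 1 : ℝ) = -(1-β) by ring, Real.rpow_neg (hSnn k)]
      ring
    have h4 : a k * S k ^ (β-1) / μ^2 ≤ ((S k ^ β - S (k+1) ^ β) / β) / μ^2 := by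
      exact (div_le_div_iff_of_pos_right (by positivity)).mpr (hkey k)
    have h5 : ((S k ^ β - S (k+1) ^ β) / β) / μ^2 = b k := by
      rw [hb_def]
      simp only
      rw [div_div]
    calc a k / (ε (k+1))^2 ≤ a k / (μ * S k ^ e)^2 := h1
      _ = a k * S k ^ (β-1) / μ^2 := h3
      _ ≤ ((S k ^ β - S (k+1) ^ β) / β) / μ^2 := h4
      _ = b k := h5
  obtain ⟨B, hB_def⟩ : ∃ B : ℝ, B = c ^ β / (β * μ^2) := ⟨_, rfl⟩
  have hbμ : 0 < β * μ^2 := by positivity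
  have hBlt : B < 1/9 := by
    rw [hB_def, div_lt_iff₀ hbμ]
    rw [div_lt_iff₀ hβ0] at hμlow
    linarith [hμlow]
  have hS0c : S 0 = c := by
    rw [hS_def, hc_def]
    apply tsum_congr
    intro i
    simp
  have hpartialb : ∀ K, ∑ k ∈ Finset.range K, b k ≤ B := by
    intro K
    have hsum_eq : ∑ k ∈ Finset.range K, b k = (S 0 ^ β - S K ^ β) / (β * μ^2) := by
      calc ∑ k ∈ Finset.range K, b k
          = ∑ k ∈ Finset.range K,
            (S k ^ β / (β * μ^2) - S (k+1) ^ β / (β * μ^2)) := by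
            apply Finset.sum_congr rfl
            intro k _
            rw [hb_def]
            simp only
            rw [div_sub_div_same]
        _ = S 0 ^ β / (β * μ^2) - S K ^ β / (β * μ^2) :=
            Finset.sum_range_sub' (fun k => S k ^ β / (β * μ^2)) K
        _ = (S 0 ^ β - S K ^ β) / (β * μ^2) := (sub_div _ _ _).symm
    rw [hsum_eq, hS0c, hB_def]
    have h1 : 0 ≤ S K ^ β := Real.rpow_nonneg (hSnn K) β
    exact (div_le_div_iff_of_pos_right hbμ).mpr (by linarith)
  have hpartial2 : ∀ K, ∑ k ∈ Finset.range K, ((1 / ε (k+1)) * ((n k:ℝ) / n (k+1)))^2 ≤ B := by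
    intro K
    calc ∑ k ∈ Finset.range K, ((1 / ε (k+1)) * ((n k:ℝ) / n (k+1)))^2
        ≤ ∑ k ∈ Finset.range K, b k := Finset.sum_le_sum (fun k _ => hterm k)
      _ ≤ B := hpartialb K
  have hsummable : Summable fun k => ((1 / ε (k+1)) * ((n k : ℝ) / n (k+1))) ^ 2 :=
    summable_of_sum_range_le (fun k => sq_nonneg _) hpartial2
  have htsum : (∑' k, ((1 / ε (k+1)) * ((n k : ℝ) / n (k+1))) ^ 2) < 1/9 :=
    lt_of_le_of_lt (Summable.tsum_le_of_sum_range_le hsummable hpartial2) hBlt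
  -- tendsto
  have hεtend : Filter.Tendsto ε Filter.atTop (nhds 0) := by
    rw [← Filter.tendsto_add_atTop_iff_nat 1]
    have h1 : Filter.Tendsto (fun k => 3 * Real.sqrt (a k)) Filter.atTop (nhds 0) := by
      have ha0 : Filter.Tendsto a Filter.atTop (nhds 0) := hsuma.tendsto_atTop_zero
      have h2 : Filter.Tendsto (fun k => Real.sqrt (a k)) Filter.atTop (nhds (Real.sqrt 0)) :=
        (Real.continuous_sqrt.tendsto 0).comp ha0
      rw [Real.sqrt_zero] at h2
      have h3 := h2.const_mul (3:ℝ)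
      simpa using h3
    have h2 : Filter.Tendsto (fun k => μ * S k ^ e) Filter.atTop (nhds 0) := by
      have h3 : Filter.Tendsto (fun k => S k ^ e) Filter.atTop (nhds ((0:ℝ) ^ e)) :=
        hStend.rpow_const (Or.inr he0.le)
      rw [Real.zero_rpow he0.ne'] at h3
      have h4 := h3.const_mul μ
      simpa using h4
    have h5 : Filter.Tendsto (fun k => 3 * Real.sqrt (a k) + μ * S k ^ e)
        Filter.atTop (nhds 0) := by
      have h6 := h1.add h2
      simpa using h6
    apply tendsto_of_tendsto_of_tendsto_of_le_of_le tendsto_const_nhds h5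
    · intro k
      exact (hεpos k).le
    · intro k
      show ε (k+1) ≤ 3 * Real.sqrt (a k) + μ * S k ^ e
      rw [hεs k]
      apply max_le_add_of_nonneg
      · positivity
      · have := Real.rpow_nonneg (hSnn k) e
        positivity
  -- floor condition
  have hsqrt_a : ∀ k, Real.sqrt (a k) = (n k : ℝ) / n (k+1) := by
    intro k
    rw [ha_def]
    exact Real.sqrt_sq (div_nonneg (hn k).le (hn (k+1)).le)
  have hfloor : ∀ k, 1 ≤ ⌊(ε (k+1) * n (k+1) - ε k * n k) / (2 * n k)⌋ := by
    intro k
    rw [Int.le_floor]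
    push_cast
    rw [le_div_iff₀ (by have := hn k; linarith : (0:ℝ) < 2 * n k)]
    have hA : 3 * (n k : ℝ) ≤ ε (k+1) * n (k+1) := by
      have h1 : 3 * Real.sqrt (a k) ≤ ε (k+1) := by rw [hεs k]; exact le_max_left _ _
      have h2 := mul_le_mul_of_nonneg_right h1 (hn (k+1)).le
      rw [hsqrt_a k, mul_assoc, div_mul_cancel₀ _ (hn (k+1)).ne'] at h2
      linarith
    have hB2 : ε k * n k ≤ n k := by
      have h1 := hεle1 k
      nlinarith [hn k]
    linarith
  -- last condition
  have hlast : ∀ k, (1 - ε (k+1)) * n (k+1) ≤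
      (n (k+1) : ℝ) - 2 * ∑ j ∈ Finset.range (k+1),
        (⌊(ε (j+1) * n (j+1) - ε j * n j) / (2 * n j)⌋ : ℝ) * n j := by
    intro k
    have hstep : ∀ j, (⌊(ε (j+1) * n (j+1) - ε j * n j) / (2 * n j)⌋ : ℝ) * n j
        ≤ (ε (j+1) * n (j+1) - ε j * n j) / 2 := by
      intro j
      have hfl : (⌊(ε (j+1) * n (j+1) - ε j * n j) / (2 * n j)⌋ : ℝ)
          ≤ (ε (j+1) * n (j+1) - ε j * n j) / (2 * n j) := Int.floor_le _
      have h1 := mul_le_mul_of_nonneg_right hfl (hn j).le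
      calc (⌊(ε (j+1) * n (j+1) - ε j * n j) / (2 * n j)⌋ : ℝ) * n j
          ≤ (ε (j+1) * n (j+1) - ε j * n j) / (2 * n j) * n j := h1
        _ = (ε (j+1) * n (j+1) - ε j * n j) / 2 := by
            rw [div_mul_eq_mul_div, mul_comm (2:ℝ) (n j : ℝ), ← div_div,
              mul_div_assoc, div_self (hn j).ne', mul_one]
    have hsum_le : ∑ j ∈ Finset.range (k+1),
        (⌊(ε (j+1) * n (j+1) - ε j * n j) / (2 * n j)⌋ : ℝ) * n j
        ≤ ∑ j ∈ Finset.range (k+1), (ε (j+1) * n (j+1) - ε j * n j) / 2 :=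
      Finset.sum_le_sum (fun j _ => hstep j)
    have htel : ∑ j ∈ Finset.range (k+1), (ε (j+1) * n (j+1) - ε j * n j)
        = ε (k+1) * n (k+1) := by
      rw [Finset.sum_range_sub (fun j => ε j * n j), hε0]
      ring
    have h2 : ∑ j ∈ Finset.range (k+1), (ε (j+1) * n (j+1) - ε j * n j) / 2
        = ε (k+1) * n (k+1) / 2 := by
      rw [← Finset.sum_div, htel]
    rw [h2] at hsum_le
    nlinarith [hsum_le]
  refine ⟨ε, hε0, ?_, hεtend, hsummable, htsum, hfloor, hlast⟩
  intro k hk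
  obtain ⟨j, rfl⟩ : ∃ j, k = j + 1 := ⟨k - 1, by omega⟩
  exact ⟨hεpos j, hεlt j⟩
end

section
/- There exists a strictly increasing sequence (n_k) of positive integers such that the group G_2((n_k)) = {λ ∈ T : Σ_k |λ^{n_k}−1|² < ∞} is uncountable, yet no continuous probability measure on T is IP-Dirichlet with respect to (n_k). -/
set_option maxHeartbeats 1000000

open MeasureTheory Finset Filter

namespace Stmt16
open Real


def bb (i : ℕ) : ℕ := (i+2)^2
def blk (k : ℕ) : ℕ := Nat.log 2 (k+16) - 4
def pos' (k : ℕ) : ℕ := k + 17 - 2^(Nat.log 2 (k+16))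
def nn (k : ℕ) : ℕ := pos' k * 2^(bb (blk k))
def idx (i j : ℕ) : ℕ := 2^(i+4) + j - 17

lemma bb_succ (i : ℕ) : bb (i+1) = bb i + (2*i + 5) := by simp [bb]; ring

lemma log_k (k : ℕ) : Nat.log 2 (k+16) = blk k + 4 := by
  have h4 : 4 ≤ Nat.log 2 (k+16) :=
    Nat.le_log_of_pow_le (by norm_num) (by norm_num : 2^4 ≤ k+16)
  simp only [blk]; omega

lemma blk_lb (k : ℕ) : 2^(blk k + 4) ≤ k + 16 := by
  have := Nat.pow_log_le_self 2 (x := k+16) (by omega)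
  rwa [log_k] at this

lemma blk_ub (k : ℕ) : k + 16 < 2^(blk k + 5) := by
  have := Nat.lt_pow_succ_log_self (b := 2) (by norm_num) (k+16)
  rwa [log_k] at this

lemma pos'_eq (k : ℕ) : pos' k = k + 17 - 2^(blk k + 4) := by rw [pos', log_k]

lemma pos'_lb (k : ℕ) : 1 ≤ pos' k := by
  have := blk_lb k; rw [pos'_eq]; omega

lemma pos'_ub (k : ℕ) : pos' k ≤ 2^(blk k + 4) := by
  have h1 := blk_ub k
  have h2 : 2^(blk k + 5) = 2 * 2^(blk k + 4) := by ring
  rw [pos'_eq]; omega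

lemma nn_eq (k : ℕ) : nn k = (k + 17 - 2^(blk k + 4)) * 2^(bb (blk k)) := by
  rw [nn, pos'_eq]

lemma pow_ge_16 (i : ℕ) : 16 ≤ 2^(i+4) := by
  calc (16:ℕ) = 2^4 := by norm_num
  _ ≤ 2^(i+4) := Nat.pow_le_pow_right (by norm_num) (by omega)

lemma idx_16 {i j : ℕ} (h1 : 1 ≤ j) : idx i j + 16 = 2^(i+4) + j - 1 := by
  have := pow_ge_16 i
  simp only [idx]; omega

lemma blk_idx {i j : ℕ} (h1 : 1 ≤ j) (h2 : j ≤ 2^(i+4)) : blk (idx i j) = i := by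
  have h16 := pow_ge_16 i
  have hlog : Nat.log 2 (idx i j + 16) = i + 4 := by
    apply Nat.log_eq_of_pow_le_of_lt_pow
    · rw [idx_16 h1]; omega
    · rw [idx_16 h1]
      have : 2^(i+4+1) = 2 * 2^(i+4) := by ring
      omega
  simp only [blk, hlog]; omega

lemma pos'_idx {i j : ℕ} (h1 : 1 ≤ j) (h2 : j ≤ 2^(i+4)) : pos' (idx i j) = j := by
  have h16 := pow_ge_16 i
  rw [pos'_eq, blk_idx h1 h2, idx]
  omega

lemma nn_idx {i j : ℕ} (h1 : 1 ≤ j) (h2 : j ≤ 2^(i+4)) : nn (idx i j) = j * 2^(bb i) := by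
  rw [nn, pos'_idx h1 h2, blk_idx h1 h2]

lemma nn_strictMono : StrictMono nn := by
  apply strictMono_nat_of_lt_succ
  intro k
  have hlb := blk_lb k
  have hub := blk_ub k
  have hp1 := pos'_lb k
  have hp2 := pos'_ub k
  by_cases hc : k + 17 < 2^(blk k + 5)
  · -- same block
    have hlog : Nat.log 2 (k+1+16) = blk k + 4 := by
      have h5 : 2^(blk k + 4 + 1) = 2^(blk k + 5) := by ring_nf
      apply Nat.log_eq_of_pow_le_of_lt_pow <;> omega
    have hblk : blk (k+1) = blk k := by simp only [blk, hlog]; omega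
    have hpos : pos' (k+1) = pos' k + 1 := by
      simp only [pos'_eq, hblk]; omega
    rw [nn, nn, hblk, hpos]
    have : (0:ℕ) < 2^(bb (blk k)) := Nat.pow_pos (by norm_num)
    exact (Nat.mul_lt_mul_right this).mpr (by omega)
  · -- boundary: k+17 = 2^(blk k+5)
    have hb : k + 17 = 2^(blk k + 5) := by omega
    have hlog : Nat.log 2 (k+1+16) = blk k + 5 := by
      apply Nat.log_eq_of_pow_le_of_lt_pow
      · omega
      · have : 2^(blk k + 5 + 1) = 2 * 2^(blk k + 5) := by ring
        omega
    have hblk : blk (k+1) = blk k + 1 := by simp only [blk, hlog]; omega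
    have hpos : pos' (k+1) = 1 := by
      have heq : 2^(blk k + 1 + 4) = 2^(blk k + 5) := by ring_nf
      simp only [pos'_eq, hblk, heq]; omega
    rw [nn, nn, hblk, hpos, one_mul]
    calc pos' k * 2^(bb (blk k)) ≤ 2^(blk k + 4) * 2^(bb (blk k)) :=
          Nat.mul_le_mul_right _ hp2
    _ = 2^(bb (blk k) + (blk k + 4)) := by rw [← pow_add]; ring_nf
    _ < 2^(bb (blk k + 1)) := by
        apply Nat.pow_lt_pow_right (by norm_num)
        rw [bb_succ]; omega

lemma nn_pos (k : ℕ) : 1 ≤ nn k := by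
  rw [nn]
  have h1 := pos'_lb k
  have h2 : 0 < 2^(bb (blk k)) := Nat.pow_pos (by norm_num)
  exact Nat.mul_pos h1 h2


lemma nn_def (k : ℕ) : nn k = pos' k * 2^(bb (blk k)) := rfl
lemma bb_mono : Monotone bb := fun a b h => Nat.pow_le_pow_left (by omega) 2

lemma bb_ge (i : ℕ) : i ≤ bb i := by
  have h : bb i = (i+2)*(i+2) := sq (i+2)
  nlinarith [h]

lemma two_mul_pow (a b c : ℕ) (h : b + c = a + 1) : 2*2^a = 2^b*2^c := by
  rw [← pow_add, h, pow_succ]; ring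

lemma fill (L : ℕ) : ∀ m, 1 ≤ m → 2*m ≤ L*(L+1) →
    ∃ G : Finset ℕ, G.Nonempty ∧ (∀ j ∈ G, 1 ≤ j ∧ j ≤ L) ∧ ∑ j ∈ G, j = m := by
  induction L with
  | zero => intro m h1 h2; omega
  | succ L ih =>
    intro m h1 h2
    by_cases hm : m ≤ L + 1
    · exact ⟨{m}, ⟨m, by simp⟩, by intro j hj; simp at hj; omega, by simp⟩
    · have hkey : (L+1)*(L+1+1) = L*(L+1) + 2*(L+1) := by ring
      obtain ⟨G, hne, hmem, hsum⟩ := ih (m - (L+1)) (by omega) (by omega)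
      have hnotin : L+1 ∉ G := fun h => by have := hmem _ h; omega
      refine ⟨insert (L+1) G, ⟨L+1, mem_insert_self _ _⟩, ?_, ?_⟩
      · intro j hj
        rcases mem_insert.mp hj with h | h
        · omega
        · have := hmem j h; omega
      · rw [Finset.sum_insert hnotin, hsum]; omega

lemma blockRep (i m : ℕ) (h1 : 1 ≤ m) (h2 : 2*m ≤ 2^(i+4)*(2^(i+4)+1)) :
    ∃ F : Finset ℕ, F.Nonempty ∧ (∀ k ∈ F, 2^(i+4) ≤ k + 16 ∧ k + 16 < 2^(i+5)) ∧
      ∑ k ∈ F, nn k = m * 2^(bb i) := by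
  obtain ⟨G, hne, hmem, hsum⟩ := fill (2^(i+4)) m h1 h2
  have h16 := pow_ge_16 i
  have hinj : ∀ x ∈ G, ∀ y ∈ G, idx i x = idx i y → x = y := by
    intro x hx y hy hxy
    have hx1 := (hmem x hx).1
    have hy1 := (hmem y hy).1
    have ex := idx_16 (i := i) hx1
    have ey := idx_16 (i := i) hy1
    omega
  refine ⟨G.image (idx i), hne.image _, ?_, ?_⟩
  · intro k hk
    obtain ⟨j, hj, rfl⟩ := Finset.mem_image.mp hk
    obtain ⟨hj1, hj2⟩ := hmem j hj
    have h5 : 2^(i+5) = 2*2^(i+4) := by rw [pow_succ]; ring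
    rw [idx_16 hj1]
    omega
  · rw [Finset.sum_image hinj]
    calc ∑ j ∈ G, nn (idx i j) = ∑ j ∈ G, j * 2^(bb i) :=
          Finset.sum_congr rfl (fun j hj => nn_idx (hmem j hj).1 (hmem j hj).2)
    _ = (∑ j ∈ G, j) * 2^(bb i) := by rw [Finset.sum_mul]
    _ = m * 2^(bb i) := by rw [hsum]

lemma mainRep (i₀ : ℕ) : ∀ N, ∀ m, 1 ≤ m → m * 2^(bb i₀) ≤ 2^(bb (i₀+N+1) + 2) →
    ∃ F : Finset ℕ, F.Nonempty ∧ (∀ k ∈ F, 2^(i₀+4) ≤ k + 16 ∧ k + 16 < 2^(i₀+N+5)) ∧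
      ∑ k ∈ F, nn k = m * 2^(bb i₀) := by
  intro N
  induction N with
  | zero =>
    intro m h1 h2
    simp only [Nat.add_zero] at h2 ⊢
    have hbs : bb (i₀+1) = bb i₀ + (2*i₀+5) := bb_succ i₀
    have h2' : m * 2^(bb i₀) ≤ 2^(2*i₀+7) * 2^(bb i₀) := by
      calc m * 2^(bb i₀) ≤ 2^(bb (i₀+1) + 2) := h2
      _ = 2^(2*i₀+7) * 2^(bb i₀) := by rw [← pow_add]; congr 1; omega
    have hm : m ≤ 2^(2*i₀+7) :=
      Nat.le_of_mul_le_mul_right h2' (Nat.pow_pos (by norm_num))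
    have hmm : 2*m ≤ 2^(i₀+4)*(2^(i₀+4)+1) := by
      have e1 : 2*2^(2*i₀+7) = 2^(i₀+4)*2^(i₀+4) := two_mul_pow _ _ _ (by omega)
      nlinarith [Nat.pow_pos (n := i₀+4) (show 0 < 2 by norm_num)]
    obtain ⟨F, hne, hmem, hsum⟩ := blockRep i₀ m h1 hmm
    exact ⟨F, hne, fun k hk => hmem k hk, hsum⟩
  | succ N ih =>
    intro m h1 h2
    rw [show i₀+(N+1)+1 = (i₀+N+1)+1 from by omega] at h2
    simp only [show i₀+(N+1)+5 = i₀+N+6 from by omega]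
    have hpow56 : 2^(i₀+N+5) ≤ 2^(i₀+N+6) := Nat.pow_le_pow_right (by norm_num) (by omega)
    by_cases hsm : m * 2^(bb i₀) ≤ 2^(bb (i₀+N+1) + 2)
    · obtain ⟨F, hne, hmem, hsum⟩ := ih m h1 hsm
      refine ⟨F, hne, fun k hk => ⟨(hmem k hk).1, ?_⟩, hsum⟩
      have := (hmem k hk).2
      omega
    · push_neg at hsm
      have hble : bb i₀ ≤ bb (i₀+N+1) := bb_mono (by omega)
      obtain ⟨e, hbe⟩ : ∃ e, bb (i₀+N+1) = bb i₀ + e := ⟨bb (i₀+N+1) - bb i₀, by omega⟩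
      have hepos : 0 < 2^e := Nat.pow_pos (by norm_num)
      have hqt : 2^e * (m / 2^e) + m % 2^e = m := Nat.div_add_mod m (2^e)
      have htlt : m % 2^e < 2^e := Nat.mod_lt _ hepos
      have hm4 : 2^(e+2) < m := by
        have hh : 2^(bb (i₀+N+1) + 2) = 2^(e+2) * 2^(bb i₀) := by
          rw [← pow_add]; congr 1; omega
        rw [hh] at hsm
        exact lt_of_mul_lt_mul_right hsm (Nat.zero_le _)
      have hq1 : 1 ≤ m / 2^e := by
        have h22 : 2^e ≤ 2^(e+2) := Nat.pow_le_pow_right (by norm_num) (by omega)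
        exact (Nat.one_le_div_iff hepos).mpr (by omega)
      have hΔ : bb ((i₀+N+1)+1) = bb (i₀+N+1) + (2*(i₀+N+1)+5) := bb_succ (i₀+N+1)
      have hqub : m / 2^e ≤ 2^(2*(i₀+N+1)+7) := by
        have h3 : m / 2^e * 2^e ≤ m := Nat.div_mul_le_self m (2^e)
        have h4 : m / 2^e * (2^e * 2^(bb i₀)) ≤ 2^(bb ((i₀+N+1)+1) + 2) := by
          rw [← mul_assoc]
          calc m / 2^e * 2^e * 2^(bb i₀) ≤ m * 2^(bb i₀) := Nat.mul_le_mul_right _ h3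
          _ ≤ 2^(bb ((i₀+N+1)+1) + 2) := h2
        have h5 : 2^(bb ((i₀+N+1)+1) + 2) = 2^(2*(i₀+N+1)+7) * (2^e * 2^(bb i₀)) := by
          rw [← pow_add, ← pow_add]; congr 1; omega
        rw [h5] at h4
        exact Nat.le_of_mul_le_mul_right h4 (by positivity)
      have hq2 : 2*(m / 2^e) ≤ 2^((i₀+N+1)+4)*(2^((i₀+N+1)+4)+1) := by
        have e1 : 2*2^(2*(i₀+N+1)+7) = 2^((i₀+N+1)+4)*2^((i₀+N+1)+4) :=
          two_mul_pow _ _ _ (by omega)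
        nlinarith [Nat.pow_pos (n := (i₀+N+1)+4) (show 0 < 2 by norm_num)]
      obtain ⟨F₂, hne₂, hmem₂, hsum₂⟩ := blockRep (i₀+N+1) (m / 2^e) hq1 hq2
      have hsum₂' : ∑ k ∈ F₂, nn k = (2^e * (m / 2^e)) * 2^(bb i₀) := by
        rw [hsum₂, hbe, pow_add]; ring
      have hlow₂ : ∀ k ∈ F₂, 2^(i₀+4) ≤ k + 16 ∧ k + 16 < 2^(i₀+N+6) := by
        intro k hk
        have ha := (hmem₂ k hk).1
        have hb := (hmem₂ k hk).2
        have hc : 2^(i₀+4) ≤ 2^((i₀+N+1)+4) := Nat.pow_le_pow_right (by norm_num) (by omega)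
        have hd : 2^((i₀+N+1)+5) = 2^(i₀+N+6) := by congr 1
        omega
      by_cases ht0 : m % 2^e = 0
      · refine ⟨F₂, hne₂, hlow₂, ?_⟩
        rw [hsum₂']; congr 1; omega
      · obtain ⟨F₁, hne₁, hmem₁, hsum₁⟩ := ih (m % 2^e) (by omega) (by
          calc m % 2^e * 2^(bb i₀) ≤ 2^e * 2^(bb i₀) := Nat.mul_le_mul_right _ (by omega)
          _ = 2^(bb (i₀+N+1)) := by rw [← pow_add]; congr 1; omega
          _ ≤ 2^(bb (i₀+N+1) + 2) := Nat.pow_le_pow_right (by norm_num) (by omega))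
        have hdisj : Disjoint F₁ F₂ := by
          rw [Finset.disjoint_left]
          intro k hk1 hk2
          have hu := (hmem₁ k hk1).2
          have hl := (hmem₂ k hk2).1
          have : 2^(i₀+N+5) ≤ 2^((i₀+N+1)+4) := Nat.pow_le_pow_right (by norm_num) (by omega)
          omega
        refine ⟨F₁ ∪ F₂, Finset.Nonempty.mono Finset.subset_union_left hne₁, fun k hk => ?_, ?_⟩
        · rcases Finset.mem_union.mp hk with h | h
          · have := hmem₁ k h
            exact ⟨this.1, by omega⟩
          · exact hlow₂ k h
        · rw [Finset.sum_union hdisj, hsum₁, hsum₂', ← Nat.add_mul]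
          congr 1
          omega

lemma repExists (i₀ m : ℕ) (h1 : 1 ≤ m) :
    ∃ F : Finset ℕ, F.Nonempty ∧ (∀ k ∈ F, 2^(i₀+4) ≤ k + 16) ∧
      ∑ k ∈ F, nn k = m * 2^(bb i₀) := by
  have hXpos : 1 ≤ m * 2^(bb i₀) := Nat.mul_pos h1 (Nat.pow_pos (by norm_num))
  have hcond : m * 2^(bb i₀) ≤ 2^(bb (i₀+(m * 2^(bb i₀))+1) + 2) := by
    have h1' : m * 2^(bb i₀) < 2^(m * 2^(bb i₀)) := Nat.lt_two_pow_self
    have h2' : m * 2^(bb i₀) ≤ bb (i₀+(m * 2^(bb i₀))+1) + 2 := by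
      have := bb_ge (i₀+(m * 2^(bb i₀))+1); omega
    exact le_trans (le_of_lt h1') (Nat.pow_le_pow_right (by norm_num) h2')
  obtain ⟨F, hne, hmem, hsum⟩ := mainRep i₀ (m * 2^(bb i₀)) m h1 hcond
  exact ⟨F, hne, fun k hk => (hmem k hk).1, hsum⟩

noncomputable section

def ter (χ : ℕ → Bool) (r : ℕ) : ℝ := if χ r then ((2:ℝ)^(bb r))⁻¹ else 0

lemma ter_nonneg (χ r) : 0 ≤ ter χ r := by
  rw [ter]; split <;> positivity

lemma bb_ge_add (a s : ℕ) : bb a + s ≤ bb (a+s) := by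
  induction s with
  | zero => simp
  | succ s ih =>
    have h := bb_succ (a+s)
    rw [show a+(s+1) = (a+s)+1 from rfl]
    omega

lemma bb_ge_self (r : ℕ) : r + 4 ≤ bb r := by
  have h := bb_ge_add 0 r
  have h0 : bb 0 = 4 := by simp [bb]
  simp only [Nat.zero_add] at h
  omega

lemma ter_le (χ r) : ter χ r ≤ ((2:ℝ)^(bb r))⁻¹ := by
  rw [ter]; split
  · exact le_rfl
  · positivity

lemma inv_pow_le {a b : ℕ} (h : a ≤ b) : ((2:ℝ)^b)⁻¹ ≤ ((2:ℝ)^a)⁻¹ := by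
  gcongr <;> norm_num

lemma summable_ter (χ) : Summable (ter χ) := by
  have hgeom : Summable (fun r : ℕ => ((2:ℝ)⁻¹)^r) :=
    summable_geometric_of_lt_one (by norm_num) (by norm_num)
  refine Summable.of_nonneg_of_le (ter_nonneg χ) (fun r => ?_) hgeom
  calc ter χ r ≤ ((2:ℝ)^(bb r))⁻¹ := ter_le χ r
  _ ≤ ((2:ℝ)^r)⁻¹ := inv_pow_le (by have := bb_ge_self r; omega)
  _ = ((2:ℝ)⁻¹)^r := by rw [inv_pow]

def theta (χ : ℕ → Bool) : ℝ := ∑' r, ter χ r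

def tail (χ : ℕ → Bool) (i : ℕ) : ℝ := ∑' s, ter χ (s + (i+1))

lemma tail_nonneg (χ i) : 0 ≤ tail χ i :=
  tsum_nonneg (fun s => ter_nonneg χ _)

lemma tail_le (χ i) : tail χ i ≤ 2 * ((2:ℝ)^(bb (i+1)))⁻¹ := by
  have hsum2 : Summable (fun s : ℕ => ((2:ℝ)^(bb (i+1)))⁻¹ * ((2:ℝ)⁻¹)^s) :=
    (summable_geometric_of_lt_one (by norm_num) (by norm_num)).mul_left _
  have hle : ∀ s : ℕ, ter χ (s + (i+1)) ≤ ((2:ℝ)^(bb (i+1)))⁻¹ * ((2:ℝ)⁻¹)^s := by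
    intro s
    calc ter χ (s + (i+1)) ≤ ((2:ℝ)^(bb (s + (i+1))))⁻¹ := ter_le χ _
    _ ≤ ((2:ℝ)^(bb (i+1) + s))⁻¹ := inv_pow_le
          (by have h := bb_ge_add (i+1) s; rwa [Nat.add_comm (i+1) s] at h)
    _ = ((2:ℝ)^(bb (i+1)))⁻¹ * ((2:ℝ)⁻¹)^s := by rw [pow_add, mul_inv, inv_pow]
  calc tail χ i ≤ ∑' s : ℕ, ((2:ℝ)^(bb (i+1)))⁻¹ * ((2:ℝ)⁻¹)^s :=
        Summable.tsum_le_tsum hle ((summable_nat_add_iff (i+1)).mpr (summable_ter χ)) hsum2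
  _ = ((2:ℝ)^(bb (i+1)))⁻¹ * (1 - 2⁻¹)⁻¹ := by
        rw [tsum_mul_left, tsum_geometric_of_lt_one (by norm_num) (by norm_num)]
  _ = 2 * ((2:ℝ)^(bb (i+1)))⁻¹ := by norm_num; ring

lemma theta_nonneg (χ) : 0 ≤ theta χ := tsum_nonneg (fun r => ter_nonneg χ r)

lemma theta_le (χ) : theta χ ≤ 8⁻¹ := by
  have hsum2 : Summable (fun r : ℕ => ((2:ℝ)⁻¹)^4 * ((2:ℝ)⁻¹)^r) :=
    (summable_geometric_of_lt_one (by norm_num) (by norm_num)).mul_left _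
  have hle : ∀ r : ℕ, ter χ r ≤ ((2:ℝ)⁻¹)^4 * ((2:ℝ)⁻¹)^r := by
    intro r
    calc ter χ r ≤ ((2:ℝ)^(bb r))⁻¹ := ter_le χ r
    _ ≤ ((2:ℝ)^(r+4))⁻¹ := inv_pow_le (by have := bb_ge_self r; omega)
    _ = ((2:ℝ)⁻¹)^4 * ((2:ℝ)⁻¹)^r := by rw [pow_add, mul_inv, inv_pow, inv_pow]; ring
  calc theta χ ≤ ∑' r : ℕ, ((2:ℝ)⁻¹)^4 * ((2:ℝ)⁻¹)^r :=
        Summable.tsum_le_tsum hle (summable_ter χ) hsum2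
  _ = ((2:ℝ)⁻¹)^4 * (1 - 2⁻¹)⁻¹ := by
        rw [tsum_mul_left, tsum_geometric_of_lt_one (by norm_num) (by norm_num)]
  _ = 8⁻¹ := by norm_num

lemma theta_split (χ i) :
    theta χ = (∑ r ∈ Finset.range (i+1), ter χ r) + tail χ i :=
  (Summable.sum_add_tsum_nat_add (i+1) (summable_ter χ)).symm

def zc (χ : ℕ → Bool) : Circle := Circle.exp (2 * π * theta χ)

lemma head_nat (χ i) : ∃ A : ℕ,
    (A:ℝ) = 2^(bb i) * ∑ r ∈ Finset.range (i+1), ter χ r := by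
  refine ⟨∑ r ∈ Finset.range (i+1), if χ r then 2^(bb i - bb r) else 0, ?_⟩
  rw [Finset.mul_sum, Nat.cast_sum]
  apply Finset.sum_congr rfl
  intro r hr
  have hrle : bb r ≤ bb i := bb_mono (Nat.lt_succ_iff.mp (Finset.mem_range.mp hr))
  by_cases hχ : χ r
  · simp only [ter, hχ, if_true]
    have h2 : (2:ℝ)^(bb i) = (2:ℝ)^(bb i - bb r) * (2:ℝ)^(bb r) := by
      rw [← pow_add]; congr 1; omega
    push_cast
    rw [h2]
    field_simp
  · simp [ter, hχ]

lemma zc_pow (χ : ℕ → Bool) (k : ℕ) :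
    ((zc χ : ℂ))^(nn k) =
      Complex.exp ((2*π*(pos' k * (2^(bb (blk k)) * tail χ (blk k))) : ℝ) * Complex.I) := by
  obtain ⟨A, hA⟩ := head_nat χ (blk k)
  rw [zc, Circle.coe_exp, ← Complex.exp_nat_mul, Complex.exp_eq_exp_iff_exists_int]
  refine ⟨(pos' k * A : ℕ), ?_⟩
  have hsplit := theta_split χ (blk k)
  have hreal : (nn k : ℝ) * (2 * π * theta χ) =
      2*π*(pos' k * (2^(bb (blk k)) * tail χ (blk k))) + (pos' k * A : ℕ) * (2 * π) := by
    rw [nn_def, hsplit]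
    push_cast [hA]
    ring
  calc (nn k : ℂ) * ((2 * π * theta χ : ℝ) * Complex.I)
      = ((nn k : ℝ) * (2 * π * theta χ) : ℝ) * Complex.I := by push_cast; ring
  _ = ((2*π*(pos' k * (2^(bb (blk k)) * tail χ (blk k))) + (pos' k * A : ℕ) * (2 * π) : ℝ)) * Complex.I := by
      rw [hreal]
  _ = (2*π*(pos' k * (2^(bb (blk k)) * tail χ (blk k))) : ℝ) * Complex.I
        + ((pos' k * A : ℕ) : ℤ) * (2 * (π:ℂ) * Complex.I) := by
      push_cast
      ring


lemma exponent_le (χ : ℕ → Bool) (k : ℕ) :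
    (pos' k : ℝ) * ((2:ℝ)^(bb (blk k)) * tail χ (blk k)) ≤ ((2:ℝ)^(blk k))⁻¹ := by
  have hp := pos'_ub k
  have hpr : (pos' k : ℝ) ≤ (2:ℝ)^(blk k + 4) := by exact_mod_cast hp
  have htl := tail_le χ (blk k)
  have htn := tail_nonneg χ (blk k)
  calc (pos' k : ℝ) * ((2:ℝ)^(bb (blk k)) * tail χ (blk k))
      ≤ (2:ℝ)^(blk k + 4) * ((2:ℝ)^(bb (blk k)) * (2 * ((2:ℝ)^(bb (blk k + 1)))⁻¹)) := by
        gcongr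
  _ = ((2:ℝ)^(blk k))⁻¹ := by
        rw [bb_succ, pow_add, pow_add, pow_add]
        have h1 : (0:ℝ) < 2^(bb (blk k)) := by positivity
        have h2 : (0:ℝ) < 2^(blk k) := by positivity
        field_simp
        ring_nf

lemma norm_pow_sub_one_sq_le (χ : ℕ → Bool) (k : ℕ) :
    ‖((zc χ : ℂ))^(nn k) - 1‖^2 ≤ 1024 * (((4:ℝ)^(blk k))⁻¹) := by
  set i := blk k with hi
  set X : ℝ := 2*π*(pos' k * (2^(bb i) * tail χ i)) with hX
  have hXnn : 0 ≤ X := by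
    rw [hX]
    have := tail_nonneg χ i
    positivity
  have hXle : X ≤ 8 * ((2:ℝ)^i)⁻¹ := by
    rw [hX]
    have h1 := exponent_le χ k
    calc 2*π*((pos' k : ℝ) * (2^(bb i) * tail χ i)) ≤ 2*π*((2:ℝ)^i)⁻¹ := by
          have h2 : 0 ≤ (pos' k : ℝ) * (2^(bb i) * tail χ i) := by
            have := tail_nonneg χ i; positivity
          gcongr
    _ ≤ 8 * ((2:ℝ)^i)⁻¹ := by
        have hpi : 2*π ≤ 8 := by linarith [Real.pi_le_four]
        exact mul_le_mul_of_nonneg_right hpi (by positivity)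
  have hpow := zc_pow χ k
  rw [← hi] at hpow
  rw [hpow]
  have habs : ‖(X:ℂ) * Complex.I‖ = X := by
    rw [norm_mul, Complex.norm_I, Complex.norm_real, mul_one, Real.norm_eq_abs, abs_of_nonneg hXnn]
  have hfour : ((2:ℝ)^i)⁻¹ * ((2:ℝ)^i)⁻¹ = ((4:ℝ)^i)⁻¹ := by
    rw [← mul_inv, ← mul_pow]
    norm_num
  by_cases h3 : 3 ≤ i
  · have hX1 : X ≤ 1 := by
      have h8 : (8:ℝ) ≤ 2^i := by
        calc (8:ℝ) = 2^3 := by norm_num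
        _ ≤ 2^i := by gcongr; norm_num
      have hpos : (0:ℝ) < 2^i := by positivity
      calc X ≤ 8 * ((2:ℝ)^i)⁻¹ := hXle
      _ ≤ 2^i * ((2:ℝ)^i)⁻¹ := by gcongr
      _ = 1 := mul_inv_cancel₀ hpos.ne'
    have hb : ‖Complex.exp ((X:ℂ) * Complex.I) - 1‖ ≤ 2 * X := by
      have := Complex.norm_exp_sub_one_le (x := (X:ℂ) * Complex.I) (by rw [habs]; exact hX1)
      rwa [habs] at this
    calc ‖Complex.exp ((X:ℂ) * Complex.I) - 1‖^2 ≤ (2*X)^2 := by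
          apply pow_le_pow_left₀ (norm_nonneg _) hb
    _ = 4 * X^2 := by ring
    _ ≤ 4 * (8 * ((2:ℝ)^i)⁻¹)^2 := by
        apply mul_le_mul_of_nonneg_left _ (by norm_num)
        apply pow_le_pow_left₀ hXnn hXle
    _ = 256 * (((2:ℝ)^i)⁻¹ * ((2:ℝ)^i)⁻¹) := by ring
    _ = 256 * ((4:ℝ)^i)⁻¹ := by rw [hfour]
    _ ≤ 1024 * ((4:ℝ)^i)⁻¹ := by gcongr <;> norm_num
  · -- trivial bound
    have htriv : ‖Complex.exp ((X:ℂ) * Complex.I) - 1‖ ≤ 2 := by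
      calc ‖Complex.exp ((X:ℂ) * Complex.I) - 1‖ ≤ ‖Complex.exp ((X:ℂ) * Complex.I)‖ + ‖(1:ℂ)‖ :=
            norm_sub_le _ _
      _ = 2 := by
          rw [Complex.norm_exp]
          norm_num
    have h4i : ((4:ℝ)^i) ≤ 64 := by
      calc ((4:ℝ)^i) ≤ 4^2 := by
            apply pow_le_pow_right₀ (by norm_num) (by omega)
      _ = 16 := by norm_num
      _ ≤ 64 := by norm_num
    have h4pos : (0:ℝ) < 4^i := by positivity
    calc ‖Complex.exp ((X:ℂ) * Complex.I) - 1‖^2 ≤ 2^2 := by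
          apply pow_le_pow_left₀ (norm_nonneg _) htriv
    _ = 4 := by norm_num
    _ = 4 * (4^i) * ((4:ℝ)^i)⁻¹ := by field_simp
    _ ≤ 1024 * ((4:ℝ)^i)⁻¹ := by
        gcongr
        nlinarith

lemma summable_zc (χ : ℕ → Bool) :
    Summable (fun k => ‖((zc χ : ℂ))^(nn k) - 1‖^2) := by
  have hbase : Summable (fun k : ℕ => (1048576:ℝ) * (1/((k:ℝ)+16)^2)) := by
    apply Summable.mul_left
    have h0 : Summable (fun n : ℕ => 1/((n:ℝ)^2)) := by
      rw [Real.summable_one_div_nat_pow]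
      norm_num
    have := (summable_nat_add_iff (f := fun n : ℕ => 1/((n:ℝ)^2)) 16).mpr h0
    apply this.congr
    intro n
    push_cast
    ring
  refine Summable.of_nonneg_of_le (fun k => by positivity) (fun k => ?_) hbase
  have h1 := norm_pow_sub_one_sq_le χ k
  have h2 : ((4:ℝ)^(blk k))⁻¹ ≤ 1024 * (1/((k:ℝ)+16)^2) := by
    have hub := blk_ub k
    have hubr : ((k:ℝ)+16) < 2^(blk k + 5) := by exact_mod_cast hub
    have hx : ((k:ℝ)+16)^2 < (2^(blk k + 5))^2 := by
      apply pow_lt_pow_left₀ hubr (by positivity)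
      norm_num
    have hy : ((2:ℝ)^(blk k + 5))^2 = 1024 * (4:ℝ)^(blk k) := by
      rw [← pow_mul, show (blk k + 5)*2 = 2*(blk k) + 10 from by omega]
      rw [pow_add, show (4:ℝ) = 2^2 from by norm_num, ← pow_mul]
      norm_num
      ring
    have h4pos : (0:ℝ) < 4^(blk k) := by positivity
    have hkpos : (0:ℝ) < ((k:ℝ)+16)^2 := by positivity
    have key : ((k:ℝ)+16)^2 ≤ 1024 * 4^(blk k) := by rw [← hy]; exact le_of_lt hx
    calc ((4:ℝ)^(blk k))⁻¹ = 1024 / (1024 * 4^(blk k)) := by field_simp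
    _ ≤ 1024 / ((k:ℝ)+16)^2 := by gcongr
    _ = 1024 * (1/((k:ℝ)+16)^2) := by ring
  calc ‖((zc χ : ℂ))^(nn k) - 1‖^2 ≤ 1024 * ((4:ℝ)^(blk k))⁻¹ := h1
  _ ≤ 1024 * (1024 * (1/((k:ℝ)+16)^2)) := by gcongr
  _ = 1048576 * (1/((k:ℝ)+16)^2) := by ring

lemma tail_from (χ : ℕ → Bool) (t : ℕ) :
    Summable (fun s : ℕ => ter χ (s + t)) := (summable_nat_add_iff t).mpr (summable_ter χ)

lemma tail_lt (χ χ' : ℕ → Bool) (t : ℕ) (h1 : χ t = true) (h2 : χ' t = false) :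
    (∑' s : ℕ, ter χ' (s + t)) < ∑' s : ℕ, ter χ (s + t) := by
  have hA : ((2:ℝ)^(bb t))⁻¹ ≤ ∑' s : ℕ, ter χ (s + t) := by
    have h0 : ter χ (0 + t) = ((2:ℝ)^(bb t))⁻¹ := by rw [Nat.zero_add, ter, h1]; simp
    calc ((2:ℝ)^(bb t))⁻¹ = ter χ (0 + t) := h0.symm
    _ ≤ ∑' s : ℕ, ter χ (s+t) := Summable.le_tsum (tail_from χ t) 0 (fun j _ => ter_nonneg χ _)
  have hB : (∑' s : ℕ, ter χ' (s + t)) ≤ 2 * ((2:ℝ)^(bb (t+1)))⁻¹ := by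
    rw [Summable.tsum_eq_zero_add (tail_from χ' t)]
    have hz : ter χ' (0 + t) = 0 := by rw [Nat.zero_add, ter, h2]; simp
    rw [hz, zero_add]
    have he : (∑' s : ℕ, ter χ' (s + 1 + t)) = tail χ' t := by
      rw [tail]
      apply tsum_congr
      intro s
      congr 1
      omega
    rw [he]
    exact tail_le χ' t
  have hgap : 2 * ((2:ℝ)^(bb (t+1)))⁻¹ < ((2:ℝ)^(bb t))⁻¹ := by
    rw [bb_succ, pow_add, mul_inv]
    have hb32 : (32:ℝ) ≤ 2^(2*t+5) := by
      calc (32:ℝ) = 2^5 := by norm_num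
      _ ≤ 2^(2*t+5) := pow_le_pow_right₀ (by norm_num) (by omega)
    calc 2 * (((2:ℝ)^(bb t))⁻¹ * ((2:ℝ)^(2*t+5))⁻¹)
        = (2 * ((2:ℝ)^(2*t+5))⁻¹) * ((2:ℝ)^(bb t))⁻¹ := by ring
    _ < 1 * ((2:ℝ)^(bb t))⁻¹ := by
        apply mul_lt_mul_of_pos_right _ (by positivity)
        calc 2 * ((2:ℝ)^(2*t+5))⁻¹ ≤ 2 * (32:ℝ)⁻¹ := by gcongr
        _ < 1 := by norm_num
    _ = ((2:ℝ)^(bb t))⁻¹ := one_mul _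
  linarith

lemma theta_eq_of (χ χ' : ℕ → Bool) (h : theta χ = theta χ') : χ = χ' := by
  by_contra hne
  have hex : ∃ t, χ t ≠ χ' t := by
    by_contra hno
    push_neg at hno
    exact hne (funext hno)
  classical
  set t := Nat.find hex with htdef
  have ht : χ t ≠ χ' t := Nat.find_spec hex
  have hmin : ∀ s, s < t → χ s = χ' s := fun s hs => not_not.mp (Nat.find_min hex hs)
  have hsplit1 := Summable.sum_add_tsum_nat_add t (summable_ter χ)
  have hsplit2 := Summable.sum_add_tsum_nat_add t (summable_ter χ')
  have hheads : ∑ r ∈ Finset.range t, ter χ r = ∑ r ∈ Finset.range t, ter χ' r :=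
    Finset.sum_congr rfl (fun r hr => by rw [ter, ter, hmin r (Finset.mem_range.mp hr)])
  have htails : (∑' s : ℕ, ter χ (s + t)) = ∑' s : ℕ, ter χ' (s + t) := by
    have h1 : _ = theta χ := hsplit1
    have h2 : _ = theta χ' := hsplit2
    linarith
  cases hb : χ t
  · cases hb' : χ' t
    · rw [hb, hb'] at ht; exact ht rfl
    · have := tail_lt χ' χ t hb' hb
      linarith
  · cases hb' : χ' t
    · have := tail_lt χ χ' t hb hb'
      linarith
    · rw [hb, hb'] at ht; exact ht rfl

lemma zc_inj : Function.Injective zc := by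
  intro χ χ' h
  rw [zc, zc] at h
  obtain ⟨m, hm⟩ := Circle.exp_eq_exp.mp h
  have hπ : (0:ℝ) < π := Real.pi_pos
  have hθ : theta χ = theta χ' + m := by
    have h2 : 2*π*theta χ = 2*π*(theta χ' + m) := by rw [hm]; ring
    have := mul_left_cancel₀ (a := 2*π) (by positivity) h2
    linarith [this]
  have h1 := theta_nonneg χ
  have h2 := theta_le χ
  have h3 := theta_nonneg χ'
  have h4 := theta_le χ'
  have hm0 : m = 0 := by
    have hcast : -1 < (m:ℝ) ∧ (m:ℝ) < 1 := by constructor <;> nlinarith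
    have : -1 < m ∧ m < 1 := by exact_mod_cast hcast
    omega
  apply theta_eq_of
  rw [hθ, hm0]
  simp

lemma uncountable_S :
    ¬ Set.Countable {z : Circle | Summable fun k => ‖(z:ℂ)^(nn k) - 1‖^2} := by
  intro hcnt
  have hrange : Set.range zc ⊆ {z : Circle | Summable fun k => ‖(z:ℂ)^(nn k) - 1‖^2} := by
    rintro z ⟨χ, rfl⟩
    exact summable_zc χ
  have h2 : (zc ⁻¹' Set.range zc).Countable := (hcnt.mono hrange).preimage zc_inj
  rw [Set.preimage_range] at h2
  have h3 : Countable (ℕ → Bool) := Set.countable_univ_iff.mp h2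
  classical
  have hinj : Function.Injective (fun (s : Set ℕ) => (fun n => decide (n ∈ s))) := by
    intro s s' hss
    ext n
    have hn := congrFun hss n
    simp only at hn
    exact decide_eq_decide.mp hn
  have h4 : Countable (Set ℕ) := hinj.countable
  obtain ⟨g, hg⟩ := (countable_iff_exists_injective (Set ℕ)).mp h4
  exact Function.cantor_injective g hg

end
lemma cont_pow (N : ℕ) : Continuous (fun z : Circle => (z:ℂ)^N) :=
  (continuous_subtype_val (p := fun w : ℂ => w ∈ Submonoid.unitSphere ℂ)).pow N

lemma norm_circle_pow (z : Circle) (N : ℕ) : ‖(z:ℂ)^N‖ = 1 := by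
  rw [norm_pow, Circle.norm_coe, one_pow]

lemma integrable_pow (μ : Measure Circle) [IsProbabilityMeasure μ] (N : ℕ) :
    Integrable (fun z : Circle => (z:ℂ)^N) μ := by
  refine ⟨(cont_pow N).aestronglyMeasurable, ?_⟩
  apply MeasureTheory.HasFiniteIntegral.of_bounded (C := 1)
  filter_upwards with z
  rw [norm_circle_pow]

lemma no_continuous_IPD (μ : Measure Circle) [IsProbabilityMeasure μ]
    (hc : ∀ z : Circle, μ {z} = 0) (hIP : IPDirichlet μ nn) : False := by
  have hna : NullSingletonClass μ := ⟨hc⟩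
  obtain ⟨k₀, hk₀⟩ := hIP (1/2) (by norm_num)
  set q := 2^(bb k₀) with hq
  have hqpos : 0 < q := Nat.pow_pos (by norm_num)
  have hcoef : ∀ m : ℕ, 1 ≤ m → ‖fourierCoef μ (m * q) - 1‖ ≤ 1/2 := by
    intro m hm
    obtain ⟨F, hne, hmem, hsum⟩ := repExists k₀ m hm
    have hk : ∀ k ∈ F, k₀ ≤ k := by
      intro k hkF
      have h := hmem k hkF
      have h1 : k₀ + 1 ≤ 2^k₀ := Nat.succ_le_of_lt ((Nat.lt_two_pow_self (n := k₀)))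
      have h2 : 2^(k₀+4) = 16 * 2^k₀ := by rw [pow_add]; ring
      omega
    have := hk₀ F hne hk
    rwa [hsum] at this
  have hroots : ({z : Circle | (z:ℂ)^q = 1}).Countable := by
    have hfin : ({w : ℂ | w^q = 1}).Finite := by
      have hsub : {w : ℂ | w^q = 1} ⊆
          {x | Polynomial.IsRoot (Polynomial.X^q - Polynomial.C 1) x} := by
        intro w hw
        simp [Polynomial.IsRoot, hw.out]
      refine Set.Finite.subset (Polynomial.finite_setOf_isRoot ?_) hsub
      intro hcontr
      have h0 := congrArg (Polynomial.eval 0) hcontr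
      simp [zero_pow hqpos.ne'] at h0
    have heq : {z : Circle | (z:ℂ)^q = 1} = (fun z : Circle => (z:ℂ)) ⁻¹' {w : ℂ | w^q = 1} := rfl
    rw [heq]
    exact Set.Countable.preimage hfin.countable (fun a b hab => Subtype.ext hab)
  have hμroots : μ {z : Circle | (z:ℂ)^q = 1} = 0 := hroots.measure_zero μ
  set G : ℕ → Circle → ℂ := fun M z => (M:ℂ)⁻¹ • ∑ m ∈ Finset.range M, (z:ℂ)^((m+1)*q) with hG
  have hGint : ∀ M, ∫ z, G M z ∂μ = (M:ℂ)⁻¹ • ∑ m ∈ Finset.range M, fourierCoef μ ((m+1)*q) := by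
    intro M
    rw [hG]
    simp only
    rw [integral_smul, integral_finset_sum _ (fun m _ => integrable_pow μ _)]
    rfl
  set h : Circle → ℂ := fun z => if (z:ℂ)^q = 1 then 1 else 0 with hh
  have hptw : ∀ z : Circle, Tendsto (fun M => G M z) atTop (nhds (h z)) := by
    intro z
    by_cases hz : (z:ℂ)^q = 1
    · have hGz : ∀ M : ℕ, 1 ≤ M → G M z = 1 := by
        intro M hM
        rw [hG]; simp only
        have hone : ∀ m ∈ Finset.range M, (z:ℂ)^((m+1)*q) = 1 := by
          intro m _
          rw [mul_comm, pow_mul, hz, one_pow]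
        have hM0 : (M:ℂ) ≠ 0 := Nat.cast_ne_zero.mpr (by omega)
        rw [Finset.sum_congr rfl hone, Finset.sum_const, Finset.card_range]
        simp [smul_eq_mul, inv_mul_cancel₀ hM0]
      rw [hh]; simp only [hz, if_pos]
      apply Tendsto.congr' (f₁ := fun _ => (1:ℂ))
      · filter_upwards [eventually_ge_atTop 1] with M hM
        exact (hGz M hM).symm
      · exact tendsto_const_nhds
    · set w := (z:ℂ)^q with hw
      have hw1 : ‖w‖ = 1 := norm_circle_pow z q
      have hGzeq : ∀ M : ℕ, G M z = (M:ℂ)⁻¹ • (w * ((w^M - 1)/(w - 1))) := by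
        intro M
        rw [hG]; simp only
        congr 1
        have hws : ∀ m ∈ Finset.range M, (z:ℂ)^((m+1)*q) = w * w^m := by
          intro m _
          rw [mul_comm (m+1) q, pow_mul, ← hw, pow_succ, mul_comm]
        rw [Finset.sum_congr rfl hws, ← Finset.mul_sum, geom_sum_eq hz]
      rw [hh]; simp only [show ¬ (z:ℂ)^q = 1 from hz, if_neg]
      have hnorm : ∀ M : ℕ, ‖G M z‖ ≤ (2 / ‖w - 1‖) / M := by
        intro M
        rw [hGzeq M, norm_smul, norm_inv, norm_mul, norm_div, hw1, one_mul,
          Complex.norm_natCast]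
        have h1 : ‖w^M - 1‖ ≤ 2 := by
          calc ‖w^M - 1‖ ≤ ‖w^M‖ + ‖(1:ℂ)‖ := norm_sub_le _ _
          _ = 2 := by rw [norm_pow, hw1, one_pow, norm_one]; norm_num
        have h2 : (2:ℝ) / ‖w - 1‖ / M = (M:ℝ)⁻¹ * (2 / ‖w - 1‖) := by ring
        rw [h2]
        gcongr
      rw [show (0:ℂ) = 0 from rfl]
      apply tendsto_zero_iff_norm_tendsto_zero.mpr
      apply squeeze_zero (fun M => norm_nonneg _) hnorm
      exact tendsto_const_div_atTop_nhds_zero_nat _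
  -- dominated convergence
  have hbound : ∀ M : ℕ, ∀ᵐ z ∂μ, ‖G M z‖ ≤ (1:ℝ) := by
    intro M
    filter_upwards with z
    rw [hG]; simp only
    rw [norm_smul, norm_inv, Complex.norm_natCast]
    have h1 : ‖∑ m ∈ Finset.range M, (z:ℂ)^((m+1)*q)‖ ≤ M := by
      calc ‖∑ m ∈ Finset.range M, (z:ℂ)^((m+1)*q)‖ ≤ ∑ m ∈ Finset.range M, ‖(z:ℂ)^((m+1)*q)‖ :=
            norm_sum_le _ _
      _ = M := by
          rw [Finset.sum_congr rfl (fun m _ => norm_circle_pow z ((m+1)*q))]; simp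
    rcases Nat.eq_zero_or_pos M with hM | hM
    · subst hM; simp
    · have hM0 : (0:ℝ) < M := by exact_mod_cast hM
      calc (M:ℝ)⁻¹ * ‖∑ m ∈ Finset.range M, (z:ℂ)^((m+1)*q)‖ ≤ (M:ℝ)⁻¹ * M := by
            gcongr
      _ = 1 := inv_mul_cancel₀ hM0.ne'
  have hmeas : ∀ M : ℕ, AEStronglyMeasurable (G M) μ := by
    intro M
    have : Continuous (G M) := by
      rw [hG]; simp only
      exact (continuous_finset_sum _ (fun m _ => cont_pow ((m+1)*q))).const_smul ((M:ℂ)⁻¹)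
    exact this.aestronglyMeasurable
  have hDCT : Tendsto (fun M => ∫ z, G M z ∂μ) atTop (nhds (∫ z, h z ∂μ)) := by
    apply tendsto_integral_of_dominated_convergence (fun _ => (1:ℝ)) hmeas
      (integrable_const 1) hbound
    filter_upwards with z using hptw z
  have hint0 : ∫ z, h z ∂μ = 0 := by
    have hae : h =ᵐ[μ] (fun _ => (0:ℂ)) := by
      rw [Filter.EventuallyEq, ae_iff]
      refine measure_mono_null (fun z hz => ?_) hμroots
      simp only [Set.mem_setOf_eq] at hz ⊢
      by_contra hcon
      exact hz (by rw [hh]; exact if_neg hcon)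
    rw [integral_congr_ae hae, integral_zero]
  rw [hint0] at hDCT
  have hnorms : Tendsto (fun M => ‖(∫ z, G M z ∂μ) - 1‖) atTop (nhds 1) := by
    have := (hDCT.sub_const (1:ℂ)).norm
    simpa using this
  have hev : ∀ᶠ M in atTop, ‖(∫ z, G M z ∂μ) - 1‖ ≤ 1/2 := by
    filter_upwards [eventually_ge_atTop 1] with M hM
    have hM0 : (M:ℂ) ≠ 0 := Nat.cast_ne_zero.mpr (by omega)
    rw [hGint M]
    have hkey : (M:ℂ)⁻¹ • (∑ m ∈ Finset.range M, fourierCoef μ ((m+1)*q)) - 1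
        = (M:ℂ)⁻¹ • (∑ m ∈ Finset.range M, (fourierCoef μ ((m+1)*q) - 1)) := by
      rw [Finset.sum_sub_distrib, Finset.sum_const, Finset.card_range, smul_sub]
      congr 1
      rw [nsmul_eq_mul, mul_one, smul_eq_mul, inv_mul_cancel₀ hM0]
    rw [hkey, norm_smul, norm_inv, Complex.norm_natCast]
    have hsum : ‖∑ m ∈ Finset.range M, (fourierCoef μ ((m+1)*q) - 1)‖ ≤ M * (1/2) := by
      calc ‖∑ m ∈ Finset.range M, (fourierCoef μ ((m+1)*q) - 1)‖
          ≤ ∑ m ∈ Finset.range M, ‖fourierCoef μ ((m+1)*q) - 1‖ := norm_sum_le _ _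
      _ ≤ ∑ _m ∈ Finset.range M, (1/2 : ℝ) :=
            Finset.sum_le_sum (fun m _ => hcoef (m+1) (by omega))
      _ = M * (1/2) := by rw [Finset.sum_const, Finset.card_range, nsmul_eq_mul]
    have hMpos : (0:ℝ) < M := by exact_mod_cast (by omega : 0 < M)
    calc (M:ℝ)⁻¹ * ‖∑ m ∈ Finset.range M, (fourierCoef μ ((m+1)*q) - 1)‖
        ≤ (M:ℝ)⁻¹ * (M * (1/2)) := by gcongr
    _ = 1/2 := by field_simp
  have : (1:ℝ) ≤ 1/2 := le_of_tendsto hnorms hev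
  linarith

end Stmt16

theorem stmt16 : ∃ n : ℕ → ℕ, StrictMono n ∧ (∀ k, 1 ≤ n k) ∧
    ¬ Set.Countable {z : Circle | Summable fun k => ‖(z : ℂ) ^ n k - 1‖ ^ 2} ∧
    ∀ μ : Measure Circle, IsProbabilityMeasure μ → (∀ z : Circle, μ {z} = 0) →
      ¬ IPDirichlet μ n := by
  refine ⟨Stmt16.nn, Stmt16.nn_strictMono, Stmt16.nn_pos, Stmt16.uncountable_S, ?_⟩
  intro μ hμ hcont hIP
  haveI := hμ
  exact Stmt16.no_continuous_IPD μ hcont hIP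
end

section
/- Define p_1 = 1 and p_{l+1} = (l²(l²+1)/2) p_l, and let (n_k) enumerate ⋃_{l≥2} {p_l, 2p_l, ..., l² p_l} in increasing order. Then for every l ≥ 2 and every integer s ≥ 1, the number s·p_l can be written as Σ_{k∈F} n_k for some nonempty finite set F of indices k with n_k ≥ p_l (i.e., all indices in F correspond to terms from blocks l, l+1, ...). -/
lemma sumDistinct (m : ℕ) : ∀ r, 1 ≤ r → 2 * r ≤ m * (m+1) →
    ∃ T : Finset ℕ, T ⊆ Finset.Icc 1 m ∧ T.Nonempty ∧ ∑ j ∈ T, j = r := by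
  induction m with
  | zero => intro r hr h; omega
  | succ m ih =>
    intro r hr h
    by_cases hc : r ≤ m + 1
    · refine ⟨{r}, ?_, Finset.singleton_nonempty r, by simp⟩
      simp only [Finset.singleton_subset_iff, Finset.mem_Icc]
      omega
    · have hkey : (m+1) * (m+1+1) = m * (m+1) + 2*(m+1) := by ring
      obtain ⟨T, hT, hne, hsum⟩ := ih (r - (m+1)) (by omega) (by omega)
      have hnot : m + 1 ∉ T := by
        intro hmem
        have := hT hmem
        simp only [Finset.mem_Icc] at this
        omega
      refine ⟨insert (m+1) T, ?_, Finset.insert_nonempty _ _, ?_⟩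
      · intro x hx
        rcases Finset.mem_insert.mp hx with h1 | h1
        · simp only [Finset.mem_Icc]; omega
        · have := hT h1; simp [Finset.mem_Icc] at this ⊢; omega
      · rw [Finset.sum_insert hnot, hsum]; omega

theorem stmt18 (p n : ℕ → ℕ) (hp1 : p 1 = 1)
    (hrec : ∀ l, 1 ≤ l → 2 * p (l+1) = l^2 * (l^2 + 1) * p l)
    (hn : StrictMono n)
    (hrange : Set.range n = {x | ∃ l, 2 ≤ l ∧ ∃ j, 1 ≤ j ∧ j ≤ l^2 ∧ x = j * p l}) :
    ∀ l, 2 ≤ l → ∀ s, 1 ≤ s → ∃ F : Finset ℕ, F.Nonempty ∧ (∀ k ∈ F, p l ≤ n k) ∧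
      ∑ k ∈ F, n k = s * p l := by
  have ppos : ∀ l, 1 ≤ l → 0 < p l := by
    intro l hl
    induction l with
    | zero => omega
    | succ m ih =>
      rcases Nat.lt_or_ge m 1 with h | h
      · interval_cases m
        · simp [hp1]
      · have hpm := ih h
        have h2 := hrec m h
        have hm2 : 1 ≤ m^2 := Nat.one_le_pow _ _ (by omega)
        have : 0 < m^2 * (m^2+1) * p m := by positivity
        omega
  -- q l and p (l+1) = q l * p l
  have hq : ∀ l, 1 ≤ l → p (l+1) = (l^2 * (l^2+1) / 2) * p l := by
    intro l hl
    have hdvd : 2 ∣ l^2 * (l^2+1) := (Nat.even_mul_succ_self (l^2)).two_dvd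
    have h2 : 2 * (l^2 * (l^2+1) / 2) = l^2 * (l^2+1) := Nat.mul_div_cancel' hdvd
    have h3 := hrec l hl
    have : 2 * p (l+1) = 2 * ((l^2 * (l^2+1) / 2) * p l) := by
      rw [h3, ← Nat.mul_assoc, h2]
    omega
  -- block representation
  have blockRep : ∀ l, 2 ≤ l → ∀ r, 1 ≤ r → 2 * r ≤ l^2 * (l^2+1) →
      ∃ F : Finset ℕ, F.Nonempty ∧ (∀ k ∈ F, p l ≤ n k ∧ n k ≤ l^2 * p l) ∧
        ∑ k ∈ F, n k = r * p l := by
    intro l hl r hr hr2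
    obtain ⟨T, hT, hne, hsum⟩ := sumDistinct (l^2) r hr hr2
    have hmem : ∀ j ∈ T, ∃ k, n k = j * p l := by
      intro j hj
      have hj' := hT hj
      simp only [Finset.mem_Icc] at hj'
      have : j * p l ∈ Set.range n := by
        rw [hrange]; exact ⟨l, hl, j, hj'.1, hj'.2, rfl⟩
      exact this
    classical
    set f : ℕ → ℕ := fun j => if h : ∃ k, n k = j * p l then h.choose else 0 with hf
    have hfval : ∀ j ∈ T, n (f j) = j * p l := by
      intro j hj
      have h := hmem j hj
      simp only [hf, dif_pos h]
      exact h.choose_spec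
    have hinj : ∀ j1 ∈ T, ∀ j2 ∈ T, f j1 = f j2 → j1 = j2 := by
      intro j1 h1 j2 h2 heq
      have : j1 * p l = j2 * p l := by rw [← hfval j1 h1, ← hfval j2 h2, heq]
      exact Nat.eq_of_mul_eq_mul_right (ppos l (by omega)) this
    refine ⟨T.image f, hne.image f, ?_, ?_⟩
    · intro k hk
      obtain ⟨j, hj, rfl⟩ := Finset.mem_image.mp hk
      have hj' := hT hj
      simp only [Finset.mem_Icc] at hj'
      rw [hfval j hj]
      constructor
      · calc p l = 1 * p l := (Nat.one_mul _).symm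
          _ ≤ j * p l := Nat.mul_le_mul_right _ hj'.1
      · exact Nat.mul_le_mul_right _ hj'.2
    · rw [Finset.sum_image hinj]
      calc ∑ j ∈ T, n (f j) = ∑ j ∈ T, j * p l := Finset.sum_congr rfl hfval
        _ = (∑ j ∈ T, j) * p l := (Finset.sum_mul ..).symm
        _ = r * p l := by rw [hsum]
  -- main induction
  have main : ∀ s, 1 ≤ s → ∀ l, 2 ≤ l → ∃ F : Finset ℕ, F.Nonempty ∧
      (∀ k ∈ F, p l ≤ n k) ∧ ∑ k ∈ F, n k = s * p l := by
    intro s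
    induction s using Nat.strong_induction_on with
    | _ s ih =>
      intro hs l hl
      set q := l^2 * (l^2+1) / 2 with hqdef
      have hdvd : 2 ∣ l^2 * (l^2+1) := (Nat.even_mul_succ_self (l^2)).two_dvd
      have h2q : 2 * q = l^2 * (l^2+1) := Nat.mul_div_cancel' hdvd
      have hpl1 : p (l+1) = q * p l := hq l (by omega)
      have hl4 : 4 ≤ l^2 := by nlinarith
      have hqge : l^2 < q := by
        have : 2 * l^2 < l^2 * (l^2+1) := by nlinarith
        omega
      have hplpos := ppos l (by omega)
      by_cases hcase : s ≤ q
      · obtain ⟨F, hne, hb, hsum⟩ := blockRep l hl s hs (by omega)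
        exact ⟨F, hne, fun k hk => (hb k hk).1, hsum⟩
      · push_neg at hcase
        set s' := s / q with hs'def
        set r := s % q with hrdef
        have hqpos : 0 < q := by omega
        have hsplit : s = q * s' + r := (Nat.div_add_mod s q).symm
        have hs'1 : 1 ≤ s' := Nat.one_le_div_iff hqpos |>.mpr (le_of_lt hcase)
        have hs'lt : s' < s := Nat.div_lt_self (by omega) (by omega)
        have hrlt : r < q := Nat.mod_lt _ hqpos
        obtain ⟨F2, hne2, hb2, hsum2⟩ := ih s' hs'lt hs'1 (l+1) (by omega)
        have hplle : p l ≤ p (l+1) := by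
          rw [hpl1]
          calc p l = 1 * p l := (Nat.one_mul _).symm
            _ ≤ q * p l := Nat.mul_le_mul_right _ hqpos
        have hsum2' : ∑ k ∈ F2, n k = (q * s') * p l := by
          rw [hsum2, hpl1]; ring
        by_cases hr : r = 0
        · refine ⟨F2, hne2, fun k hk => le_trans hplle (hb2 k hk), ?_⟩
          rw [hsum2']
          congr 1
          omega
        · obtain ⟨F1, hne1, hb1, hsum1⟩ := blockRep l hl r (by omega) (by omega)
          have hdisj : Disjoint F1 F2 := by
            rw [Finset.disjoint_left]
            intro k hk1 hk2
            have h1 := (hb1 k hk1).2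
            have h2 := hb2 k hk2
            rw [hpl1] at h2
            have : l^2 * p l < q * p l := (Nat.mul_lt_mul_right hplpos).mpr hqge
            omega
          refine ⟨F1 ∪ F2, hne1.mono Finset.subset_union_left, ?_, ?_⟩
          · intro k hk
            rcases Finset.mem_union.mp hk with h | h
            · exact (hb1 k h).1
            · exact le_trans hplle (hb2 k h)
          · rw [Finset.sum_union hdisj, hsum1, hsum2']
            rw [hsplit]
            ring
  intro l hl s hs
  exact main s hs l hl
end
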